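/- arXiv:2404.11863 — 7 statements merged into one kernel-verified Lean document; each statement's English description precedes it below -/
import Mathlib

section
/- Under the stated assumptions on f, there exist K, M > 0 such that f is C² on [M,∞), f ≥ −K and f' ≥ −K on [0,∞), f ≥ e⁴ and f' ≥ 0 on [M,∞), and, for any constant A ≥ 0, the functions φ = 1/(A + log f) and F = f·φ are defined and C² on [M,∞) and satisfy: 0 < φ ≤ 1/4, F' = f'·φ·(1−φ), F'' ≥ 0 on [M,∞), lim_{s→∞} F'(s) = ∞, and lim_{s→∞} f'(s)·φ(s) = ∞. -/
open MeasureTheory Filter Topology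

lemma monoOn_hasDerivAt_nonneg {h : ℝ → ℝ} {c s d : ℝ}
    (hm : MonotoneOn h (Set.Ioi c)) (hs : c < s) (hd : HasDerivAt h d s) : 0 ≤ d := by
  have hts : Filter.Tendsto (slope h s) (𝓝[>] s) (𝓝 d) :=
    (hasDerivAt_iff_tendsto_slope.1 hd).mono_left
      (nhdsWithin_mono s (fun t ht => ne_of_gt ht))
  refine ge_of_tendsto hts ?_
  filter_upwards [self_mem_nhdsWithin] with t ht
  have h1 : h s ≤ h t := hm (Set.mem_Ioi.2 hs) (Set.mem_Ioi.2 (hs.trans ht)) (le_of_lt ht)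
  rw [slope_def_field]
  have h2 : (0:ℝ) < t - s := by have := Set.mem_Ioi.1 ht; linarith
  exact div_nonneg (by linarith) h2.le

lemma aux_hasDerivAt_G {f : ℝ → ℝ} {A s c : ℝ} (hA : 0 ≤ A)
    (hdf : HasDerivAt f c s) (hf4 : Real.exp 4 ≤ f s) :
    HasDerivAt (fun z => f z * (A + Real.log (f z))⁻¹)
      (c * (A + Real.log (f s))⁻¹ * (1 - (A + Real.log (f s))⁻¹)) s := by
  have hfpos : 0 < f s := lt_of_lt_of_le (Real.exp_pos 4) hf4
  have hlog : 4 ≤ Real.log (f s) := by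
    rw [show (4:ℝ) = Real.log (Real.exp 4) by rw [Real.log_exp]]
    exact Real.log_le_log (Real.exp_pos 4) hf4
  have hAl : 0 < A + Real.log (f s) := by linarith
  have hlogd : HasDerivAt (fun z => A + Real.log (f z)) ((f s)⁻¹ * c) s :=
    ((Real.hasDerivAt_log (ne_of_gt hfpos)).comp s hdf).const_add A
  have hinv : HasDerivAt (fun z => (A + Real.log (f z))⁻¹)
      (-((f s)⁻¹ * c) / (A + Real.log (f s))^2) s := hlogd.inv (ne_of_gt hAl)
  have := hdf.mul hinv
  refine HasDerivAt.congr_deriv this ?_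
  have h1 : f s ≠ 0 := ne_of_gt hfpos
  have h2 : A + Real.log (f s) ≠ 0 := ne_of_gt hAl
  field_simp
  ring

lemma aux_hasDerivAt_E {f h : ℝ → ℝ} {A s c d : ℝ} (hA : 0 ≤ A)
    (hdf : HasDerivAt f c s) (hdh : HasDerivAt h d s) (hf4 : Real.exp 4 ≤ f s) :
    HasDerivAt (fun z => h z * (A + Real.log (f z))⁻¹ * (1 - (A + Real.log (f z))⁻¹))
      (d * (A + Real.log (f s))⁻¹ * (1 - (A + Real.log (f s))⁻¹)
        - (f s)⁻¹ * (h s * c) * ((A + Real.log (f s))⁻¹)^2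
          * (1 - 2*(A + Real.log (f s))⁻¹)) s := by
  have hfpos : 0 < f s := lt_of_lt_of_le (Real.exp_pos 4) hf4
  have hlog : 4 ≤ Real.log (f s) := by
    rw [show (4:ℝ) = Real.log (Real.exp 4) by rw [Real.log_exp]]
    exact Real.log_le_log (Real.exp_pos 4) hf4
  have hAl : 0 < A + Real.log (f s) := by linarith
  have hlogd : HasDerivAt (fun z => A + Real.log (f z)) ((f s)⁻¹ * c) s :=
    ((Real.hasDerivAt_log (ne_of_gt hfpos)).comp s hdf).const_add A
  have hinv : HasDerivAt (fun z => (A + Real.log (f z))⁻¹)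
      (-((f s)⁻¹ * c) / (A + Real.log (f s))^2) s := hlogd.inv (ne_of_gt hAl)
  have hone : HasDerivAt (fun z => 1 - (A + Real.log (f z))⁻¹)
      (-(-((f s)⁻¹ * c) / (A + Real.log (f s))^2)) s := hinv.const_sub 1
  have := (hdh.mul hinv).mul hone
  refine HasDerivAt.congr_deriv this ?_
  have h1 : f s ≠ 0 := ne_of_gt hfpos
  have h2 : A + Real.log (f s) ≠ 0 := ne_of_gt hAl
  simp only [Pi.mul_apply]
  field_simp
  ring
lemma aux_second_nonneg {a b dd e : ℝ} (hb : 0 < b) (hba : b ≤ a) (ha : a ≤ 1/4) (he : 0 ≤ e)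
    (h0 : 0 ≤ dd*a*(1-a) - e*a^2*(1-2*a)) : 0 ≤ dd*b*(1-b) - e*b^2*(1-2*b) := by
  have hapos : 0 < a := lt_of_lt_of_le hb hba
  have h1 : 0 ≤ e*a*b*((a-b)*(1-2*a-2*b+2*a*b)) := by
    apply mul_nonneg (mul_nonneg (mul_nonneg he hapos.le) hb.le)
    apply mul_nonneg (by linarith)
    nlinarith
  have h2 : 0 ≤ b*(1-b) * (dd*a*(1-a) - e*a^2*(1-2*a)) :=
    mul_nonneg (mul_nonneg hb.le (by linarith)) h0
  have key : (dd*b*(1-b) - e*b^2*(1-2*b)) * (a*(1-a)) =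
      b*(1-b)*(dd*a*(1-a) - e*a^2*(1-2*a)) + e*a*b*((a-b)*(1-2*a-2*b+2*a*b)) := by ring
  have hpa : 0 < a*(1-a) := mul_pos hapos (by linarith)
  nlinarith [key, h1, h2, hpa]

lemma aux_deriv_unbounded {g : ℝ → ℝ} {M₁ : ℝ}
    (hconv : ConvexOn ℝ (Set.Ici M₁) g)
    (hdiff : ∀ x ∈ Set.Ici M₁, DifferentiableAt ℝ g x)
    (hgpos : ∀ s ∈ Set.Ici M₁, 0 < g s)
    (hint : MeasureTheory.IntegrableOn (fun s => (g s)⁻¹) (Set.Ioi M₁))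
    (L : ℝ) : ∃ s, M₁ ≤ s ∧ L < deriv g s := by
  by_contra h
  push_neg at h
  set x := M₁ + 1 with hxdef
  have hxmem : x ∈ Set.Ici M₁ := by simp [hxdef]
  set L' := max L 1 with hL'def
  have hL'1 : (1:ℝ) ≤ L' := le_max_right _ _
  have hL'pos : (0:ℝ) < L' := by linarith
  have hub : ∀ y, x < y → g y ≤ g x + L' * (y - x) := by
    intro y hxy
    have hymem : y ∈ Set.Ici M₁ := by
      simp only [Set.mem_Ici]; simp only [hxdef] at hxy; linarith
    have hs := hconv.slope_le_deriv hxmem hymem hxy (hdiff y hymem)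
    rw [slope_def_field] at hs
    have hL : deriv g y ≤ L' := le_trans (h y hymem.out) (le_max_left _ _)
    have hyx : (0:ℝ) < y - x := by linarith
    have := (div_le_iff₀ hyx).1 (le_trans hs hL)
    linarith
  set y₂ := max (max ((g x - L' * x)/L' + 1) (x+1)) 1 with hy₂def
  have hy₂x : x + 1 ≤ y₂ := le_trans (le_max_right _ _) (le_max_left _ _)
  have hy₂1 : (1:ℝ) ≤ y₂ := le_max_right _ _
  have hub2 : ∀ y, y₂ < y → g y ≤ 2 * L' * y := by
    intro y hy
    have h1 : g y ≤ g x + L' * (y - x) := hub y (by linarith)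
    have h2 : (g x - L' * x)/L' + 1 ≤ y₂ := le_trans (le_max_left _ _) (le_max_left _ _)
    have h3 : (g x - L' * x)/L' < y := by linarith
    have h4 : g x - L' * x < L' * y := by
      have := (div_lt_iff₀ hL'pos).1 h3
      linarith [this]
    nlinarith
  have hM₁y₂ : M₁ ≤ y₂ := by
    have : M₁ ≤ x + 1 := by simp [hxdef]; linarith
    linarith
  have hi2 : IntegrableOn (fun y => (g y)⁻¹) (Set.Ioi y₂) :=
    hint.mono_set (Set.Ioi_subset_Ioi hM₁y₂)
  have hi3 : IntegrableOn (fun y => (2*L')⁻¹ * y⁻¹) (Set.Ioi y₂) := by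
    apply Integrable.mono' hi2
    · exact ((measurable_inv.comp measurable_id).const_mul _).aestronglyMeasurable
    · rw [ae_restrict_iff' measurableSet_Ioi]
      filter_upwards with y hy
      have hy2 : y₂ < y := hy
      have hypos : (0:ℝ) < y := by linarith
      have hgy : 0 < g y := hgpos y (by simp only [Set.mem_Ici]; linarith)
      have hle : g y ≤ 2*L'*y := hub2 y hy2
      have hinv : (2*L'*y)⁻¹ ≤ (g y)⁻¹ := by
        apply inv_anti₀ hgy hle
      have hposq : (0:ℝ) < (2*L')⁻¹ * y⁻¹ := by positivity
      rw [Real.norm_eq_abs, abs_of_pos hposq]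
      calc (2*L')⁻¹ * y⁻¹ = (2*L'*y)⁻¹ := by rw [mul_inv]; ring
        _ ≤ (g y)⁻¹ := hinv
  have heq : (fun y:ℝ => (2*L') * ((2*L')⁻¹ * y⁻¹)) = fun y:ℝ => y⁻¹ := by
    funext y
    have h20 : (2*L') ≠ 0 := by positivity
    rw [← mul_assoc, mul_inv_cancel₀ h20, one_mul]
  have := hi3.const_mul (2*L')
  rw [heq] at this
  exact not_IntegrableOn_Ioi_inv this


set_option maxHeartbeats 1000000 in
/-- **Elementary properties of the nonlinearity and auxiliary functions** (Lemma 4.1):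
there exist `K, M > 0` such that `f` is `C²` on `[M,∞)`, `f, f' ≥ −K` on `[0,∞)`,
`f ≥ e⁴` and `f' ≥ 0` on `[M,∞)`, and for every `A ≥ 0` the functions
`φ = 1/(A + log f)` and `F = fφ` are `C²` on `[M,∞)` and satisfy `0 < φ ≤ 1/4`,
`F' = f'φ(1−φ)`, `F'' ≥ 0`, `lim_∞ F' = ∞` and `lim_∞ f'φ = ∞`. -/
theorem auxiliary_functions_properties
    (f : ℝ → ℝ)
    (hf_C1 : ContDiffOn ℝ 1 f (Set.Ici 0)) (hf0 : 0 ≤ f 0)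
    (hf_lim : Tendsto f atTop atTop)
    (s₀ : ℝ) (hs₀ : 0 < s₀)
    (hf_C2 : ContDiffOn ℝ 2 f (Set.Ici s₀))
    (hf_conv : ConvexOn ℝ (Set.Ici s₀) fun s => f s / Real.log (f s))
    (hf_int : IntegrableOn (fun s => Real.log (f s) / f s) (Set.Ioi s₀)) :
    ∃ K > (0 : ℝ), ∃ M > (0 : ℝ),
      ContDiffOn ℝ 2 f (Set.Ici M) ∧
      (∀ s ≥ (0 : ℝ), -K ≤ f s ∧ -K ≤ derivWithin f (Set.Ici 0) s) ∧
      (∀ s ≥ M, Real.exp 4 ≤ f s ∧ 0 ≤ deriv f s) ∧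
      ∀ A ≥ (0 : ℝ),
        ContDiffOn ℝ 2 (fun s => f s * (A + Real.log (f s))⁻¹) (Set.Ici M) ∧
        (∀ s ≥ M, 0 < (A + Real.log (f s))⁻¹ ∧ (A + Real.log (f s))⁻¹ ≤ 1 / 4) ∧
        (∀ s ≥ M, deriv (fun z => f z * (A + Real.log (f z))⁻¹) s =
          deriv f s * (A + Real.log (f s))⁻¹ * (1 - (A + Real.log (f s))⁻¹)) ∧
        (∀ s ≥ M, 0 ≤ deriv (deriv (fun z => f z * (A + Real.log (f z))⁻¹)) s) ∧
        Tendsto (deriv (fun z => f z * (A + Real.log (f z))⁻¹)) atTop atTop ∧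
        Tendsto (fun s => deriv f s * (A + Real.log (f s))⁻¹) atTop atTop := by
  -- rewrite the convexity hypothesis in mul-inv form
  have hdivmul : (fun s => f s / Real.log (f s)) = fun s => f s * (Real.log (f s))⁻¹ := by
    funext s; rw [div_eq_mul_inv]
  rw [hdivmul] at hf_conv
  -- choose M₁
  obtain ⟨N, hN⟩ := eventually_atTop.1 (hf_lim.eventually_ge_atTop (Real.exp 4))
  set M₁ : ℝ := max N (s₀ + 1) with hM₁def
  have hM₁s₀ : s₀ < M₁ := lt_of_lt_of_le (by linarith) (le_max_right _ _)
  have hM₁f : ∀ s, M₁ ≤ s → Real.exp 4 ≤ f s :=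
    fun s hs => hN s (le_trans (le_max_left _ _) hs)
  have hM₁pos : 0 < M₁ := by
    have : s₀ + 1 ≤ M₁ := le_max_right _ _
    linarith
  -- basic pointwise facts
  have hfposAt : ∀ s, M₁ ≤ s → 0 < f s :=
    fun s hs => lt_of_lt_of_le (Real.exp_pos 4) (hM₁f s hs)
  have hlogAt : ∀ s, M₁ ≤ s → 4 ≤ Real.log (f s) := by
    intro s hs
    rw [show (4:ℝ) = Real.log (Real.exp 4) by rw [Real.log_exp]]
    exact Real.log_le_log (Real.exp_pos 4) (hM₁f s hs)
  have hquarter : ∀ x : ℝ, 4 ≤ x → 0 < x⁻¹ ∧ x⁻¹ ≤ 1/4 := by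
    intro x hx
    constructor
    · positivity
    · calc x⁻¹ ≤ 4⁻¹ := inv_anti₀ (by norm_num) hx
        _ = 1/4 := by norm_num
  have hdfAt : ∀ s, M₁ ≤ s → HasDerivAt f (deriv f s) s := by
    intro s hs
    have hss₀ : s₀ < s := lt_of_lt_of_le hM₁s₀ hs
    exact ((hf_C2.contDiffAt (Ici_mem_nhds hss₀)).differentiableAt two_ne_zero).hasDerivAt
  have hC1d : ContDiffOn ℝ 1 (deriv f) (Set.Ioi s₀) :=
    (hf_C2.mono Set.Ioi_subset_Ici_self).deriv_of_isOpen isOpen_Ioi (by norm_num)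
  have hdf2At : ∀ s, M₁ ≤ s → HasDerivAt (deriv f) (deriv (deriv f) s) s := by
    intro s hs
    have hss₀ : s₀ < s := lt_of_lt_of_le hM₁s₀ hs
    exact ((hC1d.contDiffAt (Ioi_mem_nhds hss₀)).differentiableAt one_ne_zero).hasDerivAt
  -- the key first-derivative formula
  have key1 : ∀ A : ℝ, 0 ≤ A → ∀ s, M₁ ≤ s →
      HasDerivAt (fun z => f z * (A + Real.log (f z))⁻¹)
        (deriv f s * (A + Real.log (f s))⁻¹ * (1 - (A + Real.log (f s))⁻¹)) s :=
    fun A hA s hs => aux_hasDerivAt_G hA (hdfAt s hs) (hM₁f s hs)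
  have key0 : ∀ s, M₁ ≤ s →
      HasDerivAt (fun z => f z * (Real.log (f z))⁻¹)
        (deriv f s * (Real.log (f s))⁻¹ * (1 - (Real.log (f s))⁻¹)) s := by
    intro s hs
    simpa using key1 0 le_rfl s hs
  -- convexity and monotonicity of the derivative of g₀
  have hG0conv : ConvexOn ℝ (Set.Ici M₁) (fun z => f z * (Real.log (f z))⁻¹) :=
    hf_conv.subset (Set.Ici_subset_Ici.2 hM₁s₀.le) (convex_Ici _)
  have hg'mono : MonotoneOn (deriv (fun z => f z * (Real.log (f z))⁻¹)) (Set.Ici M₁) :=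
    hG0conv.monotoneOn_deriv (fun x hx => (key0 x hx).differentiableAt)
  -- unboundedness of deriv g₀
  have hgpos : ∀ s ∈ Set.Ici M₁, 0 < f s * (Real.log (f s))⁻¹ := by
    intro s hs
    have := hfposAt s hs
    have := (hquarter _ (hlogAt s hs)).1
    positivity
  have hintg : IntegrableOn (fun s => (f s * (Real.log (f s))⁻¹)⁻¹) (Set.Ioi M₁) := by
    have heq : (fun s => (f s * (Real.log (f s))⁻¹)⁻¹) = fun s => Real.log (f s) / f s := by
      funext s
      rw [mul_inv, inv_inv]
      ring
    rw [heq]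
    exact hf_int.mono_set (Set.Ioi_subset_Ioi hM₁s₀.le)
  have hg'unb : ∀ L : ℝ, ∃ s, M₁ ≤ s ∧ L < deriv (fun z => f z * (Real.log (f z))⁻¹) s :=
    aux_deriv_unbounded hG0conv (fun x hx => (key0 x hx).differentiableAt) hgpos hintg
  have hg'top : Tendsto (deriv (fun z => f z * (Real.log (f z))⁻¹)) atTop atTop := by
    rw [tendsto_atTop]
    intro L
    obtain ⟨s₁, hs₁, hLs₁⟩ := hg'unb L
    filter_upwards [eventually_ge_atTop s₁] with s hs
    exact le_of_lt (lt_of_lt_of_le hLs₁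
      (hg'mono (Set.mem_Ici.2 hs₁) (Set.mem_Ici.2 (le_trans hs₁ hs)) hs))
  -- choose M₂
  obtain ⟨N₂, hN₂⟩ := eventually_atTop.1 (hg'top.eventually_ge_atTop 1)
  set M₂ : ℝ := max N₂ (M₁ + 1) with hM₂def
  have hM₂M₁ : M₁ + 1 ≤ M₂ := le_max_right _ _
  have hM₂1 : ∀ s, M₂ ≤ s → 1 ≤ deriv (fun z => f z * (Real.log (f z))⁻¹) s :=
    fun s hs => hN₂ s (le_trans (le_max_left _ _) hs)
  have hM₂facts : ∀ s, M₂ ≤ s → 0 ≤ deriv f s ∧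
      deriv (fun z => f z * (Real.log (f z))⁻¹) s ≤ deriv f s * (Real.log (f s))⁻¹ := by
    intro s hs
    have hsM₁ : M₁ ≤ s := by linarith
    have h1 := hM₂1 s hs
    rw [(key0 s hsM₁).deriv] at h1 ⊢
    obtain ⟨ha0, ha4⟩ := hquarter _ (hlogAt s hsM₁)
    set a := (Real.log (f s))⁻¹
    set c := deriv f s with hcdef
    have hc : 0 ≤ c := by nlinarith [mul_pos ha0 (show (0:ℝ) < 1 - a by linarith)]
    exact ⟨hc, by nlinarith [mul_nonneg hc ha0.le]⟩
  set M : ℝ := M₂ + 1 with hMdef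
  have hMpos : 0 < M := by linarith
  have hMM₁ : M₁ ≤ M := by linarith
  have hMM₂ : M₂ ≤ M := by linarith
  -- the constant K
  have hfc : ContinuousOn f (Set.Icc 0 M) := hf_C1.continuousOn.mono Set.Icc_subset_Ici_self
  have hdc : ContinuousOn (derivWithin f (Set.Ici 0)) (Set.Icc 0 M) :=
    (hf_C1.continuousOn_derivWithin (uniqueDiffOn_Ici 0) le_rfl).mono Set.Icc_subset_Ici_self
  have hnem : Set.Nonempty (Set.Icc (0:ℝ) M) := ⟨0, Set.mem_Icc.2 ⟨le_rfl, by linarith⟩⟩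
  obtain ⟨p, hp, hpmin⟩ := isCompact_Icc.exists_isMinOn hnem hfc
  obtain ⟨q, hq, hqmin⟩ := isCompact_Icc.exists_isMinOn hnem hdc
  set K : ℝ := |f p| + |derivWithin f (Set.Ici 0) q| + 1 with hKdef
  have hKpos : 0 < K := by positivity
  refine ⟨K, hKpos, M, hMpos, hf_C2.mono (Set.Ici_subset_Ici.2 (by linarith)), ?_, ?_, ?_⟩
  · -- global lower bounds
    intro s hs
    rcases le_total s M with hsM | hsM
    · have h1 : f p ≤ f s := isMinOn_iff.1 hpmin s ⟨hs, hsM⟩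
      have h2 : derivWithin f (Set.Ici 0) q ≤ derivWithin f (Set.Ici 0) s :=
        isMinOn_iff.1 hqmin s ⟨hs, hsM⟩
      constructor
      · rw [hKdef]
        linarith [neg_abs_le (f p), abs_nonneg (derivWithin f (Set.Ici 0) q)]
      · rw [hKdef]
        linarith [neg_abs_le (derivWithin f (Set.Ici 0) q), abs_nonneg (f p)]
    · have hsM₂ : M₂ ≤ s := le_trans hMM₂ hsM
      have hfe : Real.exp 4 ≤ f s := hM₁f s (le_trans hMM₁ hsM)
      constructor
      · linarith [Real.exp_pos 4]
      · rw [derivWithin_of_mem_nhds (Ici_mem_nhds (show (0:ℝ) < s by linarith))]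
        linarith [(hM₂facts s hsM₂).1]
  · -- f ≥ e⁴ and f' ≥ 0 on [M,∞)
    exact fun s hs => ⟨hM₁f s (le_trans hMM₁ hs), (hM₂facts s (le_trans hMM₂ hs)).1⟩
  -- the A-dependent part
  intro A hA
  have key2 : ∀ B : ℝ, 0 ≤ B → ∀ s, M₂ < s →
      HasDerivAt (deriv (fun z => f z * (B + Real.log (f z))⁻¹))
        (deriv (deriv f) s * (B + Real.log (f s))⁻¹ * (1 - (B + Real.log (f s))⁻¹)
          - (f s)⁻¹ * (deriv f s * deriv f s) * ((B + Real.log (f s))⁻¹)^2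
            * (1 - 2*(B + Real.log (f s))⁻¹)) s := by
    intro B hB s hs
    have hsM₁ : M₁ ≤ s := by linarith
    have hE := aux_hasDerivAt_E hB (hdfAt s hsM₁) (hdf2At s hsM₁) (hM₁f s hsM₁)
    apply hE.congr_of_eventuallyEq
    filter_upwards [Ioi_mem_nhds (show M₁ < s by linarith)] with z hz
    exact (key1 B hB z (le_of_lt hz)).deriv
  have key2zero : ∀ s, M₂ < s →
      HasDerivAt (deriv (fun z => f z * (Real.log (f z))⁻¹))
        (deriv (deriv f) s * (Real.log (f s))⁻¹ * (1 - (Real.log (f s))⁻¹)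
          - (f s)⁻¹ * (deriv f s * deriv f s) * ((Real.log (f s))⁻¹)^2
            * (1 - 2*(Real.log (f s))⁻¹)) s := by
    intro s hs
    simpa using key2 0 le_rfl s hs
  have hchain : ∀ s, M ≤ s →
      (3/(A+4)) * deriv (fun z => f z * (Real.log (f z))⁻¹) s ≤
        deriv f s * (A + Real.log (f s))⁻¹ * (1 - (A + Real.log (f s))⁻¹) ∧
      (4/(A+4)) * deriv (fun z => f z * (Real.log (f z))⁻¹) s ≤
        deriv f s * (A + Real.log (f s))⁻¹ := by
    intro s hs
    have hsM₂ : M₂ ≤ s := le_trans hMM₂ hs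
    have hsM₁ : M₁ ≤ s := le_trans hMM₁ hs
    obtain ⟨hc, hgca⟩ := hM₂facts s hsM₂
    have hl := hlogAt s hsM₁
    obtain ⟨ha0, ha4⟩ := hquarter _ hl
    have hlpos : 0 < Real.log (f s) := by linarith
    have hAl : 0 < A + Real.log (f s) := by linarith
    obtain ⟨hb0, hb4⟩ := hquarter _ (show 4 ≤ A + Real.log (f s) by linarith)
    set g' := deriv (fun z => f z * (Real.log (f z))⁻¹) s with hg'def
    set c := deriv f s with hcdef
    set a := (Real.log (f s))⁻¹ with hadef
    set b := (A + Real.log (f s))⁻¹ with hbdef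
    have h4ab : 4 * a ≤ (A+4) * b := by
      rw [hadef, hbdef, ← div_eq_mul_inv, ← div_eq_mul_inv,
        div_le_div_iff₀ hlpos hAl]
      nlinarith
    have h5 : c * (4*a) ≤ c * ((A+4)*b) := mul_le_mul_of_nonneg_left h4ab hc
    have h6 : 0 ≤ c * b := mul_nonneg hc hb0.le
    have hA4 : (0:ℝ) < A + 4 := by linarith
    constructor
    · rw [div_mul_eq_mul_div, div_le_iff₀ hA4]
      have h7 : 0 ≤ (c*b) * ((A+4) * (1/4 - b)) :=
        mul_nonneg h6 (mul_nonneg hA4.le (by linarith))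
      nlinarith [h5, hgca, h7]
    · rw [div_mul_eq_mul_div, div_le_iff₀ hA4]
      nlinarith [h5, hgca]
  have hfm : ContDiffOn ℝ 2 f (Set.Ici M) := hf_C2.mono (Set.Ici_subset_Ici.2 (by linarith))
  refine ⟨?_, ?_, ?_, ?_, ?_, ?_⟩
  · -- C² regularity of F
    have hne' : ∀ x ∈ Set.Ici M, f x ≠ 0 := fun x hx => ne_of_gt (hfposAt x (le_trans hMM₁ hx))
    refine hfm.mul ((contDiffOn_const.add (hfm.log hne')).inv ?_)
    intro x hx
    have := hlogAt x (le_trans hMM₁ hx)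
    intro hcon
    linarith [hcon ▸ (show (0:ℝ) < A + Real.log (f x) by linarith)]
  · -- bounds on φ
    intro s hs
    have := hlogAt s (le_trans hMM₁ hs)
    exact hquarter _ (by linarith)
  · -- derivative formula
    exact fun s hs => (key1 A hA s (le_trans hMM₁ hs)).deriv
  · -- second derivative nonneg
    intro s hs
    have hsM₂ : M₂ < s := by rw [hMdef] at hs; linarith
    have hsM₁ : M₁ ≤ s := by linarith
    have h2A := key2 A hA s hsM₂
    have h20 := key2zero s hsM₂
    have hsub : Set.Ioi M₂ ⊆ Set.Ici M₁ := by
      intro x hx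
      have := Set.mem_Ioi.1 hx
      exact Set.mem_Ici.2 (by linarith)
    have h0nonneg := monoOn_hasDerivAt_nonneg (hg'mono.mono hsub) hsM₂ h20
    rw [h2A.deriv]
    obtain ⟨ha0, ha4⟩ := hquarter _ (hlogAt s hsM₁)
    have hlpos : 0 < Real.log (f s) := by linarith [hlogAt s hsM₁]
    obtain ⟨hb0, _⟩ := hquarter _ (show 4 ≤ A + Real.log (f s) by linarith [hlogAt s hsM₁])
    have hba : (A + Real.log (f s))⁻¹ ≤ (Real.log (f s))⁻¹ :=
      inv_anti₀ hlpos (by linarith)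
    have he : 0 ≤ (f s)⁻¹ * (deriv f s * deriv f s) :=
      mul_nonneg (inv_nonneg.2 (hfposAt s hsM₁).le) (mul_self_nonneg _)
    exact aux_second_nonneg hb0 hba ha4 he h0nonneg
  · -- F' → ∞
    have h1 : Tendsto (fun s => (3/(A+4)) * deriv (fun z => f z * (Real.log (f z))⁻¹) s)
        atTop atTop :=
      Tendsto.const_mul_atTop (div_pos (by norm_num) (by linarith)) hg'top
    apply tendsto_atTop_mono' atTop ?_ h1
    filter_upwards [eventually_ge_atTop M] with s hs
    rw [(key1 A hA s (le_trans hMM₁ hs)).deriv]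
    exact (hchain s hs).1
  · -- f'φ → ∞
    have h1 : Tendsto (fun s => (4/(A+4)) * deriv (fun z => f z * (Real.log (f z))⁻¹) s)
        atTop atTop :=
      Tendsto.const_mul_atTop (div_pos (by norm_num) (by linarith)) hg'top
    apply tendsto_atTop_mono' atTop ?_ h1
    filter_upwards [eventually_ge_atTop M] with s hs
    exact (hchain s hs).2
end

section
/- Under the stated assumptions, G(X) ~ X^{1−p} / ((p−1)·L(X)) as X → ∞; that is, the ratio G(X) · (p−1) · L(X) · X^{p−1} tends to 1 as X → ∞. -/
open MeasureTheory Filter Topology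

/-- `G(X) = ∫_X^∞ ds / f(s)`. -/
noncomputable def Gfun (f : ℝ → ℝ) (X : ℝ) : ℝ := ∫ s in Set.Ioi X, (f s)⁻¹

/-- `H(X) = ∫_X^∞ (A + log f(s))/f(s) ds`. -/
noncomputable def Hfun (f : ℝ → ℝ) (A X : ℝ) : ℝ :=
  ∫ s in Set.Ioi X, (A + Real.log (f s)) / f s

private lemma G_key
    (p : ℝ) (hp : 1 < p)
    (f L : ℝ → ℝ)
    (s₀ : ℝ) (hs₀ : 0 < s₀)
    (hf_pos : ∀ s ≥ s₀, 0 < f s)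
    (hf_C1 : ContDiffOn ℝ 1 f (Set.Ici s₀))
    (hLdef : ∀ s > (0 : ℝ), L s = s ^ (-p) * f s)
    (hL : Tendsto (fun s => s * deriv L s / L s) atTop (𝓝 0))
    (hGint : ∀ X ≥ s₀, IntegrableOn (fun s => (f s)⁻¹) (Set.Ioi X))
    (δ : ℝ) (hδ : 0 < δ) (hδp : δ < p - 1) :
    ∀ᶠ X in atTop, Gfun f X * ((p - 1) * L X * X ^ (p - 1)) ∈
      Set.Icc ((p - 1) / (p - 1 + δ)) ((p - 1) / (p - 1 - δ)) := by
  have hLpos : ∀ s, s₀ ≤ s → 0 < L s := by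
    intro s hs
    have hs0 : 0 < s := lt_of_lt_of_le hs₀ hs
    rw [hLdef s hs0]
    exact mul_pos (Real.rpow_pos_of_pos hs0 _) (hf_pos s hs)
  have hderiv : ∀ s, s₀ < s → HasDerivAt L (deriv L s) s := by
    intro s hs
    have hs0 : 0 < s := hs₀.trans hs
    have hfd : DifferentiableAt ℝ f s :=
      (hf_C1.contDiffAt (Ici_mem_nhds hs)).differentiableAt one_ne_zero
    have hFd : DifferentiableAt ℝ (fun t => t ^ (-p) * f t) s :=
      (Real.differentiableAt_rpow_const_of_ne (-p) hs0.ne').mul hfd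
    have heq : L =ᶠ[𝓝 s] fun t => t ^ (-p) * f t := by
      filter_upwards [Ioi_mem_nhds hs0] with t ht
      exact hLdef t ht
    exact (hFd.congr_of_eventuallyEq heq).hasDerivAt
  -- choose a threshold X₁
  obtain ⟨X₀, hX₀⟩ := eventually_atTop.mp (Metric.tendsto_nhds.mp hL δ hδ)
  set X₁ := max X₀ (s₀ + 1) with hX₁def
  have hX₁s₀ : s₀ < X₁ := lt_of_lt_of_le (by linarith) (le_max_right _ _)
  have hfacts : ∀ s, X₁ ≤ s → s₀ < s ∧ 0 < s ∧ 0 < L s ∧ |s * deriv L s / L s| ≤ δ := by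
    intro s hs
    have h1 : s₀ < s := lt_of_lt_of_le hX₁s₀ hs
    have h2 : 0 < s := hs₀.trans h1
    have h3 := hX₀ s (le_trans (le_max_left _ _) hs)
    rw [Real.dist_eq, sub_zero] at h3
    exact ⟨h1, h2, hLpos s h1.le, h3.le⟩
  -- the two monotone auxiliary functions
  have hmono : ∀ c : ℝ, (∀ s, X₁ ≤ s → 0 ≤ δ * s⁻¹ + c * ((L s)⁻¹ * deriv L s)) →
      MonotoneOn (fun t => δ * Real.log t + c * Real.log (L t)) (Set.Ici X₁) := by
    intro c hc
    have hφ : ∀ s, X₁ ≤ s → HasDerivAt (fun t => δ * Real.log t + c * Real.log (L t))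
        (δ * s⁻¹ + c * ((L s)⁻¹ * deriv L s)) s := by
      intro s hs
      obtain ⟨h1, h2, h3, _⟩ := hfacts s hs
      exact ((Real.hasDerivAt_log h2.ne').const_mul δ).add
        (((Real.hasDerivAt_log h3.ne').comp s (hderiv s h1)).const_mul c)
    apply monotoneOn_of_deriv_nonneg (convex_Ici X₁)
    · intro s hs
      exact (hφ s hs).continuousAt.continuousWithinAt
    · intro s hs
      rw [interior_Ici] at hs
      exact (hφ s (le_of_lt hs)).differentiableAt.differentiableWithinAt
    · intro s hs
      rw [interior_Ici] at hs
      rw [(hφ s hs.le).deriv]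
      exact hc s hs.le
  have hkey : ∀ s, X₁ ≤ s → (L s)⁻¹ * deriv L s = (s * deriv L s / L s) * s⁻¹ := by
    intro s hs
    obtain ⟨_, h2, h3, _⟩ := hfacts s hs
    field_simp
  have hmonoP : MonotoneOn (fun t => δ * Real.log t + 1 * Real.log (L t)) (Set.Ici X₁) := by
    apply hmono
    intro s hs
    obtain ⟨_, h2, h3, h4⟩ := hfacts s hs
    have h5 : -δ ≤ s * deriv L s / L s := (abs_le.mp h4).1
    rw [one_mul, hkey s hs]
    calc (0:ℝ) ≤ (δ + s * deriv L s / L s) * s⁻¹ :=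
          mul_nonneg (by linarith) (inv_nonneg.mpr h2.le)
      _ = δ * s⁻¹ + s * deriv L s / L s * s⁻¹ := by ring
  have hmonoM : MonotoneOn (fun t => δ * Real.log t + (-1) * Real.log (L t)) (Set.Ici X₁) := by
    apply hmono
    intro s hs
    obtain ⟨_, h2, h3, h4⟩ := hfacts s hs
    have h5 : s * deriv L s / L s ≤ δ := (abs_le.mp h4).2
    rw [hkey s hs]
    calc (0:ℝ) ≤ (δ - s * deriv L s / L s) * s⁻¹ :=
          mul_nonneg (by linarith) (inv_nonneg.mpr h2.le)
      _ = δ * s⁻¹ + -1 * (s * deriv L s / L s * s⁻¹) := by ring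
  -- bounds on L(t)/L(X)
  have hA : ∀ X t, X₁ ≤ X → X ≤ t → L t ≤ L X * (t / X) ^ δ := by
    intro X t hX ht
    obtain ⟨_, hX0, hLX, _⟩ := hfacts X hX
    obtain ⟨_, ht0, hLt, _⟩ := hfacts t (hX.trans ht)
    have := hmonoM (Set.mem_Ici.mpr hX) (Set.mem_Ici.mpr (hX.trans ht)) ht
    simp only [neg_one_mul] at this
    have hlog : Real.log (L t) ≤ Real.log (L X) + δ * (Real.log t - Real.log X) := by
      linarith
    have htX : 0 < t / X := div_pos ht0 hX0
    calc L t = Real.exp (Real.log (L t)) := (Real.exp_log hLt).symm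
      _ ≤ Real.exp (Real.log (L X) + δ * (Real.log t - Real.log X)) := Real.exp_le_exp.mpr hlog
      _ = L X * (t / X) ^ δ := by
          rw [Real.exp_add, Real.exp_log hLX, Real.rpow_def_of_pos htX,
            Real.log_div ht0.ne' hX0.ne', mul_comm (Real.log t - Real.log X) δ]
  have hB : ∀ X t, X₁ ≤ X → X ≤ t → L X ≤ L t * (t / X) ^ δ := by
    intro X t hX ht
    obtain ⟨_, hX0, hLX, _⟩ := hfacts X hX
    obtain ⟨_, ht0, hLt, _⟩ := hfacts t (hX.trans ht)
    have := hmonoP (Set.mem_Ici.mpr hX) (Set.mem_Ici.mpr (hX.trans ht)) ht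
    simp only [one_mul] at this
    have hlog : Real.log (L X) ≤ Real.log (L t) + δ * (Real.log t - Real.log X) := by
      linarith
    have htX : 0 < t / X := div_pos ht0 hX0
    calc L X = Real.exp (Real.log (L X)) := (Real.exp_log hLX).symm
      _ ≤ Real.exp (Real.log (L t) + δ * (Real.log t - Real.log X)) := Real.exp_le_exp.mpr hlog
      _ = L t * (t / X) ^ δ := by
          rw [Real.exp_add, Real.exp_log hLt, Real.rpow_def_of_pos htX,
            Real.log_div ht0.ne' hX0.ne', mul_comm (Real.log t - Real.log X) δ]
  -- main eventual estimate
  filter_upwards [eventually_ge_atTop X₁] with X hXX₁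
  obtain ⟨hXs₀, hX0, hLX, _⟩ := hfacts X hXX₁
  set cU : ℝ := X ^ (-δ) / L X with hcU
  set cL : ℝ := X ^ δ / L X with hcL
  -- pointwise bounds on the integrand
  have hfinv : ∀ t, X < t → (f t)⁻¹ = t ^ (-p) * (L t)⁻¹ := by
    intro t ht
    have ht0 : 0 < t := hX0.trans ht
    have hft : f t = t ^ p * L t := by
      rw [hLdef t ht0, ← mul_assoc, ← Real.rpow_add ht0]
      simp
    rw [hft, mul_inv, ← Real.rpow_neg ht0.le]
  have hptU : ∀ t ∈ Set.Ioi X, (f t)⁻¹ ≤ cU * t ^ (δ - p) := by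
    intro t ht
    rw [Set.mem_Ioi] at ht
    have ht0 : 0 < t := hX0.trans ht
    obtain ⟨_, _, hLt, _⟩ := hfacts t (hXX₁.trans ht.le)
    have htX : 0 < t / X := div_pos ht0 hX0
    have h1 : (L t)⁻¹ ≤ (t / X) ^ δ / L X := by
      rw [← one_div, div_le_div_iff₀ hLt hLX, one_mul, mul_comm]
      exact hB X t hXX₁ ht.le
    have h2 : (f t)⁻¹ ≤ t ^ (-p) * ((t / X) ^ δ / L X) := by
      rw [hfinv t ht]
      exact mul_le_mul_of_nonneg_left h1 (Real.rpow_nonneg ht0.le _)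
    refine h2.trans_eq ?_
    rw [hcU, Real.div_rpow ht0.le hX0.le, show δ - p = δ + (-p) by ring,
      Real.rpow_add ht0, Real.rpow_neg hX0.le]
    field_simp
  have hptL : ∀ t ∈ Set.Ioi X, cL * t ^ (-δ - p) ≤ (f t)⁻¹ := by
    intro t ht
    rw [Set.mem_Ioi] at ht
    have ht0 : 0 < t := hX0.trans ht
    obtain ⟨_, _, hLt, _⟩ := hfacts t (hXX₁.trans ht.le)
    have htX : 0 < t / X := div_pos ht0 hX0
    have h1' : ((t / X) ^ δ * L X)⁻¹ ≤ (L t)⁻¹ := by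
      rw [inv_le_inv₀ (mul_pos (Real.rpow_pos_of_pos htX _) hLX) hLt]
      calc L t ≤ L X * (t / X) ^ δ := hA X t hXX₁ ht.le
        _ = (t / X) ^ δ * L X := by ring
    have h2 : t ^ (-p) * ((t / X) ^ δ * L X)⁻¹ ≤ (f t)⁻¹ := by
      rw [hfinv t ht]
      exact mul_le_mul_of_nonneg_left h1' (Real.rpow_nonneg ht0.le _)
    refine le_trans (le_of_eq ?_) h2
    rw [hcL, Real.div_rpow ht0.le hX0.le, show -δ - p = -δ + (-p) by ring,
      Real.rpow_add ht0, Real.rpow_neg ht0.le]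
    have htδ : (t : ℝ) ^ δ ≠ 0 := (Real.rpow_pos_of_pos ht0 _).ne'
    have hXδ : (X : ℝ) ^ δ ≠ 0 := (Real.rpow_pos_of_pos hX0 _).ne'
    field_simp
  -- integrability
  have hintf : IntegrableOn (fun s => (f s)⁻¹) (Set.Ioi X) := hGint X hXs₀.le
  have hiU : IntegrableOn (fun t => cU * t ^ (δ - p)) (Set.Ioi X) :=
    (integrableOn_Ioi_rpow_of_lt (by linarith) hX0).const_mul cU
  have hiL : IntegrableOn (fun t => cL * t ^ (-δ - p)) (Set.Ioi X) :=
    (integrableOn_Ioi_rpow_of_lt (by linarith) hX0).const_mul cL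
  -- integral bounds
  have hGU : Gfun f X ≤ cU * (-X ^ (δ - p + 1) / (δ - p + 1)) := by
    rw [Gfun]
    calc ∫ s in Set.Ioi X, (f s)⁻¹ ≤ ∫ t in Set.Ioi X, cU * t ^ (δ - p) :=
          setIntegral_mono_on hintf hiU measurableSet_Ioi hptU
      _ = cU * ∫ t in Set.Ioi X, t ^ (δ - p) := integral_const_mul _ _
      _ = cU * (-X ^ (δ - p + 1) / (δ - p + 1)) := by
          rw [integral_Ioi_rpow_of_lt (by linarith) hX0]
  have hGL : cL * (-X ^ (-δ - p + 1) / (-δ - p + 1)) ≤ Gfun f X := by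
    rw [Gfun]
    calc cL * (-X ^ (-δ - p + 1) / (-δ - p + 1))
        = cL * ∫ t in Set.Ioi X, t ^ (-δ - p) := by
          rw [integral_Ioi_rpow_of_lt (by linarith) hX0]
      _ = ∫ t in Set.Ioi X, cL * t ^ (-δ - p) := (integral_const_mul _ _).symm
      _ ≤ ∫ s in Set.Ioi X, (f s)⁻¹ :=
          setIntegral_mono_on hiL hintf measurableSet_Ioi hptL
  -- positivity of the multiplier
  have hC : 0 < (p - 1) * L X * X ^ (p - 1) :=
    mul_pos (mul_pos (by linarith) hLX) (Real.rpow_pos_of_pos hX0 _)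
  constructor
  · -- lower bound
    have h1 : cL * (-X ^ (-δ - p + 1) / (-δ - p + 1)) * ((p - 1) * L X * X ^ (p - 1))
        ≤ Gfun f X * ((p - 1) * L X * X ^ (p - 1)) :=
      mul_le_mul_of_nonneg_right hGL hC.le
    refine le_trans (le_of_eq ?_) h1
    have hXpow : X ^ δ * X ^ (-δ - p + 1) * X ^ (p - 1) = 1 := by
      rw [← Real.rpow_add hX0, ← Real.rpow_add hX0,
        show δ + (-δ - p + 1) + (p - 1) = 0 by ring, Real.rpow_zero]
    rw [hcL]
    have hq : (-δ - p + 1 : ℝ) ≠ 0 := by linarith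
    have : X ^ δ / L X * (-X ^ (-δ - p + 1) / (-δ - p + 1)) * ((p - 1) * L X * X ^ (p - 1))
        = (p - 1) * (-(1 : ℝ) / (-δ - p + 1)) * (X ^ δ * X ^ (-δ - p + 1) * X ^ (p - 1))
          * (L X / L X) := by ring
    rw [this, hXpow, div_self hLX.ne', mul_one, mul_one]
    rw [show -(1 : ℝ) / (-δ - p + 1) = 1 / (p - 1 + δ) by
      rw [div_eq_div_iff hq (by linarith : (p - 1 + δ : ℝ) ≠ 0)]; ring]
    ring
  · -- upper bound
    have h1 : Gfun f X * ((p - 1) * L X * X ^ (p - 1))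
        ≤ cU * (-X ^ (δ - p + 1) / (δ - p + 1)) * ((p - 1) * L X * X ^ (p - 1)) :=
      mul_le_mul_of_nonneg_right hGU hC.le
    refine h1.trans (le_of_eq ?_)
    have hXpow : X ^ (-δ) * X ^ (δ - p + 1) * X ^ (p - 1) = 1 := by
      rw [← Real.rpow_add hX0, ← Real.rpow_add hX0,
        show -δ + (δ - p + 1) + (p - 1) = 0 by ring, Real.rpow_zero]
    rw [hcU]
    have hq : (δ - p + 1 : ℝ) ≠ 0 := by linarith
    have : X ^ (-δ) / L X * (-X ^ (δ - p + 1) / (δ - p + 1)) * ((p - 1) * L X * X ^ (p - 1))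
        = (p - 1) * (-(1 : ℝ) / (δ - p + 1)) * (X ^ (-δ) * X ^ (δ - p + 1) * X ^ (p - 1))
          * (L X / L X) := by ring
    rw [this, hXpow, div_self hLX.ne', mul_one, mul_one]
    rw [show -(1 : ℝ) / (δ - p + 1) = 1 / (p - 1 - δ) by
      rw [div_eq_div_iff hq (by linarith : (p - 1 - δ : ℝ) ≠ 0)]; ring]
    ring

/-- **Asymptotics of `G`** (Lemma 4.2 (i), first part):
`G(X) ~ X^{1−p}/((p−1) L(X))` as `X → ∞`. -/
theorem G_asymptotics
    (p : ℝ) (hp : 1 < p)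
    (f L : ℝ → ℝ)
    (s₀ : ℝ) (hs₀ : 0 < s₀)
    (hf_pos : ∀ s ≥ s₀, 0 < f s)
    (hf_C1 : ContDiffOn ℝ 1 f (Set.Ici s₀))
    (hLdef : ∀ s > (0 : ℝ), L s = s ^ (-p) * f s)
    (hL : Tendsto (fun s => s * deriv L s / L s) atTop (𝓝 0))
    (hGint : ∀ X ≥ s₀, IntegrableOn (fun s => (f s)⁻¹) (Set.Ioi X))
    : Tendsto (fun X => Gfun f X * ((p - 1) * L X * X ^ (p - 1))) atTop (𝓝 1) := by
  rw [Metric.tendsto_nhds]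
  intro ε hε
  set ε' := min ε 1 with hε'def
  have hε'0 : 0 < ε' := lt_min hε one_pos
  have hε'1 : ε' ≤ 1 := min_le_right _ _
  set δ := min ((p - 1) / 2) (ε' * (p - 1) / 4) with hδdef
  have hδ0 : 0 < δ := lt_min (by linarith) (by nlinarith)
  have hδp : δ < p - 1 := lt_of_le_of_lt (min_le_left _ _) (by linarith)
  have hδa : δ ≤ ε' * (p - 1) / 4 := min_le_right _ _
  have hδb : δ ≤ (p - 1) / 2 := min_le_left _ _
  filter_upwards [G_key p hp f L s₀ hs₀ hf_pos hf_C1 hLdef hL hGint δ hδ0 hδp] with X hX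
  obtain ⟨h1, h2⟩ := hX
  rw [Real.dist_eq]
  have hub : (p - 1) / (p - 1 - δ) < 1 + ε' := by
    rw [div_lt_iff₀ (by linarith)]
    nlinarith
  have hlb : 1 - ε' < (p - 1) / (p - 1 + δ) := by
    rw [lt_div_iff₀ (by linarith)]
    nlinarith
  have : |Gfun f X * ((p - 1) * L X * X ^ (p - 1)) - 1| < ε' := by
    rw [abs_sub_lt_iff]
    constructor <;> linarith
  exact lt_of_lt_of_le this (min_le_left _ _)
end

section
/- Under the stated assumptions, as X → ∞ one has H(X) ~ p·X^{1−p}·log X / ((p−1)·L(X)) and H(X) ~ (p/(p−1))·G(X)·|log G(X)|; that is, the ratios H(X)·(p−1)·L(X)·X^{p−1}/(p·log X) and H(X)·(p−1)/(p·G(X)·|log G(X)|) both tend to 1 as X → ∞. -/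
set_option maxHeartbeats 1000000

open MeasureTheory Filter Topology

lemma tail_tendsto_zero {g : ℝ → ℝ} {a : ℝ} (hg : IntegrableOn g (Set.Ioi a)) :
    Tendsto (fun X => ∫ s in Set.Ioi X, g s) atTop (𝓝 0) := by
  have key : ∀ X ≥ a, (∫ s in Set.Ioi X, g s)
      = (∫ s in Set.Ioi a, g s) - ∫ s in Set.Ioc a X, g s := by
    intro X hX
    have h1 : Set.Ioc a X ∪ Set.Ioi X = Set.Ioi a := Set.Ioc_union_Ioi_eq_Ioi hX
    have h2 : (∫ s in Set.Ioi a, g s)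
        = (∫ s in Set.Ioc a X, g s) + ∫ s in Set.Ioi X, g s := by
      rw [← h1]
      exact setIntegral_union (Set.Ioc_disjoint_Ioi le_rfl) measurableSet_Ioi
        (hg.mono_set (by rw [← h1]; exact Set.subset_union_left))
        (hg.mono_set (by rw [← h1]; exact Set.subset_union_right))
    linarith
  have h3 : Tendsto (fun X => ∫ s in Set.Ioc a X, g s) atTop (𝓝 (∫ s in Set.Ioi a, g s)) := by
    refine (MeasureTheory.intervalIntegral_tendsto_integral_Ioi a hg tendsto_id).congr' ?_
    filter_upwards [eventually_ge_atTop a] with X hX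
    simp only [id_eq, intervalIntegral.integral_of_le hX]
  have h4 := ((tendsto_const_nhds :
      Tendsto (fun _ : ℝ => (∫ s in Set.Ioi a, g s)) atTop _).sub h3)
  rw [sub_self] at h4
  exact h4.congr' (by filter_upwards [eventually_ge_atTop a] with X hX
                      exact (key X hX).symm)

lemma tail_hasDerivAt {g : ℝ → ℝ} {a X : ℝ} (hg : IntegrableOn g (Set.Ioi a))
    (hX : a < X) (hcont : ContinuousAt g X) (hmeas : StronglyMeasurableAtFilter g (𝓝 X)) :
    HasDerivAt (fun Y => ∫ s in Set.Ioi Y, g s) (-g X) X := by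
  have hii : IntervalIntegrable g volume a X := by
    rw [intervalIntegrable_iff_integrableOn_Ioc_of_le hX.le]
    exact hg.mono_set Set.Ioc_subset_Ioi_self
  have hD : HasDerivAt (fun Y => (∫ s in Set.Ioi a, g s) - ∫ s in a..Y, g s) (-g X) X :=
    (intervalIntegral.integral_hasDerivAt_right hii hmeas hcont).const_sub _
  refine hD.congr_of_eventuallyEq ?_
  filter_upwards [eventually_gt_nhds hX] with Y hY
  have h1 : Set.Ioc a Y ∪ Set.Ioi Y = Set.Ioi a := Set.Ioc_union_Ioi_eq_Ioi hY.le
  have h2 : (∫ s in Set.Ioi a, g s)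
      = (∫ s in Set.Ioc a Y, g s) + ∫ s in Set.Ioi Y, g s := by
    rw [← h1]
    exact setIntegral_union (Set.Ioc_disjoint_Ioi le_rfl) measurableSet_Ioi
      (hg.mono_set (by rw [← h1]; exact Set.subset_union_left))
      (hg.mono_set (by rw [← h1]; exact Set.subset_union_right))
  rw [intervalIntegral.integral_of_le hY.le]
  linarith

lemma logL_bound {L : ℝ → ℝ} {s₀ : ℝ}
    (hLpos : ∀ s > s₀, 0 < L s)
    (hLdiff : ∀ s > s₀, HasDerivAt L (deriv L s) s)
    (hL : Tendsto (fun s => s * deriv L s / L s) atTop (𝓝 0)) :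
    ∀ ε > (0:ℝ), ∀ᶠ X in atTop, |Real.log (L X)| ≤ ε * Real.log X := by
  intro ε hε
  have h1 : ∀ᶠ s in atTop, |s * deriv L s / L s| ≤ ε/2 := by
    have := NormedAddCommGroup.tendsto_nhds_zero.mp hL (ε/2) (by positivity)
    filter_upwards [this] with s hs
    rw [Real.norm_eq_abs] at hs; exact hs.le
  obtain ⟨N, hN⟩ := eventually_atTop.mp h1
  set X₁ : ℝ := max N (max s₀ 1) + 1 with hX₁def
  have hX₁s₀ : s₀ < X₁ := by
    have : s₀ ≤ max N (max s₀ 1) := le_trans (le_max_left _ _) (le_max_right _ _)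
    linarith
  have hX₁1 : (1:ℝ) < X₁ := by
    have : (1:ℝ) ≤ max N (max s₀ 1) := le_trans (le_max_right _ _) (le_max_right _ _)
    linarith
  have hX₁N : N ≤ X₁ := by
    have : N ≤ max N (max s₀ 1) := le_max_left _ _
    linarith
  have hX₁0 : (0:ℝ) < X₁ := lt_trans one_pos hX₁1
  have hder : ∀ x > s₀, HasDerivAt (fun s => Real.log (L s)) (deriv L x / L x) x :=
    fun x hx => (hLdiff x hx).log (hLpos x hx).ne'
  have hcont : ContinuousOn (fun s => Real.log (L s)) (Set.Ici X₁) := by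
    intro s hs
    have hs' : s₀ < s := lt_of_lt_of_le hX₁s₀ hs
    exact ((hder s hs').continuousAt).continuousWithinAt
  have hkey : ∀ x ∈ interior (Set.Ici X₁),
      x * (deriv L x / L x) ≤ ε/2 ∧ -(ε/2) ≤ x * (deriv L x / L x) ∧ s₀ < x ∧ 0 < x := by
    intro x hx
    rw [interior_Ici] at hx
    have hx1 : X₁ < x := hx
    have habs := abs_le.mp (hN x (le_trans hX₁N hx1.le))
    rw [← mul_div_assoc]
    exact ⟨habs.2, habs.1, lt_trans hX₁s₀ hx1, lt_trans hX₁0 hx1⟩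
  have hanti : AntitoneOn (fun s => Real.log (L s) - ε/2 * Real.log s) (Set.Ici X₁) := by
    apply antitoneOn_of_deriv_nonpos (convex_Ici X₁)
    · exact hcont.sub ((Real.continuousOn_log.mono (by
        intro s hs; exact ne_of_gt (lt_of_lt_of_le hX₁0 hs))).const_smul (ε/2) |>.congr
        (fun s hs => by simp [smul_eq_mul]))
    · intro x hx
      obtain ⟨_, _, hx₀, hx0⟩ := hkey x hx
      exact (((hder x hx₀).sub ((Real.hasDerivAt_log hx0.ne').const_mul
        (ε/2))).differentiableAt).differentiableWithinAt
    · intro x hx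
      obtain ⟨h2, _, hx₀, hx0⟩ := hkey x hx
      rw [HasDerivAt.deriv (f := fun s => Real.log (L s) - ε / 2 * Real.log s) ((hder x hx₀).sub ((Real.hasDerivAt_log hx0.ne').const_mul (ε/2)))]
      have hxinv : x * x⁻¹ = 1 := mul_inv_cancel₀ hx0.ne'
      nlinarith [h2, hx0, hxinv]
  have hmono : MonotoneOn (fun s => Real.log (L s) + ε/2 * Real.log s) (Set.Ici X₁) := by
    apply monotoneOn_of_deriv_nonneg (convex_Ici X₁)
    · exact hcont.add ((Real.continuousOn_log.mono (by
        intro s hs; exact ne_of_gt (lt_of_lt_of_le hX₁0 hs))).const_smul (ε/2) |>.congr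
        (fun s hs => by simp [smul_eq_mul]))
    · intro x hx
      obtain ⟨_, _, hx₀, hx0⟩ := hkey x hx
      exact (((hder x hx₀).add ((Real.hasDerivAt_log hx0.ne').const_mul
        (ε/2))).differentiableAt).differentiableWithinAt
    · intro x hx
      obtain ⟨_, h2, hx₀, hx0⟩ := hkey x hx
      rw [HasDerivAt.deriv (f := fun s => Real.log (L s) + ε / 2 * Real.log s) ((hder x hx₀).add ((Real.hasDerivAt_log hx0.ne').const_mul (ε/2)))]
      have hxinv : x * x⁻¹ = 1 := mul_inv_cancel₀ hx0.ne'
      nlinarith [h2, hx0, hxinv]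
  set C : ℝ := |Real.log (L X₁)| + ε/2 * |Real.log X₁| with hCdef
  have hC : ∀ X ≥ X₁, |Real.log (L X)| ≤ ε/2 * Real.log X + C := by
    intro X hX
    have h1 := hanti (Set.self_mem_Ici) hX hX
    have h2 := hmono (Set.self_mem_Ici) hX hX
    simp only at h1 h2
    have e1 := le_abs_self (Real.log (L X₁))
    have e2 := neg_abs_le (Real.log (L X₁))
    have e3 := le_abs_self (Real.log X₁)
    have e4 := neg_abs_le (Real.log X₁)
    rw [abs_le]
    constructor <;> nlinarith [hε]
  filter_upwards [eventually_ge_atTop X₁,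
    Real.tendsto_log_atTop.eventually_ge_atTop (2*C/ε)] with X hX hlog
  have h5 := hC X hX
  have h6 : ε/2 * (2*C/ε) ≤ ε/2 * Real.log X :=
    mul_le_mul_of_nonneg_left hlog (by positivity)
  have h7 : ε/2 * (2*C/ε) = C := by field_simp
  linarith

lemma div_div_div_aux {a b k : ℝ} (hk : k ≠ 0) : (a/k)/(b/k) = a/b := by
  rcases eq_or_ne b 0 with rfl|hb
  · simp
  · field_simp

/-- **Asymptotics of `H`** (Lemma 4.2 (i), second part):
`H(X) ~ p X^{1−p} log X/((p−1) L(X))` and `H(X) ~ (p/(p−1)) G(X) |log G(X)|`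
as `X → ∞`. -/
theorem H_asymptotics
    (p : ℝ) (hp : 1 < p)
    (f L : ℝ → ℝ)
    (s₀ : ℝ) (hs₀ : 0 < s₀)
    (hf_pos : ∀ s ≥ s₀, 0 < f s)
    (hf_C1 : ContDiffOn ℝ 1 f (Set.Ici s₀))
    (hLdef : ∀ s > (0 : ℝ), L s = s ^ (-p) * f s)
    (hL : Tendsto (fun s => s * deriv L s / L s) atTop (𝓝 0))
    (hGint : ∀ X ≥ s₀, IntegrableOn (fun s => (f s)⁻¹) (Set.Ioi X))
    (A : ℝ) (hA : 0 ≤ A)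
    (hHint : ∀ X ≥ s₀, IntegrableOn (fun s => (A + Real.log (f s)) / f s) (Set.Ioi X)) :
    Tendsto (fun X => Hfun f A X * ((p - 1) * L X * X ^ (p - 1)) / (p * Real.log X))
        atTop (𝓝 1) ∧
      Tendsto (fun X => Hfun f A X * (p - 1) / (p * Gfun f X * |Real.log (Gfun f X)|))
        atTop (𝓝 1) := by
  have hp0 : (0:ℝ) < p := lt_trans one_pos hp
  have hp1 : (0:ℝ) < p - 1 := by linarith
  have hX0 : ∀ X > s₀, (0:ℝ) < X := fun X hX => lt_trans hs₀ hX
  have hLpos : ∀ X > s₀, 0 < L X := by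
    intro X hX
    rw [hLdef X (hX0 X hX)]
    exact mul_pos (Real.rpow_pos_of_pos (hX0 X hX) _) (hf_pos X hX.le)
  have hfL : ∀ X > s₀, f X = X ^ p * L X := by
    intro X hX
    rw [hLdef X (hX0 X hX), ← mul_assoc, ← Real.rpow_add (hX0 X hX), add_neg_cancel,
      Real.rpow_zero, one_mul]
  have hfdiff : ∀ X > s₀, DifferentiableAt ℝ f X := fun X hX =>
    ((hf_C1.differentiableOn one_ne_zero) X hX.le).differentiableAt (Ici_mem_nhds hX)
  have hLdiff : ∀ X > s₀, HasDerivAt L (deriv L X) X := by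
    intro X hX
    have h1 : DifferentiableAt ℝ (fun t : ℝ => t ^ (-p) * f t) X :=
      ((Real.hasDerivAt_rpow_const (p := -p) (Or.inl (hX0 X hX).ne')).differentiableAt).mul
        (hfdiff X hX)
    have h2 : L =ᶠ[𝓝 X] fun t : ℝ => t ^ (-p) * f t := by
      filter_upwards [eventually_gt_nhds (hX0 X hX)] with t ht
      exact hLdef t ht
    exact (h2.differentiableAt_iff.mpr h1).hasDerivAt
  have hlogL := logL_bound hLpos hLdiff hL
  have hlogLdiv : Tendsto (fun X => Real.log (L X) / Real.log X) atTop (𝓝 0) := by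
    rw [NormedAddCommGroup.tendsto_nhds_zero]
    intro ε hε
    filter_upwards [hlogL (ε/2) (by positivity),
      Real.tendsto_log_atTop.eventually_gt_atTop 0] with X h1 h2
    rw [Real.norm_eq_abs, abs_div, abs_of_pos h2, div_lt_iff₀ h2]
    nlinarith
  have hLlow : ∀ δ > (0:ℝ), ∀ᶠ X in atTop, X ^ (-δ) ≤ L X := by
    intro δ hδ
    filter_upwards [hlogL δ hδ, eventually_gt_atTop (max s₀ 1)] with X h1 h2
    have hXs : s₀ < X := lt_of_le_of_lt (le_max_left _ _) h2
    have hX1 : (1:ℝ) < X := lt_of_le_of_lt (le_max_right _ _) h2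
    have hx0 : (0:ℝ) < X := by linarith
    have h3 : -(δ * Real.log X) ≤ Real.log (L X) := by
      have := (abs_le.mp h1).1; linarith
    calc X ^ (-δ) = Real.exp (-(δ * Real.log X)) := by
          rw [Real.rpow_def_of_pos hx0]; congr 1; ring
    _ ≤ Real.exp (Real.log (L X)) := Real.exp_le_exp.mpr h3
    _ = L X := Real.exp_log (hLpos X hXs)
  -- tail limits
  have hHtend0 : Tendsto (Hfun f A) atTop (𝓝 0) := by
    have := tail_tendsto_zero (hHint s₀ le_rfl)
    exact this
  have hGtend0 : Tendsto (Gfun f) atTop (𝓝 0) := by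
    have := tail_tendsto_zero (hGint s₀ le_rfl)
    exact this
  -- continuity of integrands
  have hcontf : ContinuousOn f (Set.Ioi s₀) := fun x hx =>
    (hfdiff x hx).continuousAt.continuousWithinAt
  have hfne : ∀ x ∈ Set.Ioi s₀, f x ≠ 0 := fun x hx => (hf_pos x (le_of_lt hx)).ne'
  have hcontH : ContinuousOn (fun s => (A + Real.log (f s)) / f s) (Set.Ioi s₀) := by
    refine ContinuousOn.div (continuousOn_const.add ?_) hcontf hfne
    refine Real.continuousOn_log.comp hcontf ?_
    intro x hx
    simpa [Set.mem_compl_singleton_iff] using hfne x hx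
  have hcontG : ContinuousOn (fun s => (f s)⁻¹) (Set.Ioi s₀) := hcontf.inv₀ hfne
  -- derivatives of H and G
  have hH' : ∀ᶠ X in atTop, HasDerivAt (Hfun f A) (-((A + Real.log (f X)) / f X)) X := by
    filter_upwards [eventually_gt_atTop s₀] with X hX
    have := tail_hasDerivAt (hHint s₀ le_rfl) hX (hcontH.continuousAt (Ioi_mem_nhds hX))
      (hcontH.stronglyMeasurableAtFilter isOpen_Ioi X hX)
    exact this
  have hG' : ∀ᶠ X in atTop, HasDerivAt (Gfun f) (-(f X)⁻¹) X := by
    filter_upwards [eventually_gt_atTop s₀] with X hX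
    have := tail_hasDerivAt (hGint s₀ le_rfl) hX (hcontG.continuousAt (Ioi_mem_nhds hX))
      (hcontG.stronglyMeasurableAtFilter isOpen_Ioi X hX)
    exact this
  -- positivity of G
  have hGpos : ∀ᶠ X in atTop, 0 < Gfun f X := by
    filter_upwards [eventually_ge_atTop s₀] with X hX
    rw [Gfun, setIntegral_pos_iff_support_of_nonneg_ae]
    · refine lt_of_lt_of_le ?_ (measure_mono (s := Set.Ioi X) ?_)
      · simp [Real.volume_Ioi]
      · intro s hs
        refine ⟨?_, hs⟩
        simp only [Function.mem_support]
        exact inv_ne_zero (hf_pos s (le_trans hX (le_of_lt hs))).ne'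
    · refine (ae_restrict_iff' measurableSet_Ioi).mpr (ae_of_all _ fun s hs => ?_)
      exact inv_nonneg.mpr (hf_pos s (le_trans hX (le_of_lt hs))).le
    · exact hGint X hX
  -- small ℓ region
  have hℓ : ∀ᶠ X in atTop, |X * deriv L X / L X| < (p-1)/2 := by
    have := NormedAddCommGroup.tendsto_nhds_zero.mp hL ((p-1)/2) (by positivity)
    filter_upwards [this] with X h; rwa [Real.norm_eq_abs] at h
  ------------------------------------------------------------------
  -- PART 1
  ------------------------------------------------------------------
  have hD₁deriv : ∀ᶠ X in atTop, HasDerivAt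
      (fun X => (p/(p-1)) * (Real.log X * (X ^ (1-p) / L X)))
      ((p/(p-1)) * (X ^ (-p) / L X) * (1 + ((1-p) - X * deriv L X / L X) * Real.log X)) X := by
    filter_upwards [eventually_gt_atTop s₀] with X hX
    have hx0 := hX0 X hX
    have h := (((Real.hasDerivAt_log hx0.ne').mul
      ((Real.hasDerivAt_rpow_const (p := 1-p) (Or.inl hx0.ne')).div (hLdiff X hX)
        (hLpos X hX).ne'))).const_mul (p/(p-1))
    convert h using 1
    · rfl
    · rfl
    · rfl
    have e1 : X ^ (1-p-1) = X ^ (-p) := by rw [show (1-p-1 : ℝ) = -p by ring]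
    have e2 : X ^ (1-p) = X * X ^ (-p) := by
      rw [show (1-p : ℝ) = 1 + -p by ring, Real.rpow_add hx0, Real.rpow_one]
    simp only [Pi.div_apply]
    rw [e1, e2]
    field_simp [hx0.ne', (hLpos X hX).ne', sub_ne_zero.mpr hp.ne']
  have hden : ∀ᶠ X in atTop, (1 + ((1-p) - X * deriv L X / L X) * Real.log X) < 0 := by
    filter_upwards [hℓ, Real.tendsto_log_atTop.eventually_ge_atTop (4/(p-1))] with X h1 h2
    have h3 := (abs_lt.mp h1).1
    have h4 : (0:ℝ) < Real.log X := lt_of_lt_of_le (by positivity) h2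
    have h5 : ((1-p) - X * deriv L X / L X) * Real.log X ≤ ((1-p)/2) * Real.log X := by
      have : ((1-p) - X * deriv L X / L X) ≤ (1-p)/2 := by linarith
      exact mul_le_mul_of_nonneg_right this h4.le
    have h6 : ((1-p)/2) * Real.log X ≤ ((1-p)/2) * (4/(p-1)) := by
      apply mul_le_mul_of_nonpos_left h2
      linarith
    have h7 : ((1-p)/2) * (4/(p-1)) = -2 := by field_simp; ring
    linarith
  have hD₁'ne : ∀ᶠ X in atTop,
      (p/(p-1)) * (X ^ (-p) / L X) * (1 + ((1-p) - X * deriv L X / L X) * Real.log X) ≠ 0 := by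
    filter_upwards [hden, eventually_gt_atTop s₀] with X h1 h2
    exact (mul_neg_of_pos_of_neg (mul_pos (div_pos hp0 hp1)
      (div_pos (Real.rpow_pos_of_pos (hX0 X h2) _) (hLpos X h2))) h1).ne
  have hD₁tend0 : Tendsto (fun X => (p/(p-1)) * (Real.log X * (X ^ (1-p) / L X)))
      atTop (𝓝 0) := by
    have hb : (0:ℝ) < 3*(p-1)/4 := by linarith
    have hup : Tendsto (fun X : ℝ => (p/(p-1)) * (Real.log X * X ^ (-(3*(p-1)/4))))
        atTop (𝓝 0) := by
      have h1 : Tendsto (fun X : ℝ => Real.log X / X ^ (3*(p-1)/4)) atTop (𝓝 0) :=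
        (isLittleO_log_rpow_atTop hb).tendsto_div_nhds_zero
      have h2 := h1.const_mul (p/(p-1))
      rw [mul_zero] at h2
      refine h2.congr' ?_
      filter_upwards [eventually_gt_atTop 0] with X hx0
      rw [Real.rpow_neg hx0.le]
      ring
    refine squeeze_zero' ?_ ?_ hup
    · filter_upwards [eventually_gt_atTop (max s₀ 1)] with X hX
      have hXs : s₀ < X := lt_of_le_of_lt (le_max_left _ _) hX
      have hX1 : (1:ℝ) < X := lt_of_le_of_lt (le_max_right _ _) hX
      have hx0 : (0:ℝ) < X := lt_trans hs₀ hXs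
      have := hLpos X hXs
      have := Real.log_pos hX1
      positivity
    · filter_upwards [hLlow ((p-1)/4) (by positivity), eventually_gt_atTop (max s₀ 1)]
        with X h1 hX
      have hXs : s₀ < X := lt_of_le_of_lt (le_max_left _ _) hX
      have hX1 : (1:ℝ) < X := lt_of_le_of_lt (le_max_right _ _) hX
      have hx0 : (0:ℝ) < X := lt_trans hs₀ hXs
      have hLX := hLpos X hXs
      have hkey : X ^ (1-p) / L X ≤ X ^ (-(3*(p-1)/4)) := by
        rw [div_le_iff₀ hLX]
        calc X ^ (1-p) = X ^ (-(3*(p-1)/4)) * X ^ (-((p-1)/4)) := by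
              rw [← Real.rpow_add hx0]; congr 1; ring
        _ ≤ X ^ (-(3*(p-1)/4)) * L X :=
              mul_le_mul_of_nonneg_left h1 (Real.rpow_pos_of_pos hx0 _).le
      have hlg : (0:ℝ) ≤ Real.log X := (Real.log_pos hX1).le
      have hc : (0:ℝ) ≤ p/(p-1) := (div_pos hp0 hp1).le
      exact mul_le_mul_of_nonneg_left (mul_le_mul_of_nonneg_left hkey hlg) hc
  have hratio₁ : Tendsto (fun X => (-((A + Real.log (f X)) / f X)) /
      ((p/(p-1)) * (X ^ (-p) / L X) * (1 + ((1-p) - X * deriv L X / L X) * Real.log X)))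
      atTop (𝓝 1) := by
    have hnum : Tendsto (fun X => (-((A + Real.log (f X)) / f X)) /
        ((X ^ (-p) / L X) * Real.log X)) atTop (𝓝 (-p)) := by
      have hnum' : Tendsto (fun X => -(A / Real.log X + p + Real.log (L X) / Real.log X))
          atTop (𝓝 (-p)) := by
        have h1 : Tendsto (fun X : ℝ => A / Real.log X) atTop (𝓝 0) :=
          tendsto_const_nhds.div_atTop Real.tendsto_log_atTop
        have h2 := ((h1.add (tendsto_const_nhds : Tendsto (fun _ : ℝ => p) atTop _)).add
          hlogLdiv).neg
        simpa using h2
      refine hnum'.congr' ?_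
      filter_upwards [eventually_gt_atTop s₀, eventually_gt_atTop 1] with X hXs hX1
      have hx0 : (0:ℝ) < X := lt_trans hs₀ hXs
      have hlx : (0:ℝ) < Real.log X := Real.log_pos hX1
      have hLX := hLpos X hXs
      have hfX : f X = X ^ p * L X := hfL X hXs
      have hlogf : Real.log (f X) = p * Real.log X + Real.log (L X) := by
        rw [hfX, Real.log_mul (Real.rpow_pos_of_pos hx0 p).ne' hLX.ne', Real.log_rpow hx0]
      have hXppos := Real.rpow_pos_of_pos hx0 p
      rw [hlogf, hfX, Real.rpow_neg hx0.le]
      field_simp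
      ring
    have hdenom : Tendsto (fun X =>
        ((p/(p-1)) * (X ^ (-p) / L X) * (1 + ((1-p) - X * deriv L X / L X) * Real.log X)) /
        ((X ^ (-p) / L X) * Real.log X)) atTop (𝓝 (-p)) := by
      have hdenom' : Tendsto
          (fun X => (p/(p-1)) * ((Real.log X)⁻¹ + ((1-p) - X * deriv L X / L X)))
          atTop (𝓝 (-p)) := by
        have h2 : Tendsto (fun X : ℝ => (Real.log X)⁻¹) atTop (𝓝 0) :=
          Real.tendsto_log_atTop.inv_tendsto_atTop
        have h3 : Tendsto (fun X => ((1-p) - X * deriv L X / L X)) atTop (𝓝 (1-p)) := by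
          have := (tendsto_const_nhds : Tendsto (fun _ : ℝ => (1-p)) atTop _).sub hL
          simpa using this
        have h4 := (h2.add h3).const_mul (p/(p-1))
        have he : (p/(p-1)) * ((0:ℝ) + (1-p)) = -p := by field_simp; ring
        rwa [he] at h4
      refine hdenom'.congr' ?_
      filter_upwards [eventually_gt_atTop s₀, eventually_gt_atTop 1] with X hXs hX1
      have hx0 : (0:ℝ) < X := lt_trans hs₀ hXs
      have hlx : (0:ℝ) < Real.log X := Real.log_pos hX1
      have hLX := hLpos X hXs
      have hXppos := Real.rpow_pos_of_pos hx0 (-p)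
      field_simp
    have h := hnum.div hdenom (neg_ne_zero.mpr hp0.ne')
    rw [div_self (neg_ne_zero.mpr hp0.ne')] at h
    refine h.congr' ?_
    filter_upwards [eventually_gt_atTop s₀, eventually_gt_atTop 1] with X hXs hX1
    have hx0 : (0:ℝ) < X := lt_trans hs₀ hXs
    have hlx : (0:ℝ) < Real.log X := Real.log_pos hX1
    have hLX := hLpos X hXs
    have hXppos := Real.rpow_pos_of_pos hx0 (-p)
    exact div_div_div_aux (by positivity)
  have hlhop₁ : Tendsto
      (fun X => Hfun f A X / ((p/(p-1)) * (Real.log X * (X ^ (1-p) / L X)))) atTop (𝓝 1) :=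
    HasDerivAt.lhopital_zero_atTop hH' hD₁deriv hD₁'ne hHtend0 hD₁tend0 hratio₁
  have part1 : Tendsto
      (fun X => Hfun f A X * ((p - 1) * L X * X ^ (p - 1)) / (p * Real.log X)) atTop (𝓝 1) := by
    refine hlhop₁.congr' ?_
    filter_upwards [eventually_gt_atTop s₀, eventually_gt_atTop 1] with X hXs hX1
    have hx0 : (0:ℝ) < X := lt_trans hs₀ hXs
    have hlx : (0:ℝ) < Real.log X := Real.log_pos hX1
    have hLX := hLpos X hXs
    have hpow : X ^ (1-p) = (X ^ (p-1))⁻¹ := by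
      rw [← Real.rpow_neg hx0.le]; congr 1; ring
    have hXp1 := Real.rpow_pos_of_pos hx0 (p-1)
    rw [hpow]
    field_simp [hLX.ne', hlx.ne', hXp1.ne', sub_ne_zero.mpr hp.ne', hp0.ne']
  ------------------------------------------------------------------
  -- PART 2
  ------------------------------------------------------------------
  have hD₂deriv : ∀ᶠ X in atTop, HasDerivAt
      (fun X => (1/(p-1)) * (X ^ (1-p) / L X))
      (-((X ^ (-p) / L X) * (1 + (X * deriv L X / L X)/(p-1)))) X := by
    filter_upwards [eventually_gt_atTop s₀] with X hX
    have hx0 := hX0 X hX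
    have h := ((Real.hasDerivAt_rpow_const (p := 1-p) (Or.inl hx0.ne')).div (hLdiff X hX)
        (hLpos X hX).ne').const_mul (1/(p-1))
    convert h using 1
    · rfl
    · rfl
    · rfl
    have e1 : X ^ (1-p-1) = X ^ (-p) := by rw [show (1-p-1 : ℝ) = -p by ring]
    have e2 : X ^ (1-p) = X * X ^ (-p) := by
      rw [show (1-p : ℝ) = 1 + -p by ring, Real.rpow_add hx0, Real.rpow_one]
    rw [e1, e2]
    field_simp [hx0.ne', (hLpos X hX).ne', sub_ne_zero.mpr hp.ne']
    ring
  have hfac₂pos : ∀ᶠ X in atTop, (0:ℝ) < 1 + (X * deriv L X / L X)/(p-1) := by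
    filter_upwards [hℓ] with X h1
    have h3 := (abs_lt.mp h1).1
    have he : (X * deriv L X / L X)/(p-1) * (p-1) = X * deriv L X / L X :=
      div_mul_cancel₀ _ hp1.ne'
    nlinarith [h3, hp1, he]
  have hD₂'ne : ∀ᶠ X in atTop,
      (-((X ^ (-p) / L X) * (1 + (X * deriv L X / L X)/(p-1)))) ≠ 0 := by
    filter_upwards [hfac₂pos, eventually_gt_atTop s₀] with X h1 h2
    exact neg_ne_zero.mpr (mul_pos (div_pos (Real.rpow_pos_of_pos (hX0 X h2) _)
      (hLpos X h2)) h1).ne'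
  have hD₂tend0 : Tendsto (fun X => (1/(p-1)) * (X ^ (1-p) / L X)) atTop (𝓝 0) := by
    have hb : (0:ℝ) < 3*(p-1)/4 := by linarith
    have hup : Tendsto (fun X : ℝ => (1/(p-1)) * X ^ (-(3*(p-1)/4))) atTop (𝓝 0) := by
      have h1 := (tendsto_rpow_neg_atTop hb).const_mul (1/(p-1))
      rwa [mul_zero] at h1
    refine squeeze_zero' ?_ ?_ hup
    · filter_upwards [eventually_gt_atTop (max s₀ 1)] with X hX
      have hXs : s₀ < X := lt_of_le_of_lt (le_max_left _ _) hX
      have hx0 : (0:ℝ) < X := lt_trans hs₀ hXs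
      have := hLpos X hXs
      positivity
    · filter_upwards [hLlow ((p-1)/4) (by positivity), eventually_gt_atTop (max s₀ 1)]
        with X h1 hX
      have hXs : s₀ < X := lt_of_le_of_lt (le_max_left _ _) hX
      have hx0 : (0:ℝ) < X := lt_trans hs₀ hXs
      have hLX := hLpos X hXs
      have hkey : X ^ (1-p) / L X ≤ X ^ (-(3*(p-1)/4)) := by
        rw [div_le_iff₀ hLX]
        calc X ^ (1-p) = X ^ (-(3*(p-1)/4)) * X ^ (-((p-1)/4)) := by
              rw [← Real.rpow_add hx0]; congr 1; ring
        _ ≤ X ^ (-(3*(p-1)/4)) * L X :=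
              mul_le_mul_of_nonneg_left h1 (Real.rpow_pos_of_pos hx0 _).le
      exact mul_le_mul_of_nonneg_left hkey (by positivity)
  have hratio₂ : Tendsto (fun X => (-(f X)⁻¹) /
      (-((X ^ (-p) / L X) * (1 + (X * deriv L X / L X)/(p-1))))) atTop (𝓝 1) := by
    have hnum : Tendsto (fun X => (-(f X)⁻¹) / (X ^ (-p) / L X)) atTop (𝓝 (-1)) := by
      refine (tendsto_const_nhds : Tendsto (fun _ : ℝ => (-1:ℝ)) atTop _).congr' ?_
      filter_upwards [eventually_gt_atTop s₀] with X hXs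
      have hx0 : (0:ℝ) < X := lt_trans hs₀ hXs
      have hLX := hLpos X hXs
      have hfX : f X = X ^ p * L X := hfL X hXs
      have hXppos := Real.rpow_pos_of_pos hx0 p
      rw [hfX, Real.rpow_neg hx0.le]
      field_simp
    have hdenom : Tendsto (fun X =>
        (-((X ^ (-p) / L X) * (1 + (X * deriv L X / L X)/(p-1)))) / (X ^ (-p) / L X))
        atTop (𝓝 (-1)) := by
      have h1 : Tendsto (fun X => -(1 + (X * deriv L X / L X)/(p-1))) atTop (𝓝 (-1)) := by
        have := ((tendsto_const_nhds : Tendsto (fun _ : ℝ => (1:ℝ)) atTop _).add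
          (hL.div_const (p-1))).neg
        simpa using this
      refine h1.congr' ?_
      filter_upwards [eventually_gt_atTop s₀] with X hXs
      have hx0 : (0:ℝ) < X := lt_trans hs₀ hXs
      have hLX := hLpos X hXs
      have hXppos := Real.rpow_pos_of_pos hx0 (-p)
      have ht : X ^ (-p) / L X ≠ 0 := by positivity
      field_simp
    have h := hnum.div hdenom (by norm_num)
    rw [show ((-1:ℝ)/(-1:ℝ)) = 1 by norm_num] at h
    refine h.congr' ?_
    filter_upwards [eventually_gt_atTop s₀] with X hXs
    have hx0 : (0:ℝ) < X := lt_trans hs₀ hXs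
    have hLX := hLpos X hXs
    have hXppos := Real.rpow_pos_of_pos hx0 (-p)
    exact div_div_div_aux (by positivity)
  have hlhop₂ : Tendsto
      (fun X => Gfun f X / ((1/(p-1)) * (X ^ (1-p) / L X))) atTop (𝓝 1) :=
    HasDerivAt.lhopital_zero_atTop hG' hD₂deriv hD₂'ne hGtend0 hD₂tend0 hratio₂
  have T1' : Tendsto (fun X => Gfun f X * ((p-1) * L X * X ^ (p-1))) atTop (𝓝 1) := by
    refine hlhop₂.congr' ?_
    filter_upwards [eventually_gt_atTop s₀, eventually_gt_atTop 1] with X hXs hX1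
    have hx0 : (0:ℝ) < X := lt_trans hs₀ hXs
    have hLX := hLpos X hXs
    have hpow : X ^ (1-p) = (X ^ (p-1))⁻¹ := by
      rw [← Real.rpow_neg hx0.le]; congr 1; ring
    have hXp1 := Real.rpow_pos_of_pos hx0 (p-1)
    rw [hpow]
    field_simp [hLX.ne', hXp1.ne', sub_ne_zero.mpr hp.ne']
  have hE0 : Tendsto (fun X => Real.log (Gfun f X * ((p-1) * L X * X ^ (p-1))))
      atTop (𝓝 0) := by
    have hc := (Real.continuousAt_log one_ne_zero).tendsto.comp T1'
    simpa [Function.comp_def] using hc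
  have hlogG : Tendsto (fun X => Real.log (Gfun f X) / Real.log X) atTop (𝓝 (-(p-1))) := by
    have hcomb : Tendsto (fun X => Real.log (Gfun f X * ((p-1) * L X * X ^ (p-1))) / Real.log X
        - Real.log (p-1) / Real.log X - Real.log (L X) / Real.log X - (p-1))
        atTop (𝓝 (-(p-1))) := by
      have h1 := hE0.div_atTop Real.tendsto_log_atTop
      have h2 := (tendsto_const_nhds : Tendsto (fun _ : ℝ => Real.log (p-1)) atTop _).div_atTop
        Real.tendsto_log_atTop
      have h4 := ((h1.sub h2).sub hlogLdiv).sub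
        (tendsto_const_nhds : Tendsto (fun _ : ℝ => (p-1)) atTop _)
      simpa using h4
    refine hcomb.congr' ?_
    filter_upwards [eventually_gt_atTop s₀, eventually_gt_atTop 1, hGpos] with X hXs hX1 hG
    have hx0 : (0:ℝ) < X := lt_trans hs₀ hXs
    have hlx : (0:ℝ) < Real.log X := Real.log_pos hX1
    have hLX := hLpos X hXs
    have hXp1 := Real.rpow_pos_of_pos hx0 (p-1)
    have hexp : Real.log (Gfun f X * ((p-1) * L X * X ^ (p-1)))
        = Real.log (Gfun f X) + Real.log (p-1) + Real.log (L X) + (p-1) * Real.log X := by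
      rw [Real.log_mul hG.ne' (by positivity), Real.log_mul (by positivity) hXp1.ne',
        Real.log_mul hp1.ne' hLX.ne', Real.log_rpow hx0]
      ring
    rw [hexp]
    field_simp [hlx.ne']
    ring
  have habsG : Tendsto (fun X => |Real.log (Gfun f X)| / Real.log X) atTop (𝓝 (p-1)) := by
    have h1 := hlogG.abs
    rw [abs_neg, abs_of_pos hp1] at h1
    refine h1.congr' ?_
    filter_upwards [eventually_gt_atTop 1] with X hX1
    rw [abs_div, abs_of_pos (Real.log_pos hX1)]
  have hE2 : Tendsto (fun X => (p-1) * Real.log X / |Real.log (Gfun f X)|) atTop (𝓝 1) := by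
    have h1 := (tendsto_const_nhds : Tendsto (fun _ : ℝ => (p-1)) atTop _).div habsG hp1.ne'
    rw [div_self hp1.ne'] at h1
    refine h1.congr (fun X => ?_)
    show (p-1) / (|Real.log (Gfun f X)| / Real.log X) = _
    rw [div_div_eq_mul_div]
  have hlogGne : ∀ᶠ X in atTop, (0:ℝ) < |Real.log (Gfun f X)| := by
    have h1 := habsG.eventually (eventually_gt_nhds (show (p-1)/2 < p-1 by linarith))
    filter_upwards [h1, eventually_gt_atTop 1] with X h2 hX1
    have hlx : (0:ℝ) < Real.log X := Real.log_pos hX1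
    by_contra h
    push_neg at h
    have : |Real.log (Gfun f X)| = 0 := le_antisymm h (abs_nonneg _)
    rw [this, zero_div] at h2
    nlinarith
  have hE1 : Tendsto (fun X => (Gfun f X * ((p-1) * L X * X ^ (p-1)))⁻¹) atTop (𝓝 1) := by
    have := T1'.inv₀ one_ne_zero
    simpa using this
  have part2 : Tendsto
      (fun X => Hfun f A X * (p - 1) / (p * Gfun f X * |Real.log (Gfun f X)|))
      atTop (𝓝 1) := by
    have hmul := (part1.mul hE1).mul hE2
    rw [show ((1:ℝ) * 1 * 1) = 1 by norm_num] at hmul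
    refine hmul.congr' ?_
    filter_upwards [eventually_gt_atTop s₀, eventually_gt_atTop 1, hGpos, hlogGne]
      with X hXs hX1 hG hlG
    have hx0 : (0:ℝ) < X := lt_trans hs₀ hXs
    have hlx : (0:ℝ) < Real.log X := Real.log_pos hX1
    have hLX := hLpos X hXs
    have hXp1 := Real.rpow_pos_of_pos hx0 (p-1)
    field_simp [hLX.ne', hlx.ne', hXp1.ne', hG.ne', hlG.ne', hp0.ne', sub_ne_zero.mpr hp.ne']
  exact ⟨part1, part2⟩
end

section
/- Under the stated assumptions: (a) if ε : ℝ → ℝ satisfies lim_{X→∞} ε(X) = 0, then G((1+ε(X))·X) / G(X) → 1 as X → ∞; and (b) if ε : ℝ → ℝ satisfies lim_{Y→0⁺} ε(Y) = 0, then G⁻¹((1+ε(Y))·Y) / G⁻¹(Y) → 1 as Y → 0⁺. The same properties hold with H and H⁻¹ in place of G and G⁻¹. -/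
open MeasureTheory Filter Topology

open Set

noncomputable def Ifun (w : ℝ → ℝ) (X : ℝ) : ℝ := ∫ s in Set.Ioi X, w s

structure Nice (w : ℝ → ℝ) (s₁ K θ : ℝ) : Prop where
  hs₁ : 1 ≤ s₁
  hK : 1 ≤ K
  hθ0 : 0 ≤ θ
  hθ : θ < 1/2
  pos : ∀ s ≥ s₁, 0 < w s
  int : IntegrableOn w (Set.Ioi s₁)
  comp : ∀ s ≥ s₁, ∀ t, s ≤ t → t ≤ 2*s → w t ≤ K * w s ∧ w s ≤ K * w t
  dbl : ∀ s ≥ s₁, w (2*s) ≤ θ * w s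

namespace Nice

variable {w : ℝ → ℝ} {s₁ K θ X : ℝ} (hN : Nice w s₁ K θ)
include hN

theorem intX (hX : s₁ ≤ X) : IntegrableOn w (Set.Ioi X) :=
  hN.int.mono_set (Set.Ioi_subset_Ioi hX)

theorem split {X Y : ℝ} (hX : s₁ ≤ X) (hXY : X ≤ Y) :
    Ifun w X = (∫ s in Set.Ioc X Y, w s) + Ifun w Y := by
  rw [Ifun, Ifun, ← Set.Ioc_union_Ioi_eq_Ioi hXY,
    setIntegral_union (Set.Ioc_disjoint_Ioi le_rfl) measurableSet_Ioi
      ((hN.intX hX).mono_set Set.Ioc_subset_Ioi_self)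
      (hN.intX (hX.trans hXY))]

theorem nonneg (hX : s₁ ≤ X) : 0 ≤ Ifun w X :=
  setIntegral_nonneg measurableSet_Ioi fun s hs => (hN.pos s (hX.trans hs.le)).le

theorem chunk_le {X Y : ℝ} (hX : s₁ ≤ X) (hXY : X ≤ Y) (hY2 : Y ≤ 2*X) :
    (∫ s in Set.Ioc X Y, w s) ≤ (Y - X) * (K * w X) := by
  have h := setIntegral_mono_on ((hN.intX hX).mono_set Set.Ioc_subset_Ioi_self)
    (integrableOn_const measure_Ioc_lt_top.ne : IntegrableOn (fun _ => K * w X) (Set.Ioc X Y)) measurableSet_Ioc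
    (fun t ht => (hN.comp X hX t ht.1.le (ht.2.trans hY2)).1)
  simpa [Real.volume_Ioc, ENNReal.toReal_ofReal (sub_nonneg.2 hXY), smul_eq_mul, max_eq_left (sub_nonneg.2 hXY)] using h

theorem chunk_ge {X Y : ℝ} (hX : s₁ ≤ X) (hXY : X ≤ Y) (hY2 : Y ≤ 2*X) :
    (Y - X) * (w X / K) ≤ ∫ s in Set.Ioc X Y, w s := by
  have hK0 : (0:ℝ) < K := lt_of_lt_of_le one_pos hN.hK
  have h := setIntegral_mono_on (integrableOn_const measure_Ioc_lt_top.ne : IntegrableOn (fun _ => w X / K) (Set.Ioc X Y))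
    ((hN.intX hX).mono_set Set.Ioc_subset_Ioi_self) measurableSet_Ioc
    (fun t ht => by
      have := (hN.comp X hX t ht.1.le (ht.2.trans hY2)).2
      exact (div_le_iff₀ hK0).2 (by linarith [this]))
  simpa [Real.volume_Ioc, ENNReal.toReal_ofReal (sub_nonneg.2 hXY), smul_eq_mul, max_eq_left (sub_nonneg.2 hXY)] using h

theorem lower (hX : s₁ ≤ X) : X * (w X / K) ≤ Ifun w X := by
  have hX0 : (0:ℝ) < X := lt_of_lt_of_le one_pos hN.hs₁ |>.trans_le hX
  have h2X : X ≤ 2*X := by linarith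
  have := hN.split hX h2X
  have hge := hN.chunk_ge hX h2X le_rfl
  have hnn := hN.nonneg (hX.trans h2X)
  have : (2*X - X) = X := by ring
  nlinarith [hN.chunk_ge hX h2X le_rfl, hN.nonneg (hX.trans h2X), hN.split hX h2X]

theorem poss (hX : s₁ ≤ X) : 0 < Ifun w X := by
  have hX0 : (0:ℝ) < X := lt_of_lt_of_le one_pos hN.hs₁ |>.trans_le hX
  have hK0 : (0:ℝ) < K := lt_of_lt_of_le one_pos hN.hK
  have := hN.lower hX
  have hw := hN.pos X hX
  nlinarith [div_pos hw hK0]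

theorem tendsto_zero : Tendsto (Ifun w) atTop (𝓝 0) := by
  have h := MeasureTheory.intervalIntegral_tendsto_integral_Ioi s₁ hN.int tendsto_id
  have h2 : Tendsto (fun X => Ifun w s₁ - ∫ s in s₁..X, w s) atTop
      (𝓝 (Ifun w s₁ - ∫ s in Set.Ioi s₁, w s)) := (tendsto_const_nhds.sub h)
  rw [show Ifun w s₁ - ∫ s in Set.Ioi s₁, w s = 0 by rw [Ifun]; ring] at h2
  refine h2.congr' ?_
  filter_upwards [eventually_ge_atTop s₁] with X hX
  rw [intervalIntegral.integral_of_le hX, hN.split le_rfl hX]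
  ring

theorem dbl_pow (hX : s₁ ≤ X) : ∀ n : ℕ, w (2^n * X) ≤ θ^n * w X := by
  intro n
  induction n with
  | zero => simp
  | succ n ih =>
      have hX0 : (0:ℝ) < X := lt_of_lt_of_le one_pos hN.hs₁ |>.trans_le hX
      have h1 : (1:ℝ) ≤ 2^n := one_le_pow₀ (by norm_num)
      have hXn : s₁ ≤ 2^n * X := le_trans hX (by nlinarith)
      have := hN.dbl (2^n * X) hXn
      have h2 : (2:ℝ)^(n+1) * X = 2 * (2^n * X) := by ring
      rw [h2]
      calc w (2 * (2^n * X)) ≤ θ * w (2^n * X) := this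
        _ ≤ θ * (θ^n * w X) := by
            exact mul_le_mul_of_nonneg_left ih hN.hθ0
        _ = θ^(n+1) * w X := by ring

theorem upper (hX : s₁ ≤ X) : Ifun w X ≤ (K/(1-2*θ)) * (X * w X) := by
  have hX0 : (0:ℝ) < X := lt_of_lt_of_le one_pos hN.hs₁ |>.trans_le hX
  have hK0 : (0:ℝ) < K := lt_of_lt_of_le one_pos hN.hK
  have hθ1 : (0:ℝ) < 1 - 2*θ := by linarith [hN.hθ]
  have hw0 : 0 < w X := hN.pos X hX
  -- partial bound
  have key : ∀ n : ℕ, Ifun w X - Ifun w (2^n * X) ≤ (K * (X * w X)) * ((1-(2*θ)^n)/(1-2*θ)) := by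
    intro n
    induction n with
    | zero => norm_num
    | succ n ih =>
        have h1 : (1:ℝ) ≤ 2^n := one_le_pow₀ (by norm_num)
        have hXn : s₁ ≤ 2^n * X := le_trans hX (by nlinarith)
        have hle : (2:ℝ)^n * X ≤ 2^(n+1) * X := by
          have : (2:ℝ)^(n+1) = 2 * 2^n := by ring
          nlinarith
        have hsplit := hN.split hXn hle
        have hchunk : (∫ s in Set.Ioc (2^n*X) (2^(n+1)*X), w s)
            ≤ (2^n * X) * (K * (θ^n * w X)) := by
          have hc := hN.chunk_le hXn hle (by rw [pow_succ]; ring_nf; exact le_rfl)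
          have hd := hN.dbl_pow hX n
          calc (∫ s in Set.Ioc (2^n*X) (2^(n+1)*X), w s)
              ≤ (2^(n+1)*X - 2^n*X) * (K * w (2^n*X)) := hc
            _ = (2^n * X) * (K * w (2^n * X)) := by ring
            _ ≤ (2^n * X) * (K * (θ^n * w X)) := by
                apply mul_le_mul_of_nonneg_left _ (by positivity)
                exact mul_le_mul_of_nonneg_left hd hK0.le
        have hgoal : Ifun w X - Ifun w (2^(n+1) * X)
            = (Ifun w X - Ifun w (2^n * X)) + ∫ s in Set.Ioc (2^n*X) (2^(n+1)*X), w s := by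
          rw [hsplit]; ring
        rw [hgoal]
        have h2 : (2:ℝ)^n * X * (K * (θ^n * w X)) = (K * (X * w X)) * (2*θ)^n := by
          rw [mul_pow]; ring
        calc (Ifun w X - Ifun w (2^n * X)) + (∫ s in Set.Ioc (2^n*X) (2^(n+1)*X), w s)
            ≤ (K * (X * w X)) * ((1-(2*θ)^n)/(1-2*θ)) + (K * (X * w X)) * (2*θ)^n := by
              rw [← h2]; exact add_le_add ih hchunk
          _ = (K * (X * w X)) * ((1-(2*θ)^(n+1))/(1-2*θ)) := by
              field_simp; ring
  have hbound : ∀ n : ℕ, Ifun w X - Ifun w (2^n * X) ≤ (K/(1-2*θ)) * (X * w X) := by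
    intro n
    refine (key n).trans ?_
    have hpn : (0:ℝ) ≤ (2*θ)^n := pow_nonneg (by linarith [hN.hθ0]) n
    have hnum : (1-(2*θ)^n)/(1-2*θ) ≤ 1/(1-2*θ) := by
      rw [div_le_div_iff₀ hθ1 hθ1]; nlinarith
    calc K * (X * w X) * ((1-(2*θ)^n)/(1-2*θ)) ≤ K * (X * w X) * (1/(1-2*θ)) :=
          mul_le_mul_of_nonneg_left hnum
            (mul_nonneg hK0.le (mul_nonneg hX0.le hw0.le))
      _ = (K/(1-2*θ)) * (X * w X) := by ring
  -- take limit
  have hlim : Tendsto (fun n : ℕ => Ifun w X - Ifun w (2^n * X)) atTop (𝓝 (Ifun w X - 0)) := by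
    apply tendsto_const_nhds.sub
    apply hN.tendsto_zero.comp
    apply Tendsto.atTop_mul_const hX0
    exact tendsto_pow_atTop_atTop_of_one_lt (by norm_num : (1:ℝ) < 2)
  have := le_of_tendsto hlim (Filter.Eventually.of_forall hbound)
  linarith

theorem eta_decay {η : ℝ} (hη0 : 0 < η) (hη1 : η ≤ 1) (hX : s₁ ≤ X) :
    Ifun w ((1+η)*X) ≤ (1 - η*(1-2*θ)/K^2) * Ifun w X := by
  have hX0 : (0:ℝ) < X := lt_of_lt_of_le one_pos hN.hs₁ |>.trans_le hX
  have hK0 : (0:ℝ) < K := lt_of_lt_of_le one_pos hN.hK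
  have hθ1 : (0:ℝ) < 1 - 2*θ := by linarith [hN.hθ]
  have hw0 : 0 < w X := hN.pos X hX
  have hle : X ≤ (1+η)*X := by nlinarith
  have h2 : (1+η)*X ≤ 2*X := by nlinarith
  have hsplit := hN.split hX hle
  have hchunk := hN.chunk_ge hX hle h2
  have hup := hN.upper hX
  have hXw : X * w X ≥ (1-2*θ)/K * Ifun w X := by
    rw [ge_iff_le, div_mul_eq_mul_div, div_le_iff₀ hK0]
    calc (1-2*θ) * Ifun w X ≤ (1-2*θ) * ((K/(1-2*θ)) * (X * w X)) :=
          mul_le_mul_of_nonneg_left hup hθ1.le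
      _ = X * w X * K := by field_simp
  have harea : ((1+η)*X - X) * (w X / K) = η * (X * w X) / K := by ring
  have : Ifun w ((1+η)*X) = Ifun w X - ∫ s in Set.Ioc X ((1+η)*X), w s := by
    rw [hsplit]; ring
  rw [this]
  have : η * (X * w X) / K ≥ η * ((1-2*θ)/K * Ifun w X) / K := by
    gcongr
  have hIpos := hN.poss hX
  calc Ifun w X - (∫ s in Set.Ioc X ((1+η)*X), w s)
      ≤ Ifun w X - η * (X * w X) / K := by
        have := hchunk; rw [harea] at this; linarith
    _ ≤ Ifun w X - η * ((1-2*θ)/K * Ifun w X) / K := by linarith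
    _ = (1 - η*(1-2*θ)/K^2) * Ifun w X := by field_simp
theorem xw_le (hX : s₁ ≤ X) : X * w X ≤ K * Ifun w X := by
  have hK0 : (0:ℝ) < K := lt_of_lt_of_le one_pos hN.hK
  calc X * w X = (X * (w X / K)) * K := by field_simp
    _ ≤ Ifun w X * K := mul_le_mul_of_nonneg_right (hN.lower hX) hK0.le
    _ = K * Ifun w X := by ring

theorem ratio_bound {ε : ℝ} (hX : 2*s₁ ≤ X) (hε : |ε| ≤ 1/2) :
    |Ifun w ((1+ε)*X) / Ifun w X - 1| ≤ 2*K^3*|ε| := by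
  have hs1 : s₁ ≤ X := by linarith [hN.hs₁]
  have hX0 : (0:ℝ) < X := lt_of_lt_of_le one_pos hN.hs₁ |>.trans_le hs1
  have hK0 : (0:ℝ) < K := lt_of_lt_of_le one_pos hN.hK
  have hK1 : (1:ℝ) ≤ K := hN.hK
  have hI := hN.poss hs1
  have habs := abs_le.1 hε
  have h4 := hN.xw_le hs1
  have h6 : (0:ℝ) ≤ 2*K^3*|ε| := by positivity
  rcases le_or_gt 0 ε with h0 | h0
  · -- Y ∈ [X, 2X]
    have hle : X ≤ (1+ε)*X := by nlinarith
    have h2 : (1+ε)*X ≤ 2*X := by nlinarith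
    have hsplit := hN.split hs1 hle
    have hchunk := hN.chunk_le hs1 hle h2
    have h1 : Ifun w X - Ifun w ((1+ε)*X) = ∫ s in Set.Ioc X ((1+ε)*X), w s := by
      rw [hsplit]; ring
    have hD : Ifun w X - Ifun w ((1+ε)*X) ≤ ε * K^2 * Ifun w X := by
      calc Ifun w X - Ifun w ((1+ε)*X) = ∫ s in Set.Ioc X ((1+ε)*X), w s := h1
        _ ≤ ((1+ε)*X - X) * (K * w X) := hchunk
        _ = ε * K * (X * w X) := by ring
        _ ≤ ε * K * (K * Ifun w X) :=
            mul_le_mul_of_nonneg_left h4 (mul_nonneg h0 hK0.le)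
        _ = ε * K^2 * Ifun w X := by ring
    have hD0 : 0 ≤ Ifun w X - Ifun w ((1+ε)*X) := by
      have hch0 : 0 ≤ ∫ s in Set.Ioc X ((1+ε)*X), w s :=
        setIntegral_nonneg measurableSet_Ioc fun t ht => (hN.pos t (hs1.trans ht.1.le)).le
      rw [hsplit]; linarith
    rw [abs_le]
    constructor
    · have hr : Ifun w ((1+ε)*X) / Ifun w X ≥ 1 - ε*K^2 := by
        rw [ge_iff_le, le_div_iff₀ hI]; nlinarith
      have hK2 : 2*K^3*|ε| ≥ ε*K^2 := by
        rw [abs_of_nonneg h0]; nlinarith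
      linarith
    · have hr : Ifun w ((1+ε)*X) / Ifun w X ≤ 1 := by
        rw [div_le_one hI]; linarith
      linarith
  · -- Y ∈ [X/2, X)
    have hY1 : s₁ ≤ (1+ε)*X := by nlinarith
    have hle : (1+ε)*X ≤ X := by nlinarith
    have h2 : X ≤ 2*((1+ε)*X) := by nlinarith
    have hsplit := hN.split hY1 hle
    have hchunk := hN.chunk_le hY1 hle h2
    have hcomp := hN.comp ((1+ε)*X) hY1 X hle h2
    have hwY : w ((1+ε)*X) ≤ K * w X := hcomp.2
    have h1 : Ifun w ((1+ε)*X) - Ifun w X = ∫ s in Set.Ioc ((1+ε)*X) X, w s := by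
      rw [hsplit]; ring
    have hεX : (0:ℝ) ≤ (-ε)*X := by nlinarith
    have hD : Ifun w ((1+ε)*X) - Ifun w X ≤ (-ε) * K^3 * Ifun w X := by
      calc Ifun w ((1+ε)*X) - Ifun w X = ∫ s in Set.Ioc ((1+ε)*X) X, w s := h1
        _ ≤ (X - (1+ε)*X) * (K * w ((1+ε)*X)) := hchunk
        _ = ((-ε)*X) * (K * w ((1+ε)*X)) := by ring
        _ ≤ ((-ε)*X) * (K * (K * w X)) := by
            apply mul_le_mul_of_nonneg_left _ hεX
            exact mul_le_mul_of_nonneg_left hwY hK0.le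
        _ = ((-ε) * K^2) * (X * w X) := by ring
        _ ≤ ((-ε) * K^2) * (K * Ifun w X) := by
            apply mul_le_mul_of_nonneg_left h4
            nlinarith
        _ = (-ε) * K^3 * Ifun w X := by ring
    have hD0 : 0 ≤ Ifun w ((1+ε)*X) - Ifun w X := by
      have hch0 : 0 ≤ ∫ s in Set.Ioc ((1+ε)*X) X, w s :=
        setIntegral_nonneg measurableSet_Ioc fun t ht => (hN.pos t (hY1.trans ht.1.le)).le
      rw [hsplit]; linarith
    rw [abs_le]
    have hKe : (-ε) * K^3 ≤ 2*K^3*|ε| := by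
      rw [abs_of_neg h0]; nlinarith
    constructor
    · have hr : Ifun w ((1+ε)*X) / Ifun w X ≥ 1 := by
        rw [ge_iff_le, le_div_iff₀ hI]; linarith
      linarith
    · have hr : Ifun w ((1+ε)*X) / Ifun w X ≤ 1 + (-ε)*K^3 := by
        rw [div_le_iff₀ hI]; nlinarith
      linarith

theorem forward {e : ℝ → ℝ} (he : Tendsto e atTop (𝓝 0)) :
    Tendsto (fun X => Ifun w ((1 + e X) * X) / Ifun w X) atTop (𝓝 1) := by
  have h0 : Tendsto (fun X => Ifun w ((1 + e X) * X) / Ifun w X - 1) atTop (𝓝 0) := by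
    apply squeeze_zero_norm' (a := fun X => 2*K^3*|e X|) ?_ ?_
    · filter_upwards [eventually_ge_atTop (2*s₁),
        he.eventually (eventually_abs_sub_lt 0 (by norm_num : (0:ℝ) < 1/2))] with X h1 h2
      simp only [sub_zero] at h2
      simpa using hN.ratio_bound h1 h2.le
    · have habs : Tendsto (fun X => |e X|) atTop (𝓝 0) := by
        simpa using he.abs
      simpa using habs.const_mul (2*K^3)
  have := h0.add_const 1
  simpa using this
theorem contOn {b : ℝ} (hbint : IntegrableOn w (Set.Ioi b)) :
    ContinuousOn (Ifun w) (Set.Ici b) := by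
  set w' : ℝ → ℝ := (Set.Ioi b).indicator w with hw'
  have hw'int : Integrable w' := by
    rw [hw', integrable_indicator_iff measurableSet_Ioi]
    exact hbint
  have hcont : Continuous fun X => (∫ s in Set.Ioi b, w' s) - ∫ t in b..X, w' t :=
    continuous_const.sub (hw'int.continuous_primitive b)
  apply hcont.continuousOn.congr
  intro X hX
  have hXb : b ≤ X := hX
  have h1 : Ifun w X = ∫ s in Set.Ioi X, w' s := by
    rw [Ifun]
    apply setIntegral_congr_fun measurableSet_Ioi
    intro t ht
    rw [hw', Set.indicator_of_mem (Set.mem_of_mem_of_subset ht (Set.Ioi_subset_Ioi hXb))]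
  have h2 : (∫ s in Set.Ioi b, w' s) = (∫ t in Set.Ioc b X, w' t) + ∫ s in Set.Ioi X, w' s := by
    rw [← Set.Ioc_union_Ioi_eq_Ioi hXb,
      setIntegral_union (Set.Ioc_disjoint_Ioi le_rfl) measurableSet_Ioi
        (hw'int.integrableOn.mono_set (Set.subset_univ _))
        (hw'int.integrableOn.mono_set (Set.subset_univ _))]
  show Ifun w X = (∫ s in Set.Ioi b, w' s) - ∫ t in b..X, w' t
  rw [h1, h2, intervalIntegral.integral_of_le hXb]
  ring

theorem inv_props {b : ℝ} {Φ : ℝ → ℝ} (hbs : b ≤ s₁)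
    (hbint : IntegrableOn w (Set.Ioi b))
    (hanti : StrictAntiOn (Ifun w) (Set.Ici b))
    (hΦ1 : ∀ X ≥ b, Φ (Ifun w X) = X) :
    ∀ Y, 0 < Y → Y ≤ Ifun w b → (b ≤ Φ Y ∧ Ifun w (Φ Y) = Y) := by
  intro Y hY0 hYb
  obtain ⟨T, hT⟩ := ((hN.tendsto_zero.eventually (eventually_lt_nhds hY0)).and
    (eventually_ge_atTop b)).exists
  have hcont := (hN.contOn hbint).mono (Set.Icc_subset_Ici_self : Set.Icc b T ⊆ Set.Ici b)
  have hmem : Y ∈ Set.Icc (Ifun w T) (Ifun w b) := ⟨hT.1.le, hYb⟩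
  obtain ⟨X, hXmem, hXval⟩ := intermediate_value_Icc' hT.2 hcont hmem
  have hXb : b ≤ X := hXmem.1
  have : Φ Y = X := by rw [← hXval, hΦ1 X hXb]
  rw [this, hXval]
  exact ⟨hXb, rfl⟩

set_option maxHeartbeats 1200000 in
theorem inverse {b : ℝ} {Φ : ℝ → ℝ} (hbs : b ≤ s₁)
    (hbint : IntegrableOn w (Set.Ioi b))
    (hanti : StrictAntiOn (Ifun w) (Set.Ici b))
    (hΦ1 : ∀ X ≥ b, Φ (Ifun w X) = X)
    {e : ℝ → ℝ} (he : Tendsto e (𝓝[>] (0:ℝ)) (𝓝 0)) :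
    Tendsto (fun Y => Φ ((1 + e Y) * Y) / Φ Y) (𝓝[>] (0:ℝ)) (𝓝 1) := by
  have hK0 : (0:ℝ) < K := lt_of_lt_of_le one_pos hN.hK
  have hθ1 : (0:ℝ) < 1 - 2*θ := by linarith [hN.hθ]
  have hIs₁ : 0 < Ifun w s₁ := hN.poss le_rfl
  have hIb : Ifun w s₁ ≤ Ifun w b := by
    rcases eq_or_lt_of_le hbs with h | h
    · rw [h]
    · exact (hanti (Set.self_mem_Ici) (Set.mem_Ici.2 hbs) h).le
  -- key step: for each η ∈ (0,1], eventually ratio ∈ [1/(1+η), 1+η]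
  have key : ∀ η : ℝ, 0 < η → η ≤ 1 →
      ∀ᶠ Y in 𝓝[>] (0:ℝ), Φ ((1 + e Y) * Y) / Φ Y ∈ Set.Icc (1/(1+η)) (1+η) := by
    intro η hη0 hη1
    obtain ⟨ρ, hρdef⟩ : ∃ ρ : ℝ, ρ = 1 - η*(1-2*θ)/K^2 := ⟨_, rfl⟩
    have hρ1 : ρ < 1 := by
      have : 0 < η*(1-2*θ)/K^2 := by positivity
      rw [hρdef]; linarith
    have hρ0 : 0 ≤ ρ := by
      rw [hρdef]
      have h1 : η*(1-2*θ) ≤ 1 := by nlinarith [hN.hθ0]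
      have h2 : 1 ≤ K^2 := by nlinarith [hN.hK]
      have : η*(1-2*θ)/K^2 ≤ 1 := by
        rw [div_le_one (by positivity)]; linarith
      linarith
    obtain ⟨ε₀, hε₀def⟩ : ∃ x : ℝ, x = (1-ρ)/2 := ⟨_, rfl⟩
    have hε₀0 : 0 < ε₀ := by rw [hε₀def]; linarith
    have hε₀half : ε₀ ≤ 1/2 := by rw [hε₀def]; linarith
    have hsmall : Set.Ioo (0:ℝ) (2/3 * Ifun w s₁) ∈ 𝓝[>] (0:ℝ) :=
      Ioo_mem_nhdsGT_of_mem ⟨le_rfl, by positivity⟩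
    filter_upwards [hsmall, he.eventually (eventually_abs_sub_lt 0 hε₀0),
      self_mem_nhdsWithin] with Y hYs hYe (hY0 : 0 < Y)
    simp only [sub_zero] at hYe
    obtain ⟨ε, hεdef⟩ : ∃ x : ℝ, x = e Y := ⟨_, rfl⟩
    rw [← hεdef] at hYe ⊢
    have hεb := abs_lt.1 hYe
    have hY'0 : 0 < (1+ε)*Y := by nlinarith
    have hY'le : (1+ε)*Y ≤ (3/2)*Y := by nlinarith
    have hYI : Y ≤ Ifun w s₁ := by
      rcases hYs with ⟨_, h⟩; nlinarith
    have hY'I : (1+ε)*Y ≤ Ifun w s₁ := by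
      rcases hYs with ⟨_, h⟩; nlinarith
    have hYb : Y ≤ Ifun w b := hYI.trans hIb
    have hY'b : (1+ε)*Y ≤ Ifun w b := hY'I.trans hIb
    obtain ⟨hXb, hXv⟩ := hN.inv_props hbs hbint hanti hΦ1 Y hY0 hYb
    obtain ⟨hX'b, hX'v⟩ := hN.inv_props hbs hbint hanti hΦ1 ((1+ε)*Y) hY'0 hY'b
    set X := Φ Y with hXdef
    set X' := Φ ((1+ε)*Y) with hX'def
    -- X, X' ≥ s₁
    have hXs : s₁ ≤ X := by
      by_contra hc
      push_neg at hc
      have := hanti (Set.mem_Ici.2 hXb) (Set.mem_Ici.2 hbs) hc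
      rw [hXv] at this
      linarith
    have hX's : s₁ ≤ X' := by
      by_contra hc
      push_neg at hc
      have := hanti (Set.mem_Ici.2 hX'b) (Set.mem_Ici.2 hbs) hc
      rw [hX'v] at this
      linarith
    have hX0 : (0:ℝ) < X := lt_of_lt_of_le one_pos (hN.hs₁.trans hXs)
    have hX'0 : (0:ℝ) < X' := lt_of_lt_of_le one_pos (hN.hs₁.trans hX's)
    -- upper bound X' ≤ (1+η) X
    have hup : X' ≤ (1+η)*X := by
      by_contra hc
      push_neg at hc
      have h1 : Ifun w X' < Ifun w ((1+η)*X) := by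
        apply hanti _ _ hc
        · exact Set.mem_Ici.2 (le_trans hbs (by nlinarith [hN.hs₁]))
        · exact Set.mem_Ici.2 hX'b
      have h2 : Ifun w ((1+η)*X) ≤ ρ * Ifun w X := by
        rw [hρdef]; exact hN.eta_decay hη0 hη1 hXs
      have hlt : (1+ε)*Y < ρ * Y := by
        rw [← hX'v]
        calc Ifun w X' < Ifun w ((1+η)*X) := h1
          _ ≤ ρ * Ifun w X := h2
          _ = ρ * Y := by rw [hXv]
      have hfac : 0 < 1+ε-ρ := by
        rw [hε₀def] at hεb
        linarith [hεb.1]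
      nlinarith [mul_pos hfac hY0]
    have hlo : X ≤ (1+η)*X' := by
      by_contra hc
      push_neg at hc
      have h1 : Ifun w X < Ifun w ((1+η)*X') := by
        apply hanti _ _ hc
        · exact Set.mem_Ici.2 (le_trans hbs (by nlinarith [hN.hs₁]))
        · exact Set.mem_Ici.2 hXb
      have h2 : Ifun w ((1+η)*X') ≤ ρ * Ifun w X' := by
        rw [hρdef]; exact hN.eta_decay hη0 hη1 hX's
      have hlt : Y < ρ * ((1+ε)*Y) := by
        calc Y = Ifun w X := hXv.symm
          _ < Ifun w ((1+η)*X') := h1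
          _ ≤ ρ * Ifun w X' := h2
          _ = ρ * ((1+ε)*Y) := by rw [hX'v]
      have hfac : ρ*(1+ε) < 1 := by
        rw [hε₀def] at hεb
        nlinarith [hεb.2]
      have := mul_lt_mul_of_pos_right hfac hY0
      rw [one_mul] at this
      nlinarith
    constructor
    · rw [div_le_div_iff₀ (by positivity) hX0, one_mul]
      linarith
    · rw [div_le_iff₀ hX0]
      linarith
  -- conclude tendsto
  rw [Metric.tendsto_nhds]
  intro γ hγ0
  have hη0 : 0 < min (γ/2) 1 := by positivity
  have hη1 : min (γ/2) 1 ≤ 1 := min_le_right _ _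
  filter_upwards [key _ hη0 hη1] with Y hY
  rw [Real.dist_eq, abs_lt]
  have h1 := hY.1
  have h2 := hY.2
  have hmin : min (γ/2) 1 ≤ γ/2 := min_le_left _ _
  have hd : 1/(1+min (γ/2) 1) ≥ 1 - min (γ/2) 1 := by
    rw [ge_iff_le, le_div_iff₀ (by linarith)]
    nlinarith
  constructor <;> nlinarith

end Nice

set_option maxHeartbeats 1600000 in
/-- **Uniform quotient limits for `G, G⁻¹, H, H⁻¹`** (Lemma 4.2 (ii)):
if `ε(X) → 0` as `X → ∞` then `G((1+ε(X))X)/G(X) → 1`, and if `ε(Y) → 0` as `Y → 0⁺`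
then `G⁻¹((1+ε(Y))Y)/G⁻¹(Y) → 1`; similarly for `H` and `H⁻¹`. -/
theorem GH_quotient_limits
    (p : ℝ) (hp : 1 < p)
    (f L : ℝ → ℝ)
    (s₀ : ℝ) (hs₀ : 0 < s₀)
    (hf_pos : ∀ s ≥ s₀, 0 < f s)
    (hf_C1 : ContDiffOn ℝ 1 f (Set.Ici s₀))
    (hLdef : ∀ s > (0 : ℝ), L s = s ^ (-p) * f s)
    (hL : Tendsto (fun s => s * deriv L s / L s) atTop (𝓝 0))
    (hGint : ∀ X ≥ s₀, IntegrableOn (fun s => (f s)⁻¹) (Set.Ioi X))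
    (A : ℝ) (hA : 0 ≤ A)
    (hHint : ∀ X ≥ s₀, IntegrableOn (fun s => (A + Real.log (f s)) / f s) (Set.Ioi X))
    (b : ℝ) (hb : s₀ ≤ b)
    (hGanti : StrictAntiOn (Gfun f) (Set.Ici b))
    (hHanti : StrictAntiOn (Hfun f A) (Set.Ici b))
    (Ginv Hinv : ℝ → ℝ)
    (hGinv1 : ∀ X ≥ b, Ginv (Gfun f X) = X)
    (hGinv2 : ∀ Y ∈ Set.Ioc 0 (Gfun f b), Gfun f (Ginv Y) = Y)
    (hHinv1 : ∀ X ≥ b, Hinv (Hfun f A X) = X)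
    (hHinv2 : ∀ Y ∈ Set.Ioc 0 (Hfun f A b), Hfun f A (Hinv Y) = Y) :
    (∀ e : ℝ → ℝ, Tendsto e atTop (𝓝 0) →
      Tendsto (fun X => Gfun f ((1 + e X) * X) / Gfun f X) atTop (𝓝 1)) ∧
    (∀ e : ℝ → ℝ, Tendsto e (𝓝[>] (0 : ℝ)) (𝓝 0) →
      Tendsto (fun Y => Ginv ((1 + e Y) * Y) / Ginv Y) (𝓝[>] (0 : ℝ)) (𝓝 1)) ∧
    (∀ e : ℝ → ℝ, Tendsto e atTop (𝓝 0) →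
      Tendsto (fun X => Hfun f A ((1 + e X) * X) / Hfun f A X) atTop (𝓝 1)) ∧
    (∀ e : ℝ → ℝ, Tendsto e (𝓝[>] (0 : ℝ)) (𝓝 0) →
      Tendsto (fun Y => Hinv ((1 + e Y) * Y) / Hinv Y) (𝓝[>] (0 : ℝ)) (𝓝 1)) := by
  have hδ : (0:ℝ) < (p-1)/2 := by linarith
  -- threshold for the derivative bound
  obtain ⟨u₀, hu₀⟩ := Filter.eventually_atTop.1
    (NormedAddCommGroup.tendsto_nhds_zero.mp hL ((p-1)/2) hδ)
  obtain ⟨s₁, hs₁def⟩ : ∃ x : ℝ, x = max u₀ (s₀ + 1) := ⟨_, rfl⟩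
  have hs₁u : u₀ ≤ s₁ := hs₁def ▸ le_max_left _ _
  have hs₁s₀ : s₀ < s₁ := by
    rw [hs₁def]; have := le_max_right u₀ (s₀+1); linarith
  have hs₁1 : (1:ℝ) ≤ s₁ := by
    rw [hs₁def]; have := le_max_right u₀ (s₀+1); linarith
  have hs₁0 : (0:ℝ) < s₁ := by linarith
  -- differentiability
  have hfdiff : ∀ u, s₀ < u → DifferentiableAt ℝ f u := by
    intro u hu
    exact (hf_C1.contDiffAt (Ici_mem_nhds hu)).differentiableAt one_ne_zero
  have hLpos : ∀ u, s₀ ≤ u → 0 < L u := by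
    intro u hu
    have h0 : 0 < u := lt_of_lt_of_le hs₀ hu
    rw [hLdef u h0]
    exact mul_pos (Real.rpow_pos_of_pos h0 _) (hf_pos u hu)
  have hLdiff : ∀ u, s₀ < u → DifferentiableAt ℝ L u := by
    intro u hu
    have h0 : 0 < u := hs₀.trans hu
    have h1 : DifferentiableAt ℝ (fun s : ℝ => s ^ (-p) * f s) u :=
      ((Real.hasDerivAt_rpow_const (p := -p) (Or.inl h0.ne')).differentiableAt).mul
        (hfdiff u hu)
    apply h1.congr_of_eventuallyEq
    filter_upwards [Ioi_mem_nhds h0] with s hs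
    exact hLdef s hs
  -- key slow-variation estimate
  have hlog : ∀ s, s₁ ≤ s → ∀ t, s ≤ t →
      |Real.log (L t) - Real.log (L s)| ≤ (p-1)/2 * (Real.log t - Real.log s) := by
    intro s hs t hts
    have hs0 : (0:ℝ) < s := lt_of_lt_of_le (by linarith) hs
    have ht0 : (0:ℝ) < t := lt_of_lt_of_le hs0 hts
    have hlogle : Real.log s ≤ Real.log t := Real.log_le_log hs0 hts
    set φ : ℝ → ℝ := fun x => Real.log (L (Real.exp x)) with hφdef
    set φ' : ℝ → ℝ := fun x => (L (Real.exp x))⁻¹ * (deriv L (Real.exp x) * Real.exp x)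
      with hφ'def
    have hder : ∀ x ∈ Set.Icc (Real.log s) (Real.log t),
        HasDerivWithinAt φ (φ' x) (Set.Icc (Real.log s) (Real.log t)) x := by
      intro x hx
      have hex : s₁ ≤ Real.exp x := by
        calc s₁ ≤ s := hs
          _ = Real.exp (Real.log s) := (Real.exp_log hs0).symm
          _ ≤ Real.exp x := Real.exp_le_exp.2 hx.1
      have hexs₀ : s₀ < Real.exp x := lt_of_lt_of_le hs₁s₀ hex
      have h1 : HasDerivAt Real.exp (Real.exp x) x := Real.hasDerivAt_exp x
      have h2 : HasDerivAt L (deriv L (Real.exp x)) (Real.exp x) :=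
        (hLdiff _ hexs₀).hasDerivAt
      have h3 : HasDerivAt (fun y => L (Real.exp y)) (deriv L (Real.exp x) * Real.exp x) x :=
        h2.comp x h1
      have h4 : HasDerivAt Real.log (L (Real.exp x))⁻¹ (L (Real.exp x)) :=
        Real.hasDerivAt_log (hLpos _ hexs₀.le).ne'
      have h5 : HasDerivAt φ ((L (Real.exp x))⁻¹ * (deriv L (Real.exp x) * Real.exp x)) x :=
        by have h6 := h4.comp x h3; exact h6
      exact h5.hasDerivWithinAt
    have hbound : ∀ x ∈ Set.Ico (Real.log s) (Real.log t), ‖φ' x‖ ≤ (p-1)/2 := by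
      intro x hx
      have hex : s₁ ≤ Real.exp x := by
        calc s₁ ≤ s := hs
          _ = Real.exp (Real.log s) := (Real.exp_log hs0).symm
          _ ≤ Real.exp x := Real.exp_le_exp.2 hx.1
      have := hu₀ (Real.exp x) (le_trans hs₁u hex)
      simp only [hφ'def]
      have heq : (L (Real.exp x))⁻¹ * (deriv L (Real.exp x) * Real.exp x)
          = Real.exp x * deriv L (Real.exp x) / L (Real.exp x) := by ring
      rw [heq]
      simpa using this.le
    have hmv := norm_image_sub_le_of_norm_deriv_le_segment' hder hbound
      (Real.log t) (right_mem_Icc.2 hlogle)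
    have hφs : φ (Real.log s) = Real.log (L s) := by
      rw [hφdef]; simp [Real.exp_log hs0]
    have hφt : φ (Real.log t) = Real.log (L t) := by
      rw [hφdef]; simp [Real.exp_log ht0]
    rw [hφs, hφt] at hmv
    simpa using hmv
  -- positivity and product form of f
  have hfpos₁ : ∀ s, s₁ ≤ s → 0 < f s := fun s hs => hf_pos s (by linarith)
  have hfprod : ∀ u, s₁ ≤ u → Real.log (f u) = p * Real.log u + Real.log (L u) := by
    intro u hu
    have h0 : (0:ℝ) < u := lt_of_lt_of_le hs₁0 hu
    have : f u = u ^ p * L u := by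
      rw [hLdef u h0, ← mul_assoc, ← Real.rpow_add h0]
      simp
    rw [this, Real.log_mul (by positivity) (hLpos u (by linarith)).ne',
      Real.log_rpow h0]
  have hflog : ∀ s, s₁ ≤ s → ∀ t, s ≤ t →
      (p+1)/2 * (Real.log t - Real.log s) ≤ Real.log (f t) - Real.log (f s) ∧
      Real.log (f t) - Real.log (f s) ≤ (3*p-1)/2 * (Real.log t - Real.log s) := by
    intro s hs t hts
    have hs0 : (0:ℝ) < s := lt_of_lt_of_le hs₁0 hs
    have habs := abs_le.1 (hlog s hs t hts)
    rw [hfprod s hs, hfprod t (hs.trans hts)]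
    constructor <;> nlinarith [habs.1, habs.2]
  -- monotonicity and comparability of f
  have hmono : ∀ s, s₁ ≤ s → ∀ t, s ≤ t → f s ≤ f t := by
    intro s hs t hts
    have hs0 : (0:ℝ) < s := lt_of_lt_of_le hs₁0 hs
    have ht0 : (0:ℝ) < t := lt_of_lt_of_le hs0 hts
    have h1 := (hflog s hs t hts).1
    have h2 : Real.log s ≤ Real.log t := Real.log_le_log hs0 hts
    have : Real.log (f s) ≤ Real.log (f t) := by nlinarith
    exact (Real.log_le_log_iff (hfpos₁ s hs) (hfpos₁ t (hs.trans hts))).1 this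
  obtain ⟨KG, hKGdef⟩ : ∃ x : ℝ, x = Real.exp ((3*p-1)/2 * Real.log 2) := ⟨_, rfl⟩
  have hKG1 : (1:ℝ) ≤ KG := by
    have h := Real.exp_le_exp.2 (mul_nonneg (show (0:ℝ) ≤ (3*p-1)/2 by linarith)
      (Real.log_nonneg (by norm_num : (1:ℝ) ≤ 2)))
    rw [Real.exp_zero] at h
    rw [hKGdef]
    exact h
  have hratio : ∀ s, s₁ ≤ s → ∀ t, s ≤ t → t ≤ 2*s → f t ≤ KG * f s := by
    intro s hs t hts ht2
    have hs0 : (0:ℝ) < s := lt_of_lt_of_le hs₁0 hs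
    have ht0 : (0:ℝ) < t := lt_of_lt_of_le hs0 hts
    have h1 := (hflog s hs t hts).2
    have h2 : Real.log t ≤ Real.log 2 + Real.log s := by
      rw [← Real.log_mul (by norm_num) hs0.ne']
      exact Real.log_le_log ht0 ht2
    have hQpos : (0:ℝ) ≤ (3*p-1)/2 := by linarith
    have h3 : Real.log (f t) ≤ Real.log (f s) + (3*p-1)/2 * Real.log 2 := by nlinarith
    calc f t = Real.exp (Real.log (f t)) := (Real.exp_log (hfpos₁ t (hs.trans hts))).symm
      _ ≤ Real.exp (Real.log (f s) + (3*p-1)/2 * Real.log 2) := Real.exp_le_exp.2 h3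
      _ = KG * f s := by
          rw [Real.exp_add, Real.exp_log (hfpos₁ s hs), hKGdef]; ring
  obtain ⟨m, hmdef⟩ : ∃ x : ℝ, x = Real.exp ((p+1)/2 * Real.log 2) := ⟨_, rfl⟩
  have hm2 : (2:ℝ) < m := by
    rw [hmdef]
    calc (2:ℝ) = Real.exp (Real.log 2) := (Real.exp_log (by norm_num)).symm
      _ < Real.exp ((p+1)/2 * Real.log 2) := by
          apply Real.exp_lt_exp.2
          have := Real.log_pos (by norm_num : (1:ℝ) < 2)
          nlinarith
  have hdbl : ∀ s, s₁ ≤ s → m * f s ≤ f (2*s) := by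
    intro s hs
    have hs0 : (0:ℝ) < s := lt_of_lt_of_le hs₁0 hs
    have h2s : s ≤ 2*s := by linarith
    have h1 := (hflog s hs (2*s) h2s).1
    have h2 : Real.log (2*s) = Real.log 2 + Real.log s := Real.log_mul (by norm_num) hs0.ne'
    have h3 : Real.log (f s) + (p+1)/2 * Real.log 2 ≤ Real.log (f (2*s)) := by nlinarith
    calc m * f s = Real.exp (Real.log (f s) + (p+1)/2 * Real.log 2) := by
          rw [Real.exp_add, Real.exp_log (hfpos₁ s hs), hmdef]; ring
      _ ≤ Real.exp (Real.log (f (2*s))) := Real.exp_le_exp.2 h3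
      _ = f (2*s) := Real.exp_log (hfpos₁ (2*s) (by linarith))
  -- G-side Nice structure
  obtain ⟨SG, hSGdef⟩ : ∃ x : ℝ, x = max s₁ b := ⟨_, rfl⟩
  have hSGs₁ : s₁ ≤ SG := hSGdef ▸ le_max_left _ _
  have hSGb : b ≤ SG := hSGdef ▸ le_max_right _ _
  have hSGs₀ : s₀ ≤ SG := le_trans (by linarith) hSGs₁
  have hm0 : (0:ℝ) < m := by linarith
  have NG : Nice (fun s => (f s)⁻¹) SG KG m⁻¹ := by
    refine ⟨le_trans hs₁1 hSGs₁, hKG1, by positivity, ?_, ?_, hGint SG hSGs₀, ?_, ?_⟩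
    · rw [show (1:ℝ)/2 = 2⁻¹ by norm_num]
      exact inv_strictAnti₀ (by norm_num) hm2
    · intro s hs
      exact inv_pos.2 (hfpos₁ s (hSGs₁.trans hs))
    · intro s hs t hts ht2
      have hs' : s₁ ≤ s := hSGs₁.trans hs
      have hfs := hfpos₁ s hs'
      have hft := hfpos₁ t (hs'.trans hts)
      constructor
      · calc (f t)⁻¹ ≤ (f s)⁻¹ := inv_anti₀ hfs (hmono s hs' t hts)
          _ ≤ KG * (f s)⁻¹ := le_mul_of_one_le_left (by positivity) hKG1
      · rw [inv_eq_one_div, inv_eq_one_div, mul_one_div, div_le_div_iff₀ hfs hft]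
        have := hratio s hs' t hts ht2
        linarith
    · intro s hs
      have hs' : s₁ ≤ s := hSGs₁.trans hs
      have hfs := hfpos₁ s hs'
      have h2s := hdbl s hs'
      calc (f (2*s))⁻¹ ≤ (m * f s)⁻¹ := inv_anti₀ (by positivity) h2s
        _ = m⁻¹ * (f s)⁻¹ := by rw [mul_inv]
  -- H-side preparation
  obtain ⟨β, hβdef⟩ : ∃ x : ℝ, x = (m-2)/4 := ⟨_, rfl⟩
  have hβ0 : 0 < β := by rw [hβdef]; linarith
  obtain ⟨C₀, hC₀def⟩ : ∃ x : ℝ, x = max 1 ((3*p-1)/2 * Real.log 2 / β) := ⟨_, rfl⟩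
  have hC₀1 : (1:ℝ) ≤ C₀ := hC₀def ▸ le_max_left _ _
  have hβne : β ≠ 0 := hβ0.ne'
  have hC₀Q : (3*p-1)/2 * Real.log 2 ≤ β * C₀ := by
    have h1 : (3*p-1)/2 * Real.log 2 / β ≤ C₀ := hC₀def ▸ le_max_right _ _
    calc (3*p-1)/2 * Real.log 2 = β * ((3*p-1)/2 * Real.log 2 / β) := by
          rw [mul_comm β _, div_mul_cancel₀ _ hβne]
      _ ≤ β * C₀ := mul_le_mul_of_nonneg_left h1 hβ0.le
  have hlogtop : Tendsto (fun s => Real.log (f s)) atTop atTop := by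
    apply tendsto_atTop_mono' atTop
      (f₁ := fun s => Real.log (f s₁) + (p+1)/2 * (Real.log s - Real.log s₁))
    · filter_upwards [eventually_ge_atTop s₁] with s hs
      have := (hflog s₁ le_rfl s hs).1
      linarith
    · apply tendsto_atTop_add_const_left
      apply Tendsto.const_mul_atTop (by linarith : (0:ℝ) < (p+1)/2)
      exact tendsto_atTop_add_const_right _ _ Real.tendsto_log_atTop
  obtain ⟨v₀, hv₀⟩ := Filter.eventually_atTop.1 (hlogtop.eventually_ge_atTop (C₀ - A))
  obtain ⟨SH, hSHdef⟩ : ∃ x : ℝ, x = max v₀ SG := ⟨_, rfl⟩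
  have hSHSG : SG ≤ SH := hSHdef ▸ le_max_right _ _
  have hSHs₁ : s₁ ≤ SH := hSGs₁.trans hSHSG
  have hSHb : b ≤ SH := hSGb.trans hSHSG
  have hgC₀ : ∀ s, SH ≤ s → C₀ ≤ A + Real.log (f s) := by
    intro s hs
    have := hv₀ s (le_trans (hSHdef ▸ le_max_left _ _) hs)
    linarith
  have hg1 : ∀ s, SH ≤ s → (1:ℝ) ≤ A + Real.log (f s) :=
    fun s hs => le_trans hC₀1 (hgC₀ s hs)
  have hgmono : ∀ s, SH ≤ s → ∀ t, s ≤ t →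
      A + Real.log (f s) ≤ A + Real.log (f t) := by
    intro s hs t hts
    have hs' : s₁ ≤ s := hSHs₁.trans hs
    have := (hflog s hs' t hts).1
    have hls : Real.log s ≤ Real.log t :=
      Real.log_le_log (lt_of_lt_of_le hs₁0 hs') hts
    nlinarith
  have hgup : ∀ s, SH ≤ s → ∀ t, s ≤ t → t ≤ 2*s →
      A + Real.log (f t) ≤ (1+β) * (A + Real.log (f s)) := by
    intro s hs t hts ht2
    have hs' : s₁ ≤ s := hSHs₁.trans hs
    have hs0 : (0:ℝ) < s := lt_of_lt_of_le hs₁0 hs'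
    have h1 := (hflog s hs' t hts).2
    have h2 : Real.log t ≤ Real.log 2 + Real.log s := by
      rw [← Real.log_mul (by norm_num) hs0.ne']
      exact Real.log_le_log (lt_of_lt_of_le hs0 hts) ht2
    have hQpos : (0:ℝ) ≤ (3*p-1)/2 := by linarith
    have h3 : Real.log (f t) - Real.log (f s) ≤ (3*p-1)/2 * Real.log 2 := by nlinarith
    have h4 := hgC₀ s hs
    nlinarith [hC₀Q]
  obtain ⟨θH, hθHdef⟩ : ∃ x : ℝ, x = (1+β)/m := ⟨_, rfl⟩
  have hθHm : θH * m = 1+β := by rw [hθHdef]; field_simp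
  have hθH0 : 0 ≤ θH := by rw [hθHdef]; exact div_nonneg (by linarith) (by linarith)
  have hθHhalf : θH < 1/2 := by
    rw [hθHdef, div_lt_iff₀ hm0, hβdef]; linarith
  have NH : Nice (fun s => (A + Real.log (f s)) / f s) SH (KG * (1+β)) θH := by
    refine ⟨le_trans hs₁1 hSHs₁, ?_, hθH0, hθHhalf, ?_,
      hHint SH (le_trans (by linarith) hSHs₁), ?_, ?_⟩
    · nlinarith
    · intro s hs
      exact div_pos (by linarith [hg1 s hs]) (hfpos₁ s (hSHs₁.trans hs))
    · intro s hs t hts ht2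
      have hs' : s₁ ≤ s := hSHs₁.trans hs
      have hfs := hfpos₁ s hs'
      have hft := hfpos₁ t (hs'.trans hts)
      have hfst := hmono s hs' t hts
      have hftK := hratio s hs' t hts ht2
      have hgst := hgmono s hs t hts
      have hgt2 := hgup s hs t hts ht2
      have hgs1 := hg1 s hs
      have hgt1 : (1:ℝ) ≤ A + Real.log (f t) := by linarith
      constructor
      · have heq : KG * (1+β) * ((A + Real.log (f s)) / f s)
            = (KG * (1+β) * (A + Real.log (f s))) / f s := by ring
        rw [heq, div_le_div_iff₀ hft hfs]
        calc (A + Real.log (f t)) * f s ≤ ((1+β) * (A + Real.log (f s))) * f s :=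
              mul_le_mul_of_nonneg_right hgt2 hfs.le
          _ ≤ ((1+β) * (A + Real.log (f s))) * f t :=
              mul_le_mul_of_nonneg_left hfst (by nlinarith)
          _ ≤ (KG * ((1+β) * (A + Real.log (f s)))) * f t := by
              apply mul_le_mul_of_nonneg_right _ hft.le
              exact le_mul_of_one_le_left (by nlinarith) hKG1
          _ = KG * (1+β) * (A + Real.log (f s)) * f t := by ring
      · have heq : KG * (1+β) * ((A + Real.log (f t)) / f t)
            = (KG * (1+β) * (A + Real.log (f t))) / f t := by ring
        rw [heq, div_le_div_iff₀ hfs hft]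
        calc (A + Real.log (f s)) * f t ≤ (A + Real.log (f t)) * f t :=
              mul_le_mul_of_nonneg_right hgst hft.le
          _ ≤ (A + Real.log (f t)) * (KG * f s) :=
              mul_le_mul_of_nonneg_left hftK (by linarith)
          _ = KG * (A + Real.log (f t)) * f s := by ring
          _ ≤ KG * (1+β) * (A + Real.log (f t)) * f s := by
              nlinarith [mul_nonneg (mul_nonneg (show (0:ℝ) ≤ KG by linarith)
                (show (0:ℝ) ≤ A + Real.log (f t) by linarith)) hfs.le]
    · intro s hs
      have hs' : s₁ ≤ s := hSHs₁.trans hs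
      have hfs := hfpos₁ s hs'
      have hf2s := hfpos₁ (2*s) (by linarith [lt_of_lt_of_le hs₁0 hs'])
      have hm2s := hdbl s hs'
      have hg2s := hgup s hs (2*s) (by linarith [lt_of_lt_of_le hs₁0 hs']) le_rfl
      have hgs1 := hg1 s hs
      have heq : θH * ((A + Real.log (f s)) / f s)
          = (θH * (A + Real.log (f s))) / f s := by ring
      rw [heq, div_le_div_iff₀ hf2s hfs]
      calc (A + Real.log (f (2*s))) * f s ≤ ((1+β) * (A + Real.log (f s))) * f s :=
            mul_le_mul_of_nonneg_right hg2s hfs.le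
        _ = (θH * (A + Real.log (f s))) * (m * f s) := by rw [← hθHm]; ring
        _ ≤ (θH * (A + Real.log (f s))) * f (2*s) :=
            mul_le_mul_of_nonneg_left hm2s (mul_nonneg hθH0 (by linarith))
        _ = θH * (A + Real.log (f s)) * f (2*s) := by ring
  -- conclude
  have hGI : Gfun f = Ifun (fun s => (f s)⁻¹) := rfl
  have hHI : Hfun f A = Ifun (fun s => (A + Real.log (f s)) / f s) := rfl
  rw [hGI] at hGanti hGinv1
  rw [hHI] at hHanti hHinv1
  refine ⟨fun e he => ?_, fun e he => NG.inverse hSGb (hGint b hb) hGanti hGinv1 he,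
    fun e he => ?_, fun e he => NH.inverse hSHb (hHint b hb) hHanti hHinv1 he⟩
  · rw [show (fun X => Gfun f ((1 + e X) * X) / Gfun f X)
      = fun X => Ifun (fun s => (f s)⁻¹) ((1 + e X) * X) / Ifun (fun s => (f s)⁻¹) X by
        rw [hGI]]
    exact NG.forward he
  · rw [show (fun X => Hfun f A ((1 + e X) * X) / Hfun f A X)
      = fun X => Ifun (fun s => (A + Real.log (f s)) / f s) ((1 + e X) * X)
          / Ifun (fun s => (A + Real.log (f s)) / f s) X by rw [hHI]]
    exact NH.forward he
end

section
/- Under the stated assumptions, G(X)·( (p−1)·X^{p−1}·L(X) + X^p·L'(X) ) = 1 + o(1/log X) as X → ∞; that is, log X · ( G(X)·((p−1)X^{p−1}L(X) + X^p L'(X)) − 1 ) tends to 0 as X → ∞. -/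
open MeasureTheory Filter Topology Asymptotics

set_option maxHeartbeats 2000000 in
/-- **Sharp expansion of `G`** (Lemma 6.3):
`G(X)((p−1)X^{p−1}L(X) + X^p L'(X)) = 1 + o(1/log X)` as `X → ∞`. -/
theorem G_sharp_expansion
    (p : ℝ) (hp : 1 < p)
    (f L : ℝ → ℝ)
    (hf_C1 : ContDiffOn ℝ 1 f (Set.Ici 0)) (hf0 : 0 ≤ f 0)
    (s₀ : ℝ) (hs₀ : 0 < s₀)
    (hf_pos : ∀ s ≥ s₀, 0 < f s)
    (hf_C2 : ContDiffOn ℝ 2 f (Set.Ici s₀))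
    (hfL : ∀ s > (0 : ℝ), f s = s ^ p * L s)
    (α : ℝ) (hα : 1 / 2 < α)
    (hL1 : (fun s => s * deriv L s / L s) =o[atTop] fun s => Real.log s ^ (-α))
    (hL2 : (deriv fun s => s * deriv L s / L s) =o[atTop] fun s => 1 / (s * Real.log s))
    (hGint : ∀ X ≥ s₀, IntegrableOn (fun s => (f s)⁻¹) (Set.Ioi X)) :
    Tendsto (fun X => Real.log X *
        (Gfun f X * ((p - 1) * X ^ (p - 1) * L X + X ^ p * deriv L X) - 1))
      atTop (𝓝 0) := by
  have hp1 : (0:ℝ) < p - 1 := by linarith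
  set F : ℝ → ℝ := fun s => s * deriv f s - f s with hFdef
  set ee : ℝ → ℝ := fun s => s * deriv f s / f s - p with heedef
  set φ : ℝ → ℝ := fun s => s / F s with hφdef
  set r : ℝ → ℝ := fun s => s * f s * deriv ee s / (F s)^2 with hrdef
  -- first derivative of f
  have hfd : ∀ x, s₀ < x → HasDerivAt f (deriv f x) x := fun x hx =>
    ((hf_C2.differentiableOn (by norm_num)).differentiableAt (Ici_mem_nhds hx)).hasDerivAt
  -- second derivative of f
  have hC1d : ContDiffOn ℝ 1 (deriv f) (Set.Ioi s₀) :=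
    (hf_C2.mono Set.Ioi_subset_Ici_self).deriv_of_isOpen isOpen_Ioi (by norm_num)
  have hfd2 : ∀ x, s₀ < x → HasDerivAt (deriv f) (deriv (deriv f) x) x := fun x hx =>
    ((hC1d.differentiableOn (by norm_num)).differentiableAt (Ioi_mem_nhds hx)).hasDerivAt
  -- value of L
  have hLval : ∀ x, (0:ℝ) < x → L x = f x / x ^ p := by
    intro x hx
    have hxp : x ^ p ≠ 0 := (Real.rpow_pos_of_pos hx p).ne'
    rw [hfL x hx]; field_simp
  -- derivative of L
  have hLd : ∀ x, s₀ < x → HasDerivAt L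
      ((deriv f x * x ^ p - f x * (p * x ^ (p - 1))) / (x ^ p) ^ 2) x := by
    intro x hx
    have hx0 : 0 < x := hs₀.trans hx
    have hxp : x ^ p ≠ 0 := (Real.rpow_pos_of_pos hx0 p).ne'
    have h1 : HasDerivAt (fun t => f t / t ^ p)
        ((deriv f x * x ^ p - f x * (p * x ^ (p - 1))) / (x ^ p) ^ 2) x :=
      (hfd x hx).div (Real.hasDerivAt_rpow_const (Or.inl hx0.ne')) hxp
    apply h1.congr_of_eventuallyEq
    filter_upwards [Ioi_mem_nhds hx0] with t ht
    exact hLval t ht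
  -- ee agrees with s L'/L for s > s₀
  have heq : ∀ x, s₀ < x → x * deriv L x / L x = ee x := by
    intro x hx
    have hx0 : 0 < x := hs₀.trans hx
    have hfx : 0 < f x := hf_pos x hx.le
    have hxp : x ^ p ≠ 0 := (Real.rpow_pos_of_pos hx0 p).ne'
    have hA : x ^ (p - 1) = x ^ p / x := by
      rw [Real.rpow_sub hx0, Real.rpow_one]
    rw [(hLd x hx).deriv, hLval x hx0, hA, heedef]
    field_simp
  -- derivative of ee equals derivative of s L'/L for s > s₀
  have hdee_eq : ∀ x, s₀ < x → deriv (fun s => s * deriv L s / L s) x = deriv ee x := by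
    intro x hx
    apply Filter.EventuallyEq.deriv_eq
    filter_upwards [Ioi_mem_nhds hx] with t ht
    exact heq t ht
  -- HasDerivAt for ee
  have heed : ∀ x, s₀ < x → HasDerivAt ee
      (((1 * deriv f x + x * deriv (deriv f) x) * f x - x * deriv f x * deriv f x) / f x ^ 2) x := by
    intro x hx
    have hfx : f x ≠ 0 := (hf_pos x hx.le).ne'
    exact (((hasDerivAt_id x).mul (hfd2 x hx)).div (hfd x hx) hfx).sub_const p
  -- basic identity : F = f * (p - 1 + ee)
  have hsfd : ∀ x, s₀ < x → x * deriv f x = f x * (p + ee x) := by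
    intro x hx
    have hfx : f x ≠ 0 := (hf_pos x hx.le).ne'
    simp only [heedef]
    field_simp
    ring
  have hFid : ∀ x, s₀ < x → F x = f x * (p - 1 + ee x) := by
    intro x hx
    simp only [hFdef]
    rw [hsfd x hx]; ring
  -- ee is eventually small
  have heM : Tendsto (fun s => s * deriv L s / L s) atTop (𝓝 0) :=
    hL1.isBigO.trans_tendsto ((tendsto_rpow_neg_atTop (by linarith)).comp Real.tendsto_log_atTop)
  have h_ee_small : ∀ᶠ s in atTop, |ee s| ≤ (p - 1) / 2 := by
    have h1 := Metric.tendsto_nhds.mp heM ((p-1)/2) (by positivity)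
    filter_upwards [h1, eventually_gt_atTop s₀] with s hs hs'
    rw [Real.dist_eq, sub_zero, heq s hs'] at hs
    exact hs.le
  -- deriv ee eventually small (δ = 1 version), for integrability
  have h_dee1 : ∀ᶠ s in atTop, |deriv ee s| ≤ 1 / (s * Real.log s) := by
    filter_upwards [hL2.def one_pos, eventually_gt_atTop s₀,
      eventually_gt_atTop (0:ℝ), Real.tendsto_log_atTop.eventually_ge_atTop 1] with s h1 h2 h3 h4
    rw [Real.norm_eq_abs, Real.norm_eq_abs, hdee_eq s h2] at h1
    have hpos : 0 < s * Real.log s := by positivity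
    calc |deriv ee s| ≤ 1 * |1 / (s * Real.log s)| := h1
      _ = 1 / (s * Real.log s) := by rw [one_mul, abs_of_pos (by positivity)]
  -- choose X₀
  obtain ⟨X₀, hX₀⟩ := Filter.eventually_atTop.mp
    (h_ee_small.and (h_dee1.and ((eventually_gt_atTop s₀).and
      ((Real.tendsto_log_atTop.eventually_ge_atTop 1).and (eventually_gt_atTop 0)))))
  have hreg : ∀ s ≥ X₀, s₀ < s ∧ 0 < s ∧ 0 < f s ∧ |ee s| ≤ (p-1)/2 ∧
      |deriv ee s| ≤ 1 / (s * Real.log s) ∧ 1 ≤ Real.log s ∧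
      (p-1)/2 * f s ≤ F s ∧ 0 < F s := by
    intro s hs
    obtain ⟨h1, h2, h3, h4, h5⟩ := hX₀ s hs
    have hfs : 0 < f s := hf_pos s h3.le
    have hF : F s = f s * (p - 1 + ee s) := hFid s h3
    have habs := abs_le.mp h1
    have hFlb : (p-1)/2 * f s ≤ F s := by
      rw [hF]; nlinarith
    refine ⟨h3, h5, hfs, h1, h2, h4, hFlb, lt_of_lt_of_le (by positivity) hFlb⟩
  -- derivative of φ
  have hφd : ∀ x ≥ X₀, HasDerivAt φ (-((f x)⁻¹ + r x)) x := by
    intro x hx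
    obtain ⟨hx1, hx2, hx3, _, _, _, _, hx8⟩ := hreg x hx
    have hFd : HasDerivAt F (1 * deriv f x + x * deriv (deriv f) x - deriv f x) x :=
      ((hasDerivAt_id x).mul (hfd2 x hx1)).sub (hfd x hx1)
    have h : HasDerivAt φ _ x := (hasDerivAt_id x).div hFd hx8.ne'
    convert h using 1
    rw [hrdef]
    simp only
    rw [(heed x hx1).deriv]
    have hFx : F x = x * deriv f x - f x := rfl
    rw [hFx]
    have hFx0 : x * deriv f x - f x ≠ 0 := by rw [← hFx]; exact hx8.ne'
    have hfx0 : f x ≠ 0 := hx3.ne'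
    simp only [id]
    field_simp
    ring
  -- φ tends to 0
  have hc1 : (1:ℝ) < (p+1)/2 := by linarith
  set c : ℝ := (p+1)/2 with hcdef
  have hmono : MonotoneOn (fun s => f s / s ^ c) (Set.Ici X₀) := by
    have hX₀pos : 0 < X₀ := (hreg X₀ le_rfl).2.1
    apply monotoneOn_of_deriv_nonneg (convex_Ici X₀)
    · apply ContinuousOn.div
      · exact (hf_C1.continuousOn).mono (fun x hx => le_trans hX₀pos.le hx)
      · intro x hx
        exact (Real.continuousAt_rpow_const x c (Or.inl (lt_of_lt_of_le hX₀pos hx).ne')).continuousWithinAt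
      · intro x hx
        exact (Real.rpow_pos_of_pos (lt_of_lt_of_le hX₀pos hx) c).ne'
    · intro x hx
      rw [interior_Ici] at hx
      have hx0 : 0 < x := hX₀pos.trans hx
      have h1 := (hfd x ((hreg x hx.le).1)).differentiableAt
      exact ((h1.div (Real.hasDerivAt_rpow_const (Or.inl hx0.ne')).differentiableAt
        (Real.rpow_pos_of_pos hx0 c).ne')).differentiableWithinAt
    · intro x hx
      rw [interior_Ici] at hx
      obtain ⟨hx1, hx0, hfx, hee, _, _, _, _⟩ := hreg x hx.le
      have hxc : (0:ℝ) < x ^ c := Real.rpow_pos_of_pos hx0 c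
      have hd : HasDerivAt (fun s => f s / s ^ c)
          ((deriv f x * x ^ c - f x * (c * x ^ (c-1))) / (x ^ c) ^ 2) x :=
        (hfd x hx1).div (Real.hasDerivAt_rpow_const (Or.inl hx0.ne')) hxc.ne'
      rw [hd.deriv]
      apply div_nonneg _ (by positivity)
      have hA : x ^ (c - 1) = x ^ c / x := by rw [Real.rpow_sub hx0, Real.rpow_one]
      have h2 : x * deriv f x = f x * (p + ee x) := hsfd x hx1
      have h3 : c * f x ≤ x * deriv f x := by
        rw [h2]
        have : c ≤ p + ee x := by
          have := (abs_le.mp hee).1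
          rw [hcdef]; linarith
        nlinarith
      rw [hA]
      have : deriv f x * x ^ c - f x * (c * (x ^ c / x)) = (x ^ c / x) * (x * deriv f x - c * f x) := by
        field_simp
      rw [this]
      apply mul_nonneg (by positivity)
      linarith
  have hφ0 : Tendsto φ atTop (𝓝 0) := by
    have hX₀pos : 0 < X₀ := (hreg X₀ le_rfl).2.1
    have hfX₀ : 0 < f X₀ := (hreg X₀ le_rfl).2.2.1
    set K : ℝ := f X₀ / X₀ ^ c with hKdef
    have hK : 0 < K := by positivity
    have hlb : ∀ s ≥ X₀, K * s ^ c ≤ f s := by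
      intro s hs
      have h := hmono (Set.self_mem_Ici) (hs : s ∈ Set.Ici X₀) hs
      have hsc : (0:ℝ) < s ^ c := Real.rpow_pos_of_pos (hX₀pos.trans_le hs) c
      rw [hKdef]
      calc f X₀ / X₀ ^ c * s ^ c ≤ f s / s ^ c * s ^ c := by
            apply mul_le_mul_of_nonneg_right h hsc.le
        _ = f s := by field_simp
    apply squeeze_zero' (g := fun s => (2 / ((p-1) * K)) * s ^ (1 - c))
    · filter_upwards [eventually_ge_atTop X₀] with s hs
      obtain ⟨_, hs0, _, _, _, _, _, hF⟩ := hreg s hs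
      rw [hφdef]
      positivity
    · filter_upwards [eventually_ge_atTop X₀] with s hs
      obtain ⟨_, hs0, hfs, _, _, _, hFlb, hF⟩ := hreg s hs
      have hsc : (0:ℝ) < s ^ c := Real.rpow_pos_of_pos hs0 c
      have h1 : K * s ^ c ≤ f s := hlb s hs
      have h2 : (p-1)/2 * (K * s ^ c) ≤ F s := le_trans (by nlinarith) hFlb
      have h3 : 0 < (p-1)/2 * (K * s ^ c) := by positivity
      rw [hφdef]
      simp only
      calc s / F s ≤ s / ((p-1)/2 * (K * s ^ c)) := by
            apply div_le_div_of_nonneg_left hs0.le h3 h2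
        _ = (2 / ((p-1) * K)) * (s / s ^ c) := by field_simp
        _ = (2 / ((p-1) * K)) * s ^ (1 - c) := by
            rw [Real.rpow_sub hs0, Real.rpow_one]
    · have h0 : Tendsto (fun s : ℝ => s ^ (1 - c)) atTop (𝓝 0) := by
        have : (1 : ℝ) - c = -(c - 1) := by ring
        rw [this]
        exact tendsto_rpow_neg_atTop (by linarith)
      simpa using h0.const_mul (2 / ((p-1) * K))
  -- measurability of r
  have hrmeas : ∀ X ≥ X₀, AEStronglyMeasurable r (volume.restrict (Set.Ioi X)) := by
    intro X hX
    have hX0 : 0 < X := (hreg X hX).2.1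
    have hsub : Set.Ioi X ⊆ Set.Ici (0:ℝ) := fun x hx => le_of_lt (hX0.trans hx)
    have hf_aem : AEMeasurable f (volume.restrict (Set.Ioi X)) :=
      (hf_C1.continuousOn.mono hsub).aemeasurable measurableSet_Ioi
    have hdf : Measurable (deriv f) := measurable_deriv f
    have hdee : Measurable (deriv ee) := measurable_deriv ee
    have hF_aem : AEMeasurable F (volume.restrict (Set.Ioi X)) :=
      (measurable_id.aemeasurable.mul hdf.aemeasurable).sub hf_aem
    apply aestronglyMeasurable_iff_aemeasurable.mpr
    exact ((measurable_id.aemeasurable.mul hf_aem).mul hdee.aemeasurable).div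
      (hF_aem.pow_const 2)
  -- pointwise bound on r, with parameter δ and cutoff X₁
  have hrbound : ∀ δ > (0:ℝ), ∀ X₁ ≥ X₀,
      (∀ s ≥ X₁, |deriv ee s| ≤ δ * (1 / (s * Real.log s))) →
      ∀ X ≥ X₁, ∀ s > X, |r s| ≤ (4 / (p-1)^2 * δ / Real.log X) * (f s)⁻¹ := by
    intro δ hδ X₁ hX₁ hdee X hX s hs
    have hsX₀ : s ≥ X₀ := le_trans (le_trans hX₁ hX) hs.le
    obtain ⟨hs1, hs0, hfs, _, _, hlog, hFlb, hF⟩ := hreg s hsX₀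
    have hXX₀ : X ≥ X₀ := le_trans hX₁ hX
    obtain ⟨_, hX0, _, _, _, hlogX, _, _⟩ := hreg X hXX₀
    have hlogs : 0 < Real.log s := lt_of_lt_of_le one_pos hlog
    have hlogX0 : 0 < Real.log X := lt_of_lt_of_le one_pos hlogX
    have hlogmono : Real.log X ≤ Real.log s := Real.log_le_log hX0 hs.le
    have hd := hdee s (le_trans hX hs.le)
    have hfspos : 0 < (p-1)/2 * f s := by positivity
    have hF2 : ((p-1)/2 * f s)^2 ≤ (F s)^2 := by
      apply sq_le_sq'
      · linarith
      · exact hFlb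
    calc |r s| = s * f s * |deriv ee s| / (F s)^2 := by
          rw [hrdef]; simp only
          rw [abs_div, abs_mul, abs_mul, abs_of_pos hs0, abs_of_pos hfs, abs_of_pos (by positivity : (0:ℝ) < (F s)^2)]
      _ ≤ s * f s * (δ * (1 / (s * Real.log s))) / ((p-1)/2 * f s)^2 := by
          gcongr
      _ = (4 / (p-1)^2 * δ / Real.log s) * (f s)⁻¹ := by
          field_simp
          ring
      _ ≤ (4 / (p-1)^2 * δ / Real.log X) * (f s)⁻¹ := by
          gcongr
  -- integrability of r
  have hrint : ∀ X ≥ X₀, IntegrableOn r (Set.Ioi X) := by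
    intro X hX
    have hXs₀ : X ≥ s₀ := le_of_lt (hreg X hX).1
    have hint := hGint X hXs₀
    apply Integrable.mono' ((hint.const_mul (4 / (p-1)^2 * 1 / Real.log X))) (hrmeas X hX)
    rw [ae_restrict_iff' measurableSet_Ioi]
    apply Filter.Eventually.of_forall
    intro s hs
    rw [Real.norm_eq_abs]
    have h := hrbound 1 one_pos X₀ le_rfl (fun s hs => by
        simpa using (hreg s hs).2.2.2.2.1) X hX s hs
    simpa using h
  -- key identity
  have hkey : ∀ X ≥ X₀, Gfun f X = φ X - ∫ s in Set.Ioi X, r s := by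
    intro X hX
    have hXs₀ : X ≥ s₀ := le_of_lt (hreg X hX).1
    have hint := hGint X hXs₀
    have hr := hrint X hX
    have h := integral_Ioi_of_hasDerivAt_of_tendsto (a := X)
      (f := φ) (f' := fun s => -((f s)⁻¹ + r s)) (m := 0)
      ((hφd X hX).continuousAt.continuousWithinAt)
      (fun x hx => hφd x (le_of_lt (lt_of_le_of_lt hX hx)))
      (by exact (hint.add hr).neg)
      hφ0
    rw [integral_neg, integral_add hint hr] at h
    have : Gfun f X = ∫ s in Set.Ioi X, (f s)⁻¹ := rfl
    rw [this]
    linarith [h]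
  -- the algebraic identity for the target expression
  have hident : ∀ X, s₀ < X →
      (p - 1) * X ^ (p - 1) * L X + X ^ p * deriv L X = F X / X := by
    intro X hX
    have hX0 : 0 < X := hs₀.trans hX
    have hXp : X ^ p ≠ 0 := (Real.rpow_pos_of_pos hX0 p).ne'
    have hA : X ^ (p - 1) = X ^ p / X := by rw [Real.rpow_sub hX0, Real.rpow_one]
    rw [(hLd X hX).deriv, hLval X hX0, hA, hFdef]
    field_simp
    ring
  -- conclusion
  rw [Metric.tendsto_nhds]
  intro ε hε
  simp only [Real.dist_eq, sub_zero]
  set δ : ℝ := ε * (p-1)^2 / 16 with hδdef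
  have hδ : 0 < δ := by positivity
  have hCδ : 4 / (p-1)^2 * δ = ε / 4 := by
    rw [hδdef]; field_simp; ring
  -- eventual bound on deriv ee with δ
  have hdeeδ : ∀ᶠ s in atTop, |deriv ee s| ≤ δ * (1 / (s * Real.log s)) := by
    filter_upwards [hL2.def hδ, eventually_gt_atTop s₀,
      eventually_gt_atTop (0:ℝ), Real.tendsto_log_atTop.eventually_ge_atTop 1] with s h1 h2 h3 h4
    rw [Real.norm_eq_abs, Real.norm_eq_abs, hdee_eq s h2] at h1
    calc |deriv ee s| ≤ δ * |1 / (s * Real.log s)| := h1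
      _ = δ * (1 / (s * Real.log s)) := by rw [abs_of_pos (by positivity)]
  obtain ⟨X₁', hX₁'⟩ := Filter.eventually_atTop.mp hdeeδ
  set X₁ : ℝ := max X₁' X₀ with hX₁def
  have hX₁X₀ : X₁ ≥ X₀ := le_max_right _ _
  have hdeeδ' : ∀ s ≥ X₁, |deriv ee s| ≤ δ * (1 / (s * Real.log s)) :=
    fun s hs => hX₁' s (le_trans (le_max_left _ _) hs)
  filter_upwards [eventually_ge_atTop X₁,
    Real.tendsto_log_atTop.eventually_ge_atTop (ε/2),
    Real.tendsto_log_atTop.eventually_ge_atTop 1] with X hX hlogX hlog1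
  have hXX₀ : X ≥ X₀ := le_trans hX₁X₀ hX
  obtain ⟨hXs₀, hX0, hfX, _, _, _, hFlbX, hFX⟩ := hreg X hXX₀
  have hlogX0 : 0 < Real.log X := lt_of_lt_of_le one_pos hlog1
  -- bound on E = ∫ r
  set E : ℝ := ∫ s in Set.Ioi X, r s with hEdef
  have hG : Gfun f X = φ X - E := hkey X hXX₀
  have hGnn : 0 ≤ Gfun f X := by
    apply setIntegral_nonneg measurableSet_Ioi
    intro x hx
    have : 0 < f x := hf_pos x (le_of_lt (hXs₀.trans hx))
    positivity
  have hEbound : |E| ≤ ε / 4 / Real.log X * Gfun f X := by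
    have hint := hGint X (le_of_lt hXs₀)
    rw [hEdef, ← Real.norm_eq_abs]
    calc ‖∫ s in Set.Ioi X, r s‖
        ≤ ∫ s in Set.Ioi X, (4 / (p-1)^2 * δ / Real.log X) * (f s)⁻¹ := by
          apply norm_integral_le_of_norm_le (hint.const_mul _)
          rw [ae_restrict_iff' measurableSet_Ioi]
          apply Filter.Eventually.of_forall
          intro s hs
          rw [Real.norm_eq_abs]
          exact hrbound δ hδ X₁ hX₁X₀ hdeeδ' X hX s hs
      _ = (4 / (p-1)^2 * δ / Real.log X) * Gfun f X := integral_const_mul _ _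
      _ = ε / 4 / Real.log X * Gfun f X := by rw [hCδ]
  -- main computation
  rw [hident X hXs₀]
  set u : ℝ := Gfun f X * (F X / X) with hudef
  have hu0 : 0 ≤ u := by
    apply mul_nonneg hGnn
    positivity
  have huid : u = 1 - E * (F X / X) := by
    rw [hudef, hG]
    have : φ X * (F X / X) = 1 := by
      rw [hφdef]
      field_simp
    ring_nf
    ring_nf at this
    nlinarith [this]
  have hu1 : |u - 1| ≤ ε / 4 / Real.log X * u := by
    rw [huid]
    have h1 : |1 - E * (F X / X) - 1| = |E| * (F X / X) := by
      rw [show (1:ℝ) - E * (F X / X) - 1 = -(E * (F X / X)) by ring, abs_neg, abs_mul,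
        abs_of_pos (by positivity : (0:ℝ) < F X / X)]
    rw [h1, ← huid]
    calc |E| * (F X / X) ≤ ε / 4 / Real.log X * Gfun f X * (F X / X) := by
          apply mul_le_mul_of_nonneg_right hEbound (by positivity)
      _ = ε / 4 / Real.log X * u := by rw [hudef]; ring
  have hhalf : ε / 4 / Real.log X ≤ 1 / 2 := by
    rw [div_le_div_iff₀ hlogX0 (by norm_num)]
    nlinarith
  have hu2 : u ≤ 2 := by
    have := (abs_le.mp hu1).2
    nlinarith
  have habs : |u - 1| ≤ ε / 4 / Real.log X * 2 := by
    calc |u - 1| ≤ ε / 4 / Real.log X * u := hu1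
      _ ≤ ε / 4 / Real.log X * 2 := by
          apply mul_le_mul_of_nonneg_left hu2 (by positivity)
  calc |Real.log X * (Gfun f X * (F X / X) - 1)|
      = Real.log X * |u - 1| := by
        rw [abs_mul, abs_of_pos hlogX0, hudef]
    _ ≤ Real.log X * (ε / 4 / Real.log X * 2) := by
        apply mul_le_mul_of_nonneg_left habs hlogX0.le
    _ = ε / 2 := by field_simp; ring
    _ < ε := by linarith
end

section
/- Under the stated assumptions, with β = 1/(p−1) and κ = β^β, one has G⁻¹(Y) ~ κ·Y^{−β}·L(Y^{−β})^{−β} as Y → 0⁺; that is, the ratio G⁻¹(Y) / ( κ·Y^{−β}·L(Y^{−β})^{−β} ) tends to 1 as Y → 0⁺. -/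
set_option maxHeartbeats 1000000

open MeasureTheory Filter Topology Asymptotics Set

lemma aux_ev (c₁ c₂ c₃ : ℝ) (h : 0 < c₃) :
    ∀ᶠ w : ℝ in atTop, c₁ + c₂ * w ^ ((1:ℝ)/2) ≤ c₃ * w := by
  have h0 : Tendsto (fun w : ℝ => c₁ * w⁻¹ + c₂ * w ^ (-((1:ℝ)/2))) atTop (𝓝 0) := by
    have := (tendsto_inv_atTop_zero.const_mul c₁).add
      ((tendsto_rpow_neg_atTop (by norm_num : (0:ℝ) < 1/2)).const_mul c₂)
    simpa using this
  filter_upwards [h0.eventually_lt_const h, eventually_gt_atTop (0:ℝ)] with w hlt hw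
  have key : w * (c₁ * w⁻¹ + c₂ * w ^ (-((1:ℝ)/2))) = c₁ + c₂ * w ^ ((1:ℝ)/2) := by
    have e1 : w * w ^ (-((1:ℝ)/2)) = w ^ ((1:ℝ)/2) := by
      nth_rewrite 1 [← Real.rpow_one w]
      rw [← Real.rpow_add hw]
      congr 1
      ring
    rw [mul_add]
    congr 1
    · field_simp
    · rw [mul_comm c₂, ← mul_assoc, e1]; ring
  calc c₁ + c₂ * w ^ ((1:ℝ)/2) = w * (c₁ * w⁻¹ + c₂ * w ^ (-((1:ℝ)/2))) := key.symm
    _ ≤ w * c₃ := by nlinarith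
    _ = c₃ * w := mul_comm _ _

lemma u_growth (u u' : ℝ → ℝ) (x₁ : ℝ) (hx₁ : 1 ≤ x₁)
    (hu : ∀ t ≥ x₁, HasDerivAt u (u' t) t)
    (hb : ∀ t ≥ x₁, |u' t| ≤ t ^ (-((1:ℝ)/2))) :
    ∀ x ≥ x₁, |u x| ≤ |u x₁| + 2 * x ^ ((1:ℝ)/2) := by
  have hrt : ∀ t : ℝ, x₁ ≤ t →
      HasDerivAt (fun w : ℝ => 2 * w ^ ((1:ℝ)/2)) (t ^ (-((1:ℝ)/2))) t := by
    intro t ht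
    have h0 : t ≠ 0 := by nlinarith
    have := (Real.hasDerivAt_rpow_const (p := (1:ℝ)/2) (x := t) (Or.inl h0)).const_mul 2
    refine this.congr_deriv ?_
    rw [show (1:ℝ)/2 - 1 = -(1/2) by norm_num]
    ring
  -- monotone/antitone auxiliary functions
  have hmono : MonotoneOn (fun w => u w + 2 * w ^ ((1:ℝ)/2)) (Ici x₁) := by
    apply monotoneOn_of_deriv_nonneg (convex_Ici x₁)
    · intro t ht
      exact ((hu t ht).add (hrt t ht)).continuousAt.continuousWithinAt
    · intro t ht
      rw [interior_Ici] at ht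
      exact ((hu t ht.le).add (hrt t ht.le)).differentiableAt.differentiableWithinAt
    · intro t ht
      rw [interior_Ici] at ht
      rw [HasDerivAt.deriv (by exact (hu t ht.le).add (hrt t ht.le) :
        HasDerivAt (fun w => u w + 2 * w ^ ((1:ℝ)/2)) (u' t + t ^ (-((1:ℝ)/2))) t)]
      have := abs_le.mp (hb t ht.le)
      linarith [this.1]
  have hanti : AntitoneOn (fun w => u w - 2 * w ^ ((1:ℝ)/2)) (Ici x₁) := by
    apply antitoneOn_of_deriv_nonpos (convex_Ici x₁)
    · intro t ht
      exact ((hu t ht).sub (hrt t ht)).continuousAt.continuousWithinAt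
    · intro t ht
      rw [interior_Ici] at ht
      exact ((hu t ht.le).sub (hrt t ht.le)).differentiableAt.differentiableWithinAt
    · intro t ht
      rw [interior_Ici] at ht
      rw [HasDerivAt.deriv (by exact (hu t ht.le).sub (hrt t ht.le) :
        HasDerivAt (fun w => u w - 2 * w ^ ((1:ℝ)/2)) (u' t - t ^ (-((1:ℝ)/2))) t)]
      have := abs_le.mp (hb t ht.le)
      linarith [this.2]
  intro x hx
  have h1 := hmono (self_mem_Ici) hx hx
  have h2 := hanti (self_mem_Ici) hx hx
  simp only at h1 h2
  have hx₁r : (0:ℝ) ≤ x₁ ^ ((1:ℝ)/2) := Real.rpow_nonneg (by linarith) _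
  have habs := abs_le.mp (le_refl |u x₁|)
  rw [abs_le]
  constructor
  · have := neg_abs_le (u x₁)
    nlinarith [h1]
  · have := le_abs_self (u x₁)
    nlinarith [h2]
/-- **Asymptotics of `G⁻¹`** (Lemma 7.1 (ii)): with `β = 1/(p−1)` and `κ = β^β`,
`G⁻¹(Y) ~ κ Y^{−β} L(Y^{−β})^{−β}` as `Y → 0⁺`. -/
theorem Ginv_asymptotics
    (p : ℝ) (hp : 1 < p)
    (f L : ℝ → ℝ)
    (hf_C1 : ContDiffOn ℝ 1 f (Set.Ici 0)) (hf0 : 0 ≤ f 0)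
    (s₀ : ℝ) (hs₀ : 0 < s₀)
    (hf_pos : ∀ s ≥ s₀, 0 < f s)
    (hf_C2 : ContDiffOn ℝ 2 f (Set.Ici s₀))
    (hfL : ∀ s > (0 : ℝ), f s = s ^ p * L s)
    (α : ℝ) (hα : 1 / 2 < α)
    (hL1 : (fun s => s * deriv L s / L s) =o[atTop] fun s => Real.log s ^ (-α))
    (hL2 : (deriv fun s => s * deriv L s / L s) =o[atTop] fun s => 1 / (s * Real.log s))
    (hGint : ∀ X ≥ s₀, IntegrableOn (fun s => (f s)⁻¹) (Set.Ioi X))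
    (b : ℝ) (hb : s₀ ≤ b)
    (hGanti : StrictAntiOn (Gfun f) (Set.Ici b))
    (Ginv : ℝ → ℝ)
    (hGinv1 : ∀ X ≥ b, Ginv (Gfun f X) = X)
    (hGinv2 : ∀ Y ∈ Set.Ioc 0 (Gfun f b), Gfun f (Ginv Y) = Y)
    (β κ : ℝ) (hβ : β = 1 / (p - 1)) (hκ : κ = β ^ β) :
    Tendsto (fun Y => Ginv Y / (κ * Y ^ (-β) * L (Y ^ (-β)) ^ (-β)))
      (𝓝[>] (0 : ℝ)) (𝓝 1) := by
  have hp1 : (0:ℝ) < p - 1 := by linarith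
  have hβpos : 0 < β := by rw [hβ]; positivity
  set φ : ℝ → ℝ := fun s => s * deriv L s / L s with hφdef
  set u : ℝ → ℝ := fun t => Real.log (L (Real.exp t)) with hudef
  set R : ℝ → ℝ := fun Y => Y * ((p-1) * f (Ginv Y)) / Ginv Y with hRdef
  have hLpos : ∀ s, s₀ ≤ s → 0 < L s := by
    intro s hs
    have hspos : 0 < s := lt_of_lt_of_le hs₀ hs
    have h1 := hfL s hspos
    have h2 := hf_pos s hs
    have h3 : (0:ℝ) < s ^ p := Real.rpow_pos_of_pos hspos p
    nlinarith
  have hfd : ∀ s, s₀ < s → HasDerivAt f (deriv f s) s := by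
    intro s hs
    have hmem : Set.Ici s₀ ∈ 𝓝 s := Ici_mem_nhds hs
    exact ((hf_C2.contDiffAt hmem).differentiableAt (by norm_num)).hasDerivAt
  have hLeq : ∀ t : ℝ, 0 < t → L t = f t * t ^ (-p) := by
    intro t ht
    rw [hfL t ht, mul_comm (t ^ p) (L t), mul_assoc, ← Real.rpow_add ht,
      add_neg_cancel, Real.rpow_zero, mul_one]
  have hLd' : ∀ s, s₀ < s →
      HasDerivAt L (deriv f s * s ^ (-p) + f s * (-p * s ^ (-p-1))) s := by
    intro s hs
    have hspos : 0 < s := lt_trans hs₀ hs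
    have h2 := Real.hasDerivAt_rpow_const (p := -p) (x := s) (Or.inl (ne_of_gt hspos))
    have h1 := (hfd s hs).mul h2
    apply h1.congr_of_eventuallyEq
    filter_upwards [Ioi_mem_nhds hspos] with t ht
    exact hLeq t ht
  have hLd : ∀ s, s₀ < s → HasDerivAt L (deriv L s) s := by
    intro s hs
    exact (hLd' s hs).differentiableAt.hasDerivAt
  have hrel : ∀ s, s₀ < s → s * deriv f s = f s * (p + φ s) := by
    intro s hs
    have hspos : 0 < s := lt_trans hs₀ hs
    have hd := (hLd' s hs).deriv
    have hfs : f s ≠ 0 := ne_of_gt (hf_pos s hs.le)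
    have hLs : L s ≠ 0 := ne_of_gt (hLpos s hs.le)
    have hsp : s ^ (-p) ≠ 0 := ne_of_gt (Real.rpow_pos_of_pos hspos _)
    have hsp1 : s ^ (-p-1) = s ^ (-p) * s⁻¹ := by
      rw [sub_eq_add_neg, Real.rpow_add hspos, Real.rpow_neg_one]
    simp only [hφdef]
    rw [hd, hsp1, hLeq s hspos]
    field_simp
    ring
  have hφ0 : Tendsto φ atTop (𝓝 0) := by
    have hlog : Tendsto (fun s : ℝ => Real.log s ^ (-α)) atTop (𝓝 0) :=
      (tendsto_rpow_neg_atTop (by linarith : (0:ℝ) < α)).comp Real.tendsto_log_atTop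
    exact hL1.trans_tendsto hlog
  have hu' : ∀ t : ℝ, s₀ < Real.exp t → HasDerivAt u (φ (Real.exp t)) t := by
    intro t ht
    have hLt := hLd (Real.exp t) ht
    have hcomp : HasDerivAt (fun x => L (Real.exp x)) (deriv L (Real.exp t) * Real.exp t) t := by
      exact hLt.comp t (Real.hasDerivAt_exp t)
    have hne : L (Real.exp t) ≠ 0 := ne_of_gt (hLpos _ ht.le)
    have h2 := hcomp.log hne
    simp only [hudef, hφdef]
    convert h2 using 1
    ring
  have hφsmall : ∀ ε : ℝ, 0 < ε →
      ∀ᶠ t : ℝ in atTop, |φ (Real.exp t)| ≤ ε * t ^ (-((1:ℝ)/2)) := by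
    intro ε hε
    have h1 := hL1.def hε
    simp only [Real.norm_eq_abs] at h1
    have h2 := Real.tendsto_exp_atTop.eventually h1
    filter_upwards [h2, eventually_ge_atTop (1:ℝ)] with t hb1 ht1
    rw [Real.log_exp] at hb1
    have htpos : (0:ℝ) < t := lt_of_lt_of_le one_pos ht1
    calc |φ (Real.exp t)| ≤ ε * |t ^ (-α)| := hb1
      _ = ε * t ^ (-α) := by rw [abs_of_nonneg (Real.rpow_nonneg htpos.le _)]
      _ ≤ ε * t ^ (-((1:ℝ)/2)) := by
          apply mul_le_mul_of_nonneg_left _ hε.le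
          exact Real.rpow_le_rpow_of_exponent_le ht1 (by linarith)
  obtain ⟨A, hA0, hAbd⟩ : ∃ A : ℝ, 0 ≤ A ∧
      ∀ᶠ x : ℝ in atTop, |u x| ≤ A + 2 * x ^ ((1:ℝ)/2) := by
    have h1 := hφsmall 1 one_pos
    have h2 : ∀ᶠ t : ℝ in atTop, s₀ < Real.exp t :=
      Real.tendsto_exp_atTop.eventually_gt_atTop s₀
    obtain ⟨x₀, hx₀⟩ := eventually_atTop.mp ((h1.and h2).and (eventually_ge_atTop (1:ℝ)))
    set x₁ := max x₀ 1 with hx₁def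
    have hx₁1 : (1:ℝ) ≤ x₁ := le_max_right _ _
    have hfact : ∀ t ≥ x₁, (|φ (Real.exp t)| ≤ 1 * t ^ (-((1:ℝ)/2)) ∧ s₀ < Real.exp t) ∧ 1 ≤ t :=
      fun t ht => hx₀ t (le_trans (le_max_left _ _) ht)
    have hgrow := u_growth u (fun t => φ (Real.exp t)) x₁ hx₁1
      (fun t ht => hu' t (hfact t ht).1.2)
      (fun t ht => by simpa using (hfact t ht).1.1)
    refine ⟨|u x₁|, abs_nonneg _, ?_⟩
    filter_upwards [eventually_ge_atTop x₁] with x hx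
    exact hgrow x hx
  have hGrep : ∀ X, s₀ ≤ X →
      Gfun f X = (∫ s in Set.Ioi s₀, (f s)⁻¹) - ∫ s in (s₀)..X, (f s)⁻¹ := by
    intro X hX
    have hint := hGint s₀ le_rfl
    have hdisj : Disjoint (Set.Ioc s₀ X) (Set.Ioi X) := Set.Ioc_disjoint_Ioi le_rfl
    have h1 : ∫ s in Set.Ioc s₀ X ∪ Set.Ioi X, (f s)⁻¹
        = (∫ s in Set.Ioc s₀ X, (f s)⁻¹) + ∫ s in Set.Ioi X, (f s)⁻¹ :=
      setIntegral_union hdisj measurableSet_Ioi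
        (hint.mono_set Set.Ioc_subset_Ioi_self) (hGint X hX)
    rw [Set.Ioc_union_Ioi_eq_Ioi hX] at h1
    rw [intervalIntegral.integral_of_le hX]
    simp only [Gfun]
    linarith [h1]
  have hG0 : Tendsto (Gfun f) atTop (𝓝 0) := by
    have hint := hGint s₀ le_rfl
    have h1 := intervalIntegral_tendsto_integral_Ioi s₀ hint tendsto_id
    have h2 : Tendsto (fun X => (∫ s in Set.Ioi s₀, (f s)⁻¹) - ∫ s in (s₀)..X, (f s)⁻¹)
        atTop (𝓝 0) := by
      have := (tendsto_const_nhds (x := ∫ s in Set.Ioi s₀, (f s)⁻¹)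
        (f := atTop (α := ℝ))).sub h1
      simpa using this
    exact h2.congr' ((eventually_ge_atTop s₀).mono fun X hX => (hGrep X hX).symm)
  have hfinv_cont : ContinuousOn (fun s => (f s)⁻¹) (Set.Ioi s₀) := by
    intro t ht
    have hct : ContinuousAt f t := (hf_C2.contDiffAt (Ici_mem_nhds ht)).continuousAt
    exact (hct.inv₀ (ne_of_gt (hf_pos t (le_of_lt ht)))).continuousWithinAt
  have hGderiv : ∀ X, s₀ < X → HasDerivAt (Gfun f) (-(f X)⁻¹) X := by
    intro X hX
    have hmeas : StronglyMeasurableAtFilter (fun s => (f s)⁻¹) (𝓝 X) :=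
      hfinv_cont.stronglyMeasurableAtFilter isOpen_Ioi X hX
    have hii : IntervalIntegrable (fun s => (f s)⁻¹) volume s₀ X := by
      rw [intervalIntegrable_iff_integrableOn_Ioc_of_le hX.le]
      exact (hGint s₀ le_rfl).mono_set Set.Ioc_subset_Ioi_self
    have hctX : ContinuousAt (fun s => (f s)⁻¹) X :=
      ((hf_C2.contDiffAt (Ici_mem_nhds hX)).continuousAt).inv₀
        (ne_of_gt (hf_pos X hX.le))
    have hprim := intervalIntegral.integral_hasDerivAt_right hii hmeas hctX
    have h2 := hprim.const_sub (∫ s in Set.Ioi s₀, (f s)⁻¹)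
    apply h2.congr_of_eventuallyEq
    filter_upwards [Ioi_mem_nhds hX] with X' hX'
    exact hGrep X' (le_of_lt hX')
  have hFtop : Tendsto (fun X => (p-1) * (f X / X)) atTop atTop := by
    have hcomp : Tendsto (fun w : ℝ => (p-1) * w + u w) atTop atTop := by
      have hev : ∀ᶠ w : ℝ in atTop, (p-1)/2 * w ≤ (p-1) * w + u w := by
        filter_upwards [hAbd, aux_ev A 2 ((p-1)/2) (by linarith),
          eventually_ge_atTop (0:ℝ)] with w h1 h2 hw0
        have h3 := (abs_le.mp h1).1
        linarith
      have hhalf : Tendsto (fun w : ℝ => (p-1)/2 * w) atTop atTop :=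
        Tendsto.const_mul_atTop (by linarith) tendsto_id
      exact tendsto_atTop_mono' _ hev hhalf
    have hlogcomp : Tendsto (fun X => (p-1) * Real.log X + u (Real.log X)) atTop atTop :=
      hcomp.comp Real.tendsto_log_atTop
    have hexp : Tendsto (fun X => Real.exp ((p-1) * Real.log X + u (Real.log X)))
        atTop atTop := Real.tendsto_exp_atTop.comp hlogcomp
    have hev2 : ∀ᶠ X in atTop,
        Real.exp ((p-1) * Real.log X + u (Real.log X)) = f X / X := by
      filter_upwards [eventually_gt_atTop (max s₀ 1)] with X hX
      have hXs : s₀ < X := lt_of_le_of_lt (le_max_left _ _) hX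
      have hX0 : (0:ℝ) < X := lt_of_lt_of_le one_pos (le_of_lt (lt_of_le_of_lt (le_max_right s₀ 1) hX))
      have hLX := hLpos X hXs.le
      have he : Real.exp ((p-1) * Real.log X + u (Real.log X)) = X ^ (p-1) * L X := by
        rw [Real.exp_add]
        congr 1
        · rw [Real.rpow_def_of_pos hX0]; ring_nf
        · simp only [hudef]
          rw [Real.exp_log hX0, Real.exp_log hLX]
      rw [he, hfL X hX0, Real.rpow_sub hX0, Real.rpow_one]
      ring
    exact Tendsto.const_mul_atTop hp1 (hexp.congr' hev2)
  have hφhalf : ∀ᶠ X in atTop, |φ X| < (p-1)/2 := by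
    have : ∀ᶠ w : ℝ in 𝓝 0, |w| < (p-1)/2 := by
      have := eventually_abs_sub_lt (0:ℝ) (by linarith : (0:ℝ) < (p-1)/2)
      simpa using this
    exact hφ0.eventually this
  have hGF : Tendsto (fun X => Gfun f X / (X / ((p-1) * f X))) atTop (𝓝 1) := by
    apply HasDerivAt.lhopital_zero_atTop
      (f' := fun X => -(f X)⁻¹)
      (g' := fun X => (1 * ((p-1) * f X) - X * ((p-1) * deriv f X)) / ((p-1) * f X)^2)
    · filter_upwards [eventually_gt_atTop s₀] with X hX using hGderiv X hX
    · filter_upwards [eventually_gt_atTop s₀] with X hX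
      have hfX := hf_pos X hX.le
      exact (hasDerivAt_id X).div ((hfd X hX).const_mul (p-1)) (by positivity)
    · filter_upwards [eventually_gt_atTop s₀, hφhalf] with X hX hφX
      have hfX := hf_pos X hX.le
      have hnum : 1 * ((p-1) * f X) - X * ((p-1) * deriv f X)
          = (p-1) * f X * (1 - p - φ X) := by
        rw [show X * ((p-1) * deriv f X) = (p-1) * (X * deriv f X) by ring, hrel X hX]
        ring
      rw [hnum]
      apply div_ne_zero
      · have h5 := abs_lt.mp hφX
        have : 1 - p - φ X < 0 := by linarith [h5.1]
        exact ne_of_lt (mul_neg_of_pos_of_neg (by positivity) this)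
      · positivity
    · exact hG0
    · have h1 := hFtop.inv_tendsto_atTop
      apply h1.congr'
      filter_upwards [eventually_gt_atTop (max s₀ 0)] with X hX
      have hX0 : (0:ℝ) < X := lt_of_le_of_lt (le_max_right s₀ 0) hX
      have hfX := hf_pos X (le_of_lt (lt_of_le_of_lt (le_max_left s₀ 0) hX))
      rw [Pi.inv_apply]
      field_simp
    · have hlim : Tendsto (fun X => (p-1) / (p - 1 + φ X)) atTop (𝓝 1) := by
        have h1 : Tendsto (fun X => p - 1 + φ X) atTop (𝓝 (p-1)) := by
          have := (tendsto_const_nhds (x := p - 1) (f := atTop (α := ℝ))).add hφ0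
          simpa using this
        have h2 := (tendsto_const_nhds (x := p - 1) (f := atTop (α := ℝ))).div h1
          (ne_of_gt hp1)
        simpa [div_self (ne_of_gt hp1), Pi.div_def] using h2
      apply hlim.congr'
      filter_upwards [eventually_gt_atTop s₀, hφhalf] with X hX hφX
      have hfX := hf_pos X hX.le
      have hnum : 1 * ((p-1) * f X) - X * ((p-1) * deriv f X)
          = (p-1) * f X * (1 - p - φ X) := by
        rw [show X * ((p-1) * deriv f X) = (p-1) * (X * deriv f X) by ring, hrel X hX]
        ring
      rw [hnum]
      have h5 := abs_lt.mp hφX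
      have hne1 : 1 - p - φ X ≠ 0 := by nlinarith [h5.2]
      have hne2 : p - 1 + φ X ≠ 0 := by nlinarith [h5.1]
      field_simp
      ring
  have hGpos : ∀ c, b ≤ c → 0 < Gfun f c := by
    intro c hc
    have h1 : Gfun f (c+1) < Gfun f c :=
      hGanti (Set.mem_Ici.mpr hc) (Set.mem_Ici.mpr (by linarith)) (by linarith)
    have h2 : (0:ℝ) ≤ Gfun f (c+1) := by
      apply le_of_tendsto hG0
      filter_upwards [eventually_gt_atTop (c+1)] with M hM
      exact (hGanti (Set.mem_Ici.mpr (by linarith))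
        (Set.mem_Ici.mpr (by linarith)) hM).le
    linarith
  have hsurj : ∀ c, b + 1 ≤ c → ∀ Y, 0 < Y → Y < Gfun f c →
      c ≤ Ginv Y ∧ Gfun f (Ginv Y) = Y := by
    intro c hc Y hY hYc
    have hcs₀ : s₀ < c := by linarith
    have hcont : ContinuousOn (Gfun f) (Set.Ici c) := fun t ht =>
      ((hGderiv t (lt_of_lt_of_le hcs₀ ht)).continuousAt).continuousWithinAt
    obtain ⟨M, hMc, hMY⟩ : ∃ M, c ≤ M ∧ Gfun f M < Y := by
      have h := (hG0.eventually_lt_const hY).and (eventually_ge_atTop c)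
      rcases h.exists with ⟨M, h1, h2⟩
      exact ⟨M, h2, h1⟩
    have hIVT := intermediate_value_Icc' hMc (hcont.mono Set.Icc_subset_Ici_self)
    obtain ⟨X, hXmem, hXY⟩ := hIVT ⟨hMY.le, hYc.le⟩
    have hXb : b ≤ X := by linarith [hXmem.1]
    have hfix := hGinv1 X hXb
    rw [hXY] at hfix
    refine ⟨?_, ?_⟩
    · rw [hfix]; exact hXmem.1
    · rw [hfix, hXY]
  have hXtop : Tendsto Ginv (𝓝[>] (0:ℝ)) atTop := by
    rw [tendsto_atTop]
    intro M
    have hcb : b ≤ max M (b+1) := le_trans (by linarith) (le_max_right _ _)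
    have hc := hGpos (max M (b+1)) hcb
    filter_upwards [Ioo_mem_nhdsGT hc] with Y hY
    have h := hsurj (max M (b+1)) (le_max_right _ _) Y hY.1 hY.2
    exact le_trans (le_max_left _ _) h.1
  have hfix : ∀ᶠ Y in 𝓝[>] (0:ℝ), 0 < Y ∧ b + 1 ≤ Ginv Y ∧ Gfun f (Ginv Y) = Y := by
    have hc := hGpos (b+1) (by linarith)
    filter_upwards [Ioo_mem_nhdsGT hc] with Y hY
    have h := hsurj (b+1) le_rfl Y hY.1 hY.2
    exact ⟨hY.1, h.1, h.2⟩
  have hxtop : Tendsto (fun Y => Real.log (Ginv Y)) (𝓝[>] (0:ℝ)) atTop :=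
    Real.tendsto_log_atTop.comp hXtop
  have hR1 : Tendsto R (𝓝[>] (0:ℝ)) (𝓝 1) := by
    have hcomp := hGF.comp hXtop
    apply hcomp.congr'
    filter_upwards [hfix] with Y hY
    obtain ⟨hY0, hXb, hGX⟩ := hY
    have hXs₀ : s₀ < Ginv Y := by linarith
    have hX0 : 0 < Ginv Y := lt_trans hs₀ hXs₀
    have hfX : 0 < f (Ginv Y) := hf_pos _ hXs₀.le
    simp only [hRdef, Function.comp]
    rw [hGX, div_div_eq_mul_div]
  have hlogR : Tendsto (fun Y => Real.log (R Y)) (𝓝[>] (0:ℝ)) (𝓝 0) := by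
    have h := (Real.continuousAt_log one_ne_zero).tendsto.comp hR1
    simpa [Function.comp_def] using h
  have hzx : ∀ᶠ Y in 𝓝[>] (0:ℝ),
      -β * Real.log Y = Real.log (Ginv Y)
        + β * (Real.log (p-1) - Real.log (R Y) + u (Real.log (Ginv Y))) := by
    filter_upwards [hfix] with Y hY
    obtain ⟨hY0, hXb, hGX⟩ := hY
    have hXs₀ : s₀ < Ginv Y := by linarith
    have hX0 : 0 < Ginv Y := lt_trans hs₀ hXs₀
    have hfX : 0 < f (Ginv Y) := hf_pos _ hXs₀.le
    have hLX : 0 < L (Ginv Y) := hLpos _ hXs₀.le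
    have hR0 : R Y = Y * ((p-1) * f (Ginv Y)) / Ginv Y := rfl
    have hlogRY : Real.log (R Y)
        = Real.log Y + (Real.log (p-1) + Real.log (f (Ginv Y))) - Real.log (Ginv Y) := by
      rw [hR0, Real.log_div (by positivity) (ne_of_gt hX0),
        Real.log_mul (ne_of_gt hY0) (by positivity),
        Real.log_mul (by positivity) (ne_of_gt hfX)]
    have hlogf : Real.log (f (Ginv Y)) = p * Real.log (Ginv Y) + u (Real.log (Ginv Y)) := by
      rw [hfL _ hX0, Real.log_mul (by positivity) (ne_of_gt hLX), Real.log_rpow hX0]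
      simp only [hudef]
      rw [Real.exp_log hX0]
    have hβp : β * (p - 1) = 1 := by rw [hβ]; field_simp
    rw [hlogRY, hlogf]
    linear_combination Real.log (Ginv Y) * hβp
  have hD : Tendsto (fun Y => u (-β * Real.log Y) - u (Real.log (Ginv Y)))
      (𝓝[>] (0:ℝ)) (𝓝 0) := by
    rw [NormedAddCommGroup.tendsto_nhds_zero]
    intro ε' hε'
    set C₂ : ℝ := |Real.log (p-1)| + 1 + A with hC₂def
    have hC₂0 : 0 ≤ C₂ := by
      have := abs_nonneg (Real.log (p-1))
      rw [hC₂def]; linarith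
    set K : ℝ := 2 * (β * C₂ + 2 * β) with hKdef
    have hK0 : 0 ≤ K := by
      rw [hKdef]; nlinarith [hβpos.le]
    set ε : ℝ := ε' / (K + 1) with hεdef
    have hεpos : 0 < ε := by rw [hεdef]; positivity
    obtain ⟨x₂, hx₂⟩ := eventually_atTop.mp ((hφsmall ε hεpos).and
      ((Real.tendsto_exp_atTop.eventually_gt_atTop s₀).and (eventually_ge_atTop (1:ℝ))))
    have habs1 : ∀ᶠ w : ℝ in 𝓝 (0:ℝ), |w| ≤ 1 := by
      filter_upwards [eventually_abs_sub_lt (0:ℝ) one_pos] with w hw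
      simp only [sub_zero] at hw
      exact hw.le
    filter_upwards [hxtop.eventually hAbd,
      hxtop.eventually (aux_ev (β*C₂) (2*β) (1/2) one_half_pos),
      hxtop.eventually (eventually_ge_atTop (max (2*x₂) 2)),
      hlogR.eventually habs1, hzx, hfix] with Y h1 h2 h3 h4 hid hfx
    obtain ⟨hY0, hXb, hGX⟩ := hfx
    set x := Real.log (Ginv Y) with hxdef
    set z := -β * Real.log Y with hzdef
    have hx2 : (2:ℝ) ≤ x := le_trans (le_max_right _ _) h3
    have hx2' : 2 * x₂ ≤ x := le_trans (le_max_left _ _) h3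
    have hxpos : (0:ℝ) < x := by linarith
    have hxh : (0:ℝ) < x / 2 := by linarith
    have hx12 : (1:ℝ) ≤ x ^ ((1:ℝ)/2) := by
      have := Real.rpow_le_rpow (by norm_num : (0:ℝ) ≤ 1)
        (show (1:ℝ) ≤ x by linarith) (by norm_num : (0:ℝ) ≤ (1:ℝ)/2)
      rwa [Real.one_rpow] at this
    have hzx1 : |z - x| ≤ β * C₂ + 2*β * x ^ ((1:ℝ)/2) := by
      have hrw : z - x = β * (Real.log (p-1) - Real.log (R Y) + u x) := by
        rw [hid]; ring
      rw [hrw, abs_mul, abs_of_pos hβpos]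
      have hux := abs_le.mp h1
      have h6 : |Real.log (p-1) - Real.log (R Y) + u x| ≤ C₂ + 2 * x ^ ((1:ℝ)/2) := by
        have t1 := abs_add_le (Real.log (p-1) - Real.log (R Y)) (u x)
        have t2 := abs_sub (Real.log (p-1)) (Real.log (R Y))
        rw [hC₂def]
        have hux2 := abs_le.mp h1
        linarith [t1, t2, h4, le_abs_self (u x), neg_abs_le (u x), h1]
      nlinarith [hβpos.le, abs_nonneg (Real.log (p-1) - Real.log (R Y) + u x)]
    have hzx2 : |z - x| ≤ x / 2 := by linarith [h2]
    have ha₁ : x/2 ≤ min x z := by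
      apply le_min (by linarith)
      have := neg_abs_le (z - x)
      linarith
    have hmemx : x ∈ Set.Icc (min x z) (max x z) := ⟨min_le_left x z, le_max_left x z⟩
    have hmemz : z ∈ Set.Icc (min x z) (max x z) := ⟨min_le_right x z, le_max_right x z⟩
    have htfact : ∀ t ∈ Set.Icc (min x z) (max x z),
        (|φ (Real.exp t)| ≤ ε * t ^ (-((1:ℝ)/2)) ∧ s₀ < Real.exp t ∧ 1 ≤ t) := by
      intro t ht
      apply hx₂
      have := ha₁.trans ht.1
      linarith
    have hmvt : ‖u z - u x‖ ≤ (ε * (x/2) ^ (-((1:ℝ)/2))) * ‖z - x‖ := by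
      apply Convex.norm_image_sub_le_of_norm_hasDerivWithin_le
        (f' := fun t => φ (Real.exp t)) ?_ ?_ (convex_Icc _ _) hmemx hmemz
      · intro t ht
        exact (hu' t (htfact t ht).2.1).hasDerivWithinAt
      · intro t ht
        have h7 := (htfact t ht).1
        have h8 : t ^ (-((1:ℝ)/2)) ≤ (x/2) ^ (-((1:ℝ)/2)) := by
          apply Real.rpow_le_rpow_of_nonpos hxh (ha₁.trans ht.1) (by norm_num)
        rw [Real.norm_eq_abs]
        calc |φ (Real.exp t)| ≤ ε * t ^ (-((1:ℝ)/2)) := h7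
          _ ≤ ε * (x/2) ^ (-((1:ℝ)/2)) := mul_le_mul_of_nonneg_left h8 hεpos.le
    have hrp : (x/2) ^ (-((1:ℝ)/2)) * x ^ ((1:ℝ)/2) ≤ 2 := by
      have e1 : ((x/2) ^ ((1:ℝ)/2))^2 = x/2 := by
        rw [← Real.rpow_natCast ((x/2) ^ ((1:ℝ)/2)) 2, ← Real.rpow_mul hxh.le]
        norm_num
      have e2 : (x ^ ((1:ℝ)/2))^2 = x := by
        rw [← Real.rpow_natCast (x ^ ((1:ℝ)/2)) 2, ← Real.rpow_mul hxpos.le]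
        norm_num
      have c0 : 0 < (x/2) ^ ((1:ℝ)/2) := Real.rpow_pos_of_pos hxh _
      have a0 : 0 ≤ x ^ ((1:ℝ)/2) := Real.rpow_nonneg hxpos.le _
      have e3 : x ^ ((1:ℝ)/2) ≤ 2 * (x/2) ^ ((1:ℝ)/2) := by nlinarith
      rw [Real.rpow_neg hxh.le, inv_mul_le_iff₀ c0]
      linarith
    have hfin : ‖u z - u x‖ ≤ ε * K := by
      have hb1 : ‖z - x‖ ≤ (β*C₂ + 2*β) * x ^ ((1:ℝ)/2) := by
        rw [Real.norm_eq_abs]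
        calc |z - x| ≤ β * C₂ + 2*β * x ^ ((1:ℝ)/2) := hzx1
          _ ≤ (β*C₂ + 2*β) * x ^ ((1:ℝ)/2) := by
              nlinarith [mul_nonneg (mul_nonneg hβpos.le hC₂0)
                (sub_nonneg.mpr hx12)]
      have hnn : (0:ℝ) ≤ ε * (x/2) ^ (-((1:ℝ)/2)) :=
        mul_nonneg hεpos.le (Real.rpow_nonneg hxh.le _)
      have hnn2 : (0:ℝ) ≤ ε * (β*C₂ + 2*β) := by nlinarith [hβpos.le]
      calc ‖u z - u x‖ ≤ (ε * (x/2) ^ (-((1:ℝ)/2))) * ‖z - x‖ := hmvt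
        _ ≤ (ε * (x/2) ^ (-((1:ℝ)/2))) * ((β*C₂ + 2*β) * x ^ ((1:ℝ)/2)) :=
            mul_le_mul_of_nonneg_left hb1 hnn
        _ = (ε * (β*C₂+2*β)) * ((x/2) ^ (-((1:ℝ)/2)) * x ^ ((1:ℝ)/2)) := by ring
        _ ≤ (ε * (β*C₂+2*β)) * 2 := mul_le_mul_of_nonneg_left hrp hnn2
        _ = ε * K := by rw [hKdef]; ring
    calc ‖u z - u x‖ ≤ ε * K := hfin
      _ < ε' := by
          rw [hεdef, div_mul_eq_mul_div, div_lt_iff₀ (by linarith : (0:ℝ) < K + 1)]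
          nlinarith
  have hZtop : Tendsto (fun Y : ℝ => Y ^ (-β)) (𝓝[>] (0:ℝ)) atTop := by
    have h1 : Tendsto Real.log (𝓝[>] (0:ℝ)) atBot :=
      Real.tendsto_log_nhdsGT_zero
    have h2 : Tendsto (fun Y : ℝ => -β * Real.log Y) (𝓝[>] (0:ℝ)) atTop := by
      have h3 : Tendsto (fun Y : ℝ => -Real.log Y) (𝓝[>] (0:ℝ)) atTop :=
        tendsto_neg_atBot_atTop.comp h1
      have := Tendsto.const_mul_atTop hβpos h3
      apply this.congr
      intro Y
      ring
    have h4 := Real.tendsto_exp_atTop.comp h2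
    apply h4.congr'
    filter_upwards [self_mem_nhdsWithin] with Y hY
    have hY0 : (0:ℝ) < Y := hY
    simp only [Function.comp]
    rw [Real.rpow_def_of_pos hY0]
    ring_nf
  have hfinal : ∀ᶠ Y in 𝓝[>] (0:ℝ),
      Ginv Y / (κ * Y ^ (-β) * L (Y ^ (-β)) ^ (-β))
        = Real.exp (β * (Real.log (R Y)
            + (u (-β * Real.log Y) - u (Real.log (Ginv Y))))) := by
    filter_upwards [hfix, hzx, hZtop.eventually_gt_atTop s₀, self_mem_nhdsWithin]
      with Y hfx hid hZ hYmem
    obtain ⟨hY0, hXb, hGX⟩ := hfx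
    have hXs₀ : s₀ < Ginv Y := by linarith
    have hX0 : 0 < Ginv Y := lt_trans hs₀ hXs₀
    have hLZ : 0 < L (Y ^ (-β)) := hLpos _ hZ.le
    have hZ0 : 0 < Y ^ (-β) := lt_trans hs₀ hZ
    have e2 : κ = Real.exp (β * Real.log β) := by
      rw [hκ, Real.rpow_def_of_pos hβpos, mul_comm]
    have e3 : Y ^ (-β) = Real.exp (-β * Real.log Y) := by
      rw [Real.rpow_def_of_pos hY0]
      ring_nf
    have e4 : L (Y ^ (-β)) ^ (-β) = Real.exp (-β * u (-β * Real.log Y)) := by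
      rw [Real.rpow_def_of_pos hLZ]
      congr 1
      simp only [hudef]
      rw [← e3]
      ring
    have e5 : Real.log β = -Real.log (p-1) := by
      rw [hβ, one_div, Real.log_inv]
    calc Ginv Y / (κ * Y ^ (-β) * L (Y ^ (-β)) ^ (-β))
        = Real.exp (Real.log (Ginv Y)) / (Real.exp (β * Real.log β)
            * Real.exp (-β * Real.log Y) * Real.exp (-β * u (-β * Real.log Y))) := by
          rw [Real.exp_log hX0, ← e2, ← e3, ← e4]
      _ = Real.exp (Real.log (Ginv Y) - (β * Real.log β + -β * Real.log Y
            + -β * u (-β * Real.log Y))) := by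
          rw [← Real.exp_add, ← Real.exp_add, ← Real.exp_sub]
      _ = Real.exp (β * (Real.log (R Y)
            + (u (-β * Real.log Y) - u (Real.log (Ginv Y))))) := by
          congr 1
          rw [e5]
          linear_combination -hid
  have hexp : Tendsto (fun Y => Real.exp (β * (Real.log (R Y)
      + (u (-β * Real.log Y) - u (Real.log (Ginv Y)))))) (𝓝[>] (0:ℝ)) (𝓝 1) := by
    have h1 : Tendsto (fun Y => β * (Real.log (R Y)
        + (u (-β * Real.log Y) - u (Real.log (Ginv Y))))) (𝓝[>] (0:ℝ)) (𝓝 0) := by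
      have := (hlogR.add hD).const_mul β
      simpa using this
    have := (Real.continuous_exp.tendsto 0).comp h1
    simpa [Function.comp_def] using this
  exact Tendsto.congr' (hfinal.mono fun Y hY => hY.symm) hexp
end

section
/- Under the stated assumptions with α ∈ (0,1), there exists s₁ > 0 such that for all s > s₁ and all λ ∈ [exp(−(1/8)·log^α s), exp((1/8)·log^α s)], one has | L(λ·s)/L(s) − 1 | ≤ 4·|log λ| / log^α s. -/
open MeasureTheory Filter Topology Asymptotics

set_option maxHeartbeats 1000000 in
/-- **Slow-variation estimate** (Lemma 7.2): there exists `s₁ > 0` such that for all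
`s > s₁` and all `λ ∈ [exp(−(1/8) log^α s), exp((1/8) log^α s)]`,
`|L(λs)/L(s) − 1| ≤ 4 |log λ| / log^α s`. -/
theorem slow_variation_estimate
    (p : ℝ) (hp : 1 < p)
    (f L : ℝ → ℝ)
    (hf_C1 : ContDiffOn ℝ 1 f (Set.Ici 0)) (hf0 : 0 ≤ f 0)
    (s₀ : ℝ) (hs₀ : 0 < s₀)
    (hf_pos : ∀ s ≥ s₀, 0 < f s)
    (hf_C2 : ContDiffOn ℝ 2 f (Set.Ici s₀))
    (hfL : ∀ s > (0 : ℝ), f s = s ^ p * L s)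
    (α : ℝ) (hα0 : 0 < α) (hα1 : α < 1)
    (hL1 : (fun s => s * deriv L s / L s) =o[atTop] fun s => Real.log s ^ (-α))
    (hL2 : (deriv fun s => s * deriv L s / L s) =o[atTop] fun s => 1 / (s * Real.log s))
    (s₂ : ℝ) (hs₂ : 1 < s₂)
    (hLpos : ∀ s ≥ s₂, 0 < L s)
    (hL_C1 : ContDiffOn ℝ 1 L (Set.Ici s₂))
    (hLder : ∀ s ≥ s₂, |deriv L s| / L s ≤ 1 / (s * Real.log s ^ α)) :
    ∃ s₁ > (0 : ℝ), ∀ s > s₁, ∀ lam : ℝ,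
      Real.exp (-(1 / 8) * Real.log s ^ α) ≤ lam →
      lam ≤ Real.exp ((1 / 8) * Real.log s ^ α) →
      |L (lam * s) / L s - 1| ≤ 4 * |Real.log lam| / Real.log s ^ α := by
  refine ⟨max (Real.exp 1) (s₂ ^ 2), lt_max_of_lt_left (Real.exp_pos 1), ?_⟩
  intro s hs lam hlo hhi
  have hse : Real.exp 1 < s := lt_of_le_of_lt (le_max_left _ _) hs
  have hs22 : s₂ ^ 2 < s := lt_of_le_of_lt (le_max_right _ _) hs
  have hspos : 0 < s := lt_trans (Real.exp_pos 1) hse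
  have hlogs : 1 ≤ Real.log s := by
    rw [← Real.log_exp 1]
    exact Real.log_le_log (Real.exp_pos 1) hse.le
  have hlogs0 : 0 < Real.log s := lt_of_lt_of_le one_pos hlogs
  have hlam : 0 < lam := lt_of_lt_of_le (Real.exp_pos _) hlo
  set A := Real.log s ^ α with hA
  have hA0 : 0 < A := Real.rpow_pos_of_pos hlogs0 α
  have hAle : A ≤ Real.log s := by
    calc A ≤ Real.log s ^ (1 : ℝ) := Real.rpow_le_rpow_of_exponent_le hlogs hα1.le
    _ = Real.log s := Real.rpow_one _
  have hloglam : |Real.log lam| ≤ 1 / 8 * A := by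
    rw [abs_le]
    constructor
    · have := (Real.le_log_iff_exp_le hlam).2 hlo
      linarith
    · exact (Real.log_le_iff_le_exp hlam).2 hhi
  -- the two endpoints in log coordinates
  set u₀ := Real.log s with hu₀
  set u₁ := Real.log lam + Real.log s with hu₁
  have hlog_lam_s : Real.log (lam * s) = u₁ := Real.log_mul (ne_of_gt hlam) (ne_of_gt hspos)
  -- every point of the segment is ≥ (1/2) log s
  set I := Set.Icc (min u₀ u₁) (max u₀ u₁) with hI
  have hmem : ∀ u ∈ I, (1 / 2) * Real.log s ≤ u := by
    intro u hu
    have h1 : u₀ - 1 / 8 * A ≤ min u₀ u₁ := by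
      rcases abs_le.1 hloglam with ⟨h, _⟩
      refine le_min (by linarith) ?_
      simp only [hu₁]
      linarith
    have := hu.1
    have : u₀ - 1 / 8 * A ≤ u := le_trans h1 hu.1
    have : Real.log s - 1 / 8 * Real.log s ≤ u := by nlinarith
    linarith
  have hupos : ∀ u ∈ I, 0 < u := fun u hu => lt_of_lt_of_le (by linarith) (hmem u hu)
  -- exp u > s₂ for u in I
  have hexp_gt : ∀ u ∈ I, s₂ < Real.exp u := by
    intro u hu
    have h1 : Real.exp ((1 / 2) * Real.log s) ≤ Real.exp u := Real.exp_le_exp.2 (hmem u hu)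
    have h2 : Real.exp ((1 / 2) * Real.log s) = s ^ (1 / 2 : ℝ) := by
      rw [mul_comm, Real.exp_mul, Real.exp_log hspos]
    have hs₂0 : (0 : ℝ) < s₂ := lt_trans one_pos hs₂
    have h3 : s₂ < s ^ (1 / 2 : ℝ) := by
      have := Real.rpow_lt_rpow (by positivity) hs22 (by norm_num : (0:ℝ) < 1/2)
      calc s₂ = (s₂ ^ 2) ^ (1 / 2 : ℝ) := by
              rw [← Real.rpow_natCast s₂ 2, ← Real.rpow_mul hs₂0.le]
              norm_num
        _ < s ^ (1 / 2 : ℝ) := this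
    linarith [h1, h2 ▸ h1]
  -- derivative of g := log ∘ L ∘ exp on I
  set g : ℝ → ℝ := fun u => Real.log (L (Real.exp u)) with hg
  set g' : ℝ → ℝ := fun u => deriv L (Real.exp u) * Real.exp u / L (Real.exp u) with hg'
  have hderiv : ∀ u ∈ I, HasDerivAt g (g' u) u := by
    intro u hu
    have ht : s₂ < Real.exp u := hexp_gt u hu
    have hLt : 0 < L (Real.exp u) := hLpos _ ht.le
    have hLd : HasDerivAt L (deriv L (Real.exp u)) (Real.exp u) := by
      have hcd : ContDiffAt ℝ 1 L (Real.exp u) :=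
        (hL_C1 _ ht.le).contDiffAt (Ici_mem_nhds ht)
      exact (hcd.differentiableAt one_ne_zero).hasDerivAt
    have h1 : HasDerivAt (fun u => L (Real.exp u))
        (deriv L (Real.exp u) * Real.exp u) u := hLd.comp u (Real.hasDerivAt_exp u)
    exact h1.log (ne_of_gt hLt)
  -- derivative bound
  have hbound : ∀ u ∈ I, ‖g' u‖ ≤ 2 / A := by
    intro u hu
    have ht : s₂ < Real.exp u := hexp_gt u hu
    have htpos : 0 < Real.exp u := Real.exp_pos u
    have hLt : 0 < L (Real.exp u) := hLpos _ ht.le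
    have hupos' : 0 < u := hupos u hu
    have hlt : Real.log (Real.exp u) = u := Real.log_exp u
    have hd := hLder _ ht.le
    rw [hlt] at hd
    have huα : (0 : ℝ) < u ^ α := Real.rpow_pos_of_pos hupos' α
    have key : ‖g' u‖ ≤ 1 / u ^ α := by
      have : ‖g' u‖ = Real.exp u * (|deriv L (Real.exp u)| / L (Real.exp u)) := by
        simp only [hg', Real.norm_eq_abs, abs_div, abs_mul, abs_of_pos htpos,
          abs_of_pos hLt]
        ring
      rw [this]
      calc Real.exp u * (|deriv L (Real.exp u)| / L (Real.exp u))
          ≤ Real.exp u * (1 / (Real.exp u * u ^ α)) := by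
            exact mul_le_mul_of_nonneg_left hd htpos.le
        _ = 1 / u ^ α := by field_simp
    -- u^α ≥ A/2
    have h2 : A / 2 ≤ u ^ α := by
      have hu2 : (1 / 2) * Real.log s ≤ u := hmem u hu
      have h3 : ((1 / 2) * Real.log s) ^ α ≤ u ^ α :=
        Real.rpow_le_rpow (by positivity) hu2 hα0.le
      have h4 : ((1 / 2) * Real.log s) ^ α = (1 / 2 : ℝ) ^ α * A := by
        rw [hA, ← Real.mul_rpow (by norm_num) hlogs0.le]
      have h5 : (1 / 2 : ℝ) ≤ (1 / 2 : ℝ) ^ α := by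
        have := Real.rpow_le_rpow_of_exponent_ge (by norm_num : (0:ℝ) < 1/2)
          (by norm_num : (1/2 : ℝ) ≤ 1) hα1.le
        simpa using this
      nlinarith [hA0]
    calc ‖g' u‖ ≤ 1 / u ^ α := key
      _ ≤ 2 / A := by
        rw [div_le_div_iff₀ huα hA0]
        nlinarith
  -- mean value inequality
  have hu₀I : u₀ ∈ I := Set.mem_Icc.2 ⟨min_le_left _ _, le_max_left _ _⟩
  have hu₁I : u₁ ∈ I := Set.mem_Icc.2 ⟨min_le_right _ _, le_max_right _ _⟩
  have hmvt : ‖g u₁ - g u₀‖ ≤ (2 / A) * ‖u₁ - u₀‖ :=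
    Convex.norm_image_sub_le_of_norm_hasDerivWithin_le
      (fun u hu => (hderiv u hu).hasDerivWithinAt) hbound (convex_Icc _ _) hu₀I hu₁I
  have hdiff : u₁ - u₀ = Real.log lam := by simp [hu₀, hu₁]
  have hgu₀ : g u₀ = Real.log (L s) := by simp [hg, hu₀, Real.exp_log hspos]
  have hgu₁ : g u₁ = Real.log (L (lam * s)) := by
    rw [hg]
    simp only [← hlog_lam_s, Real.exp_log (by positivity : (0:ℝ) < lam * s)]
  set d := Real.log (L (lam * s)) - Real.log (L s) with hd
  have hdle : |d| ≤ (2 / A) * |Real.log lam| := by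
    have := hmvt
    rw [hgu₀, hgu₁, hdiff] at this
    simpa [Real.norm_eq_abs] using this
  have hd14 : |d| ≤ 1 / 4 := by
    calc |d| ≤ (2 / A) * (1 / 8 * A) :=
        le_trans hdle (mul_le_mul_of_nonneg_left hloglam (by positivity))
      _ = 1 / 4 := by field_simp; ring
  -- positivity of L s and L (lam * s)
  have hLs : 0 < L s := hLpos s (by nlinarith)
  have hLls : 0 < L (lam * s) := by
    apply hLpos
    have := hexp_gt u₁ hu₁I
    rw [← hlog_lam_s, Real.exp_log (by positivity : (0:ℝ) < lam * s)] at this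
    exact this.le
  have hratio : L (lam * s) / L s = Real.exp d := by
    rw [hd, Real.exp_sub, Real.exp_log hLls, Real.exp_log hLs]
  rw [hratio]
  calc |Real.exp d - 1| ≤ 2 * |d| := Real.abs_exp_sub_one_le (by linarith)
    _ ≤ 2 * ((2 / A) * |Real.log lam|) := by linarith [hdle]
    _ = 4 * |Real.log lam| / A := by field_simp; ring
end
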